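/- arXiv:quant-ph/0412088 — 8 statements merged into one kernel-verified Lean document; each statement's English description precedes it below -/
import Mathlib

section
/- There is a universal constant c > 0 with the following property. Let X, Y be finite nonempty sets, Z a finite set with |Z| ≥ 2, f : X × Y → Z, and let d > 0 be a real number with mdisc(f) ≤ 2^{-d}. Let l, r, k be positive integers with k ≤ d/5, and let O = {(i₁,j₁),…,(i_k,j_k)} be a set of k distinct pairs with i_t ∈ {1,…,l} and j_t ∈ {1,…,r}. Define f_O : X^l × Y^r → Z^k by f_O(x₁,…,x_l, y₁,…,y_r) = (f(x_{i₁}, y_{j₁}),…,f(x_{i_k}, y_{j_k})). Then mdisc(f_O) ≤ c · 2^{-d/4}. -/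
open scoped Classical

/-- `mdiscLE f ε` says that the multicolor discrepancy of `f : X × Y → Z`
(w.r.t. the uniform distribution on `X × Y`) is at most `ε`: for every
rectangle `A × B` and color `z`, `|μ(R ∩ f⁻¹(z)) − μ(R)/|Z||  ≤ ε`. -/
def mdiscLE {X Y Z : Type*} [Fintype X] [Fintype Y] [Fintype Z]
    (f : X × Y → Z) (ε : ℝ) : Prop :=
  ∀ (A : Finset X) (B : Finset Y) (z : Z),
    |(((A ×ˢ B).filter (fun p => f p = z)).card : ℝ) /
        ((Fintype.card X : ℝ) * (Fintype.card Y : ℝ)) -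
      ((A.card : ℝ) * (B.card : ℝ)) /
        ((Fintype.card X : ℝ) * (Fintype.card Y : ℝ) * (Fintype.card Z : ℝ))| ≤ ε

open Finset

lemma telescope (a : ℕ → ℝ) (c : ℝ) : ∀ k : ℕ,
    (∏ i ∈ Finset.range k, a i) - c ^ k
      = ∑ s ∈ Finset.range k, (∏ i ∈ Finset.range s, a i) * (a s - c) * c ^ (k - 1 - s) := by
  intro k
  induction k with
  | zero => simp
  | succ n ih =>
    rw [Finset.prod_range_succ, Finset.sum_range_succ]
    have h1 : ∑ s ∈ Finset.range n, (∏ i ∈ Finset.range s, a i) * (a s - c) * c ^ (n + 1 - 1 - s)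
        = (∑ s ∈ Finset.range n, (∏ i ∈ Finset.range s, a i) * (a s - c) * c ^ (n - 1 - s)) * c := by
      rw [Finset.sum_mul]
      refine Finset.sum_congr rfl fun s hs => ?_
      have hsn : s < n := Finset.mem_range.mp hs
      have h2 : n + 1 - 1 - s = (n - 1 - s) + 1 := by omega
      rw [h2, pow_succ]; ring
    rw [h1, ← ih]
    have h3 : n + 1 - 1 - n = 0 := by omega
    rw [h3, pow_zero, pow_succ]
    ring

lemma prod_zero_or_one {ι : Type*} (S : Finset ι) (g : ι → ℝ)
    (h : ∀ t ∈ S, g t = 0 ∨ g t = 1) : (∏ t ∈ S, g t) = 0 ∨ (∏ t ∈ S, g t) = 1 :=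
  Finset.prod_induction g (fun x => x = 0 ∨ x = 1)
    (by rintro x y (hx | hx) (hy | hy) <;> simp [hx, hy]) (Or.inr rfl) h

lemma mul01 {x y : ℝ} (hx : x = 0 ∨ x = 1) (hy : y = 0 ∨ y = 1) : x * y = 0 ∨ x * y = 1 := by
  rcases hx with h | h <;> rcases hy with h' | h' <;> simp [h, h']

lemma ite01 {p : Prop} [Decidable p] : (if p then (1:ℝ) else 0) = 0 ∨ (if p then (1:ℝ) else 0) = 1 := by
  split <;> simp

lemma sum_boole_mul {α : Type*} [Fintype α] (φ : α → ℝ)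
    (h : ∀ a, φ a = 0 ∨ φ a = 1) (g : α → ℝ) :
    ∑ a : α, φ a * g a = ∑ a ∈ Finset.univ.filter (fun a => φ a = 1), g a := by
  rw [Finset.sum_filter]
  refine Finset.sum_congr rfl fun a _ => ?_
  rcases h a with h0 | h1
  · simp [h0]
  · simp [h1]

lemma ind_sum {α : Type*} [Fintype α] [DecidableEq α] (s : Finset α) (h : α → ℝ) :
    ∑ x : α, (if x ∈ s then (1:ℝ) else 0) * h x = ∑ x ∈ s, h x := by
  simp [ite_mul, Finset.sum_ite_mem]

def xAt {n : ℕ} {X : Type*} (i : Fin n) (u : {t : Fin n // t ≠ i} → X) (a : X) : Fin n → X :=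
  fun t => if h : t = i then a else u ⟨t, h⟩

@[simp] lemma xAt_same {n : ℕ} {X : Type*} (i : Fin n) (u : {t : Fin n // t ≠ i} → X) (a : X) :
    xAt i u a i = a := dif_pos rfl

lemma xAt_ne {n : ℕ} {X : Type*} (i : Fin n) (u : {t : Fin n // t ≠ i} → X) (a : X)
    {t : Fin n} (h : t ≠ i) : xAt i u a t = u ⟨t, h⟩ := dif_neg h

def splitE {n : ℕ} (X : Type*) (i : Fin n) : (Fin n → X) ≃ ({t : Fin n // t ≠ i} → X) × X where
  toFun x := (fun t => x t.1, x i)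
  invFun p := xAt i p.1 p.2
  left_inv x := by
    funext t
    by_cases h : t = i
    · subst h; simp [xAt]
    · simp [xAt, h]
  right_inv p := by
    refine Prod.ext ?_ (by simp [xAt])
    funext t
    simp [xAt, t.2]

lemma sum_split {n : ℕ} {X : Type*} [Fintype X] (i : Fin n) (F : (Fin n → X) → ℝ) :
    ∑ x : Fin n → X, F x
      = ∑ u : {t : Fin n // t ≠ i} → X, ∑ a : X, F (xAt i u a) := by
  rw [← Equiv.sum_comp (splitE X i).symm F, Fintype.sum_prod_type]
  rfl

lemma core {X Y Z : Type} [Fintype X] [Fintype Y] [Fintype Z]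
    (a₀ : X) (b₀ : Y) (f : X × Y → Z) (m ε : ℝ) (hε : 0 ≤ ε)
    (hf : ∀ (φ : X → ℝ) (ψ : Y → ℝ), (∀ a, φ a = 0 ∨ φ a = 1) →
        (∀ b, ψ b = 0 ∨ ψ b = 1) → ∀ z₀ : Z,
        |∑ a : X, ∑ b : Y, φ a * ψ b * ((if f (a, b) = z₀ then (1:ℝ) else 0) - m)| ≤ ε)
    {l r k : ℕ} (o : Fin k → Fin l × Fin r) (ho : Function.Injective o)
    (z : Fin k → Z) (s' : Fin k) (S₀ : Finset (Fin k)) (hS₀ : s' ∉ S₀)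
    (A : Finset (Fin l → X)) (B : Finset (Fin r → Y)) :
    |∑ x ∈ A, ∑ y ∈ B,
        (∏ t ∈ S₀, (if f (x (o t).1, y (o t).2) = z t then (1:ℝ) else 0)) *
          ((if f (x (o s').1, y (o s').2) = z s' then (1:ℝ) else 0) - m)|
      ≤ (Fintype.card ({t : Fin l // t ≠ (o s').1} → X) : ℝ)
        * (Fintype.card ({t : Fin r // t ≠ (o s').2} → Y) : ℝ) * ε := by
  classical
  set i : Fin l := (o s').1 with hi
  set j : Fin r := (o s').2 with hj
  set G : (Fin l → X) → (Fin r → Y) → ℝ := fun x y =>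
    (∏ t ∈ S₀, (if f (x (o t).1, y (o t).2) = z t then (1:ℝ) else 0)) *
      ((if f (x i, y j) = z s' then (1:ℝ) else 0) - m) with hG
  have step1 : ∑ x ∈ A, ∑ y ∈ B, G x y
      = ∑ x : Fin l → X, ∑ y : Fin r → Y,
          (if x ∈ A then (1:ℝ) else 0) * ((if y ∈ B then (1:ℝ) else 0) * G x y) := by
    calc ∑ x ∈ A, ∑ y ∈ B, G x y
        = ∑ x : Fin l → X, (if x ∈ A then (1:ℝ) else 0) * ∑ y ∈ B, G x y :=
          (ind_sum A _).symm
      _ = ∑ x : Fin l → X, ∑ y : Fin r → Y,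
            (if x ∈ A then (1:ℝ) else 0) * ((if y ∈ B then (1:ℝ) else 0) * G x y) := by
          refine Finset.sum_congr rfl fun x _ => ?_
          rw [← ind_sum B (G x), Finset.mul_sum]
  set Q : (Fin l → X) → (Fin r → Y) → ℝ := fun x y =>
    (if x ∈ A then (1:ℝ) else 0) * ((if y ∈ B then (1:ℝ) else 0) * G x y) with hQ
  have step2 : ∑ x : Fin l → X, ∑ y : Fin r → Y, Q x y
      = ∑ u : {t : Fin l // t ≠ i} → X, ∑ v : {t : Fin r // t ≠ j} → Y,
          ∑ a : X, ∑ b : Y, Q (xAt i u a) (xAt j v b) := by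
    rw [sum_split i (fun x => ∑ y : Fin r → Y, Q x y)]
    refine Finset.sum_congr rfl fun u _ => ?_
    calc ∑ a : X, ∑ y : Fin r → Y, Q (xAt i u a) y
        = ∑ a : X, ∑ v : {t : Fin r // t ≠ j} → Y, ∑ b : Y, Q (xAt i u a) (xAt j v b) :=
          Finset.sum_congr rfl fun a _ => sum_split j _
      _ = ∑ v : {t : Fin r // t ≠ j} → Y, ∑ a : X, ∑ b : Y, Q (xAt i u a) (xAt j v b) :=
          Finset.sum_comm
  have hW : ∀ (u : {t : Fin l // t ≠ i} → X) (v : {t : Fin r // t ≠ j} → Y),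
      |∑ a : X, ∑ b : Y, Q (xAt i u a) (xAt j v b)| ≤ ε := by
    intro u v
    set S₁ : Finset (Fin k) := S₀.filter (fun t => (o t).1 = i) with hS₁
    set S₂ : Finset (Fin k) := (S₀.filter (fun t => ¬ (o t).1 = i)).filter (fun t => (o t).2 = j) with hS₂
    set S₃ : Finset (Fin k) := (S₀.filter (fun t => ¬ (o t).1 = i)).filter (fun t => ¬ (o t).2 = j) with hS₃
    set φ : X → ℝ := fun a => (if xAt i u a ∈ A then (1:ℝ) else 0) *
      ∏ t ∈ S₁, (if f ((xAt i u a) (o t).1, (xAt j v b₀) (o t).2) = z t then (1:ℝ) else 0) with hφ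
    set ψ : Y → ℝ := fun b => (if xAt j v b ∈ B then (1:ℝ) else 0) *
      ∏ t ∈ S₂, (if f ((xAt i u a₀) (o t).1, (xAt j v b) (o t).2) = z t then (1:ℝ) else 0) with hψ
    set c₀ : ℝ := ∏ t ∈ S₃, (if f ((xAt i u a₀) (o t).1, (xAt j v b₀) (o t).2) = z t then (1:ℝ) else 0) with hc₀
    have hne : ∀ t ∈ S₀, (o t).1 = i → (o t).2 ≠ j := by
      intro t ht h1 h2
      have hot : o t = o s' := Prod.ext_iff.mpr ⟨h1.trans hi, h2.trans hj⟩
      exact hS₀ (ho hot ▸ ht)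
    have key : ∀ (a : X) (b : Y), Q (xAt i u a) (xAt j v b)
        = (φ a * ψ b * ((if f (a, b) = z s' then (1:ℝ) else 0) - m)) * c₀ := by
      intro a b
      have hsplit : ∏ t ∈ S₀, (if f ((xAt i u a) (o t).1, (xAt j v b) (o t).2) = z t then (1:ℝ) else 0)
          = (∏ t ∈ S₁, (if f ((xAt i u a) (o t).1, (xAt j v b₀) (o t).2) = z t then (1:ℝ) else 0))
            * ((∏ t ∈ S₂, (if f ((xAt i u a₀) (o t).1, (xAt j v b) (o t).2) = z t then (1:ℝ) else 0)) * c₀) := by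
        rw [← Finset.prod_filter_mul_prod_filter_not S₀ (fun t => (o t).1 = i)
          (fun t => (if f ((xAt i u a) (o t).1, (xAt j v b) (o t).2) = z t then (1:ℝ) else 0))]
        rw [← Finset.prod_filter_mul_prod_filter_not (S₀.filter (fun t => ¬ (o t).1 = i)) (fun t => (o t).2 = j)
          (fun t => (if f ((xAt i u a) (o t).1, (xAt j v b) (o t).2) = z t then (1:ℝ) else 0))]
        congr 1
        · refine Finset.prod_congr rfl fun t ht => ?_
          have h1 : (o t).1 = i := (Finset.mem_filter.mp ht).2
          have h2 : (o t).2 ≠ j := hne t (Finset.mem_filter.mp ht).1 h1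
          rw [xAt_ne j v b h2, xAt_ne j v b₀ h2]
        congr 1
        · refine Finset.prod_congr rfl fun t ht => ?_
          have h1 : ¬ (o t).1 = i := (Finset.mem_filter.mp (Finset.mem_filter.mp ht).1).2
          rw [xAt_ne i u a h1, xAt_ne i u a₀ h1]
        · refine Finset.prod_congr rfl fun t ht => ?_
          have h1 : ¬ (o t).1 = i := (Finset.mem_filter.mp (Finset.mem_filter.mp ht).1).2
          have h2 : ¬ (o t).2 = j := (Finset.mem_filter.mp ht).2
          rw [xAt_ne i u a h1, xAt_ne i u a₀ h1, xAt_ne j v b h2, xAt_ne j v b₀ h2]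
      simp only [hQ, hG, hφ, hψ]
      rw [hsplit, xAt_same, xAt_same]
      ring
    have hφ01 : ∀ a, φ a = 0 ∨ φ a = 1 := by
      intro a
      exact mul01 ite01 (prod_zero_or_one _ _ (fun t _ => ite01))
    have hψ01 : ∀ b, ψ b = 0 ∨ ψ b = 1 := by
      intro b
      exact mul01 ite01 (prod_zero_or_one _ _ (fun t _ => ite01))
    have hc01 : c₀ = 0 ∨ c₀ = 1 := prod_zero_or_one _ _ (fun t _ => ite01)
    have hsum : ∑ a : X, ∑ b : Y, Q (xAt i u a) (xAt j v b)
        = (∑ a : X, ∑ b : Y, φ a * ψ b * ((if f (a, b) = z s' then (1:ℝ) else 0) - m)) * c₀ := by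
      rw [Finset.sum_mul]
      refine Finset.sum_congr rfl fun a _ => ?_
      rw [Finset.sum_mul]
      exact Finset.sum_congr rfl fun b _ => key a b
    rw [hsum, abs_mul]
    have h2 : |c₀| ≤ 1 := by rcases hc01 with h | h <;> simp [h]
    calc |∑ a : X, ∑ b : Y, φ a * ψ b * ((if f (a, b) = z s' then (1:ℝ) else 0) - m)| * |c₀|
        ≤ ε * 1 := mul_le_mul (hf φ ψ hφ01 hψ01 (z s')) h2 (abs_nonneg _) hε
      _ = ε := mul_one ε
  calc |∑ x ∈ A, ∑ y ∈ B, G x y|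
      = |∑ u : {t : Fin l // t ≠ i} → X, ∑ v : {t : Fin r // t ≠ j} → Y,
          ∑ a : X, ∑ b : Y, Q (xAt i u a) (xAt j v b)| := by rw [step1]; exact congrArg abs step2
    _ ≤ ∑ u : {t : Fin l // t ≠ i} → X, |∑ v : {t : Fin r // t ≠ j} → Y,
          ∑ a : X, ∑ b : Y, Q (xAt i u a) (xAt j v b)| := Finset.abs_sum_le_sum_abs _ _
    _ ≤ ∑ u : {t : Fin l // t ≠ i} → X, ∑ v : {t : Fin r // t ≠ j} → Y,
          |∑ a : X, ∑ b : Y, Q (xAt i u a) (xAt j v b)| :=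
        Finset.sum_le_sum fun u _ => Finset.abs_sum_le_sum_abs _ _
    _ ≤ ∑ u : {t : Fin l // t ≠ i} → X, ∑ v : {t : Fin r // t ≠ j} → Y, ε :=
        Finset.sum_le_sum fun u _ => Finset.sum_le_sum fun v _ => hW u v
    _ = (Fintype.card ({t : Fin l // t ≠ i} → X) : ℝ)
        * (Fintype.card ({t : Fin r // t ≠ j} → Y) : ℝ) * ε := by
        simp [Finset.sum_const, Finset.card_univ, nsmul_eq_mul]
        ring

theorem stmt0 :
    ∃ c : ℝ, 0 < c ∧
      ∀ (X Y Z : Type) [Fintype X] [Fintype Y] [Fintype Z]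
        [Nonempty X] [Nonempty Y],
        2 ≤ Fintype.card Z →
        ∀ (f : X × Y → Z) (d : ℝ), 0 < d →
          mdiscLE f ((2 : ℝ) ^ (-d)) →
          ∀ (l r k : ℕ), 0 < l → 0 < r → 0 < k → (k : ℝ) ≤ d / 5 →
            ∀ (o : Fin k → Fin l × Fin r), Function.Injective o →
              mdiscLE
                (fun p : (Fin l → X) × (Fin r → Y) =>
                  fun t : Fin k => f (p.1 (o t).1, p.2 (o t).2))
                (c * (2 : ℝ) ^ (-d / 4)) := by
  refine ⟨2, by norm_num, ?_⟩
  intro X Y Z _iX _iY _iZ _nX _nY hZ f d hd hmd l r k hl hr hk hkd o ho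
  obtain ⟨a₀⟩ := ‹Nonempty X›
  obtain ⟨b₀⟩ := ‹Nonempty Y›
  intro A B z
  classical
  suffices hSuf : |(((A ×ˢ B).filter (fun p => (fun t : Fin k => f (p.1 (o t).1, p.2 (o t).2)) = z)).card : ℝ) /
        ((Fintype.card (Fin l → X) : ℝ) * (Fintype.card (Fin r → Y) : ℝ)) -
      ((A.card : ℝ) * (B.card : ℝ)) /
        ((Fintype.card (Fin l → X) : ℝ) * (Fintype.card (Fin r → Y) : ℝ) *
          (Fintype.card (Fin k → Z) : ℝ))| ≤ 2 * (2:ℝ) ^ (-d / 4) by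
    convert hSuf using 4
    exact congrArg (fun n : ℕ => (n : ℝ)) (congrArg Finset.card (Finset.filter_congr_decidable (A ×ˢ B)
      (fun p => (fun t : Fin k => f (p.1 (o t).1, p.2 (o t).2)) = z)
      (fun a => Classical.propDecidable _)))
  have hNX : (0:ℝ) < (Fintype.card X : ℝ) := by exact_mod_cast Fintype.card_pos
  have hNY : (0:ℝ) < (Fintype.card Y : ℝ) := by exact_mod_cast Fintype.card_pos
  have hNZ : (2:ℝ) ≤ (Fintype.card Z : ℝ) := by exact_mod_cast hZ
  have hNZ0 : (0:ℝ) < (Fintype.card Z : ℝ) := by linarith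
  have hNXne : (Fintype.card X : ℝ) ≠ 0 := hNX.ne'
  have hNYne : (Fintype.card Y : ℝ) ≠ 0 := hNY.ne'
  have hNZne : (Fintype.card Z : ℝ) ≠ 0 := hNZ0.ne'
  set q : ℝ := 1 / (Fintype.card Z : ℝ) with hqdef
  have hq0 : 0 ≤ q := by positivity
  have hq2 : q ≤ 1/2 := by
    rw [hqdef]
    exact one_div_le_one_div_of_le (by norm_num) hNZ
  set δ : ℝ := (2:ℝ) ^ (-d) with hδdef
  have hδ0 : 0 < δ := Real.rpow_pos_of_pos (by norm_num) _
  set ε : ℝ := δ * ((Fintype.card X : ℝ) * (Fintype.card Y : ℝ)) with hεdef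
  have hε0 : 0 ≤ ε := by positivity
  -- hypothesis in sum form
  have hfs : ∀ (A' : Finset X) (B' : Finset Y) (z₀ : Z),
      |∑ a ∈ A', ∑ b ∈ B', ((if f (a, b) = z₀ then (1:ℝ) else 0) - q)| ≤ ε := by
    intro A' B' z₀
    have h0 := hmd A' B' z₀
    have hc : (((A' ×ˢ B').filter (fun p => f p = z₀)).card : ℝ)
        = ∑ a ∈ A', ∑ b ∈ B', (if f (a, b) = z₀ then (1:ℝ) else 0) := by
      rw [Finset.card_filter]
      push_cast
      rw [Finset.sum_product]
    have hsum : ∑ a ∈ A', ∑ b ∈ B', ((if f (a, b) = z₀ then (1:ℝ) else 0) - q)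
        = (((A' ×ˢ B').filter (fun p => f p = z₀)).card : ℝ)
          - (A'.card : ℝ) * (B'.card : ℝ) * q := by
      have h1 : ∀ a : X, ∑ b ∈ B', ((if f (a, b) = z₀ then (1:ℝ) else 0) - q)
          = (∑ b ∈ B', (if f (a, b) = z₀ then (1:ℝ) else 0)) - (B'.card : ℝ) * q := by
        intro a
        rw [Finset.sum_sub_distrib, Finset.sum_const, nsmul_eq_mul]
      rw [Finset.sum_congr rfl (fun a _ => h1 a), Finset.sum_sub_distrib,
        Finset.sum_const, nsmul_eq_mul, hc]
      ring
    have heq : (((A' ×ˢ B').filter (fun p => f p = z₀)).card : ℝ) /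
          ((Fintype.card X : ℝ) * (Fintype.card Y : ℝ)) -
        ((A'.card : ℝ) * (B'.card : ℝ)) /
          ((Fintype.card X : ℝ) * (Fintype.card Y : ℝ) * (Fintype.card Z : ℝ))
        = ((((A' ×ˢ B').filter (fun p => f p = z₀)).card : ℝ)
            - (A'.card : ℝ) * (B'.card : ℝ) * q) /
          ((Fintype.card X : ℝ) * (Fintype.card Y : ℝ)) := by
      rw [hqdef]
      field_simp
    rw [heq, abs_div, abs_of_pos (mul_pos hNX hNY), div_le_iff₀ (mul_pos hNX hNY)] at h0
    rw [hsum]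
    exact h0
  -- φ/ψ form of the hypothesis
  have hfφ : ∀ (φ : X → ℝ) (ψ : Y → ℝ), (∀ a, φ a = 0 ∨ φ a = 1) →
      (∀ b, ψ b = 0 ∨ ψ b = 1) → ∀ z₀ : Z,
      |∑ a : X, ∑ b : Y, φ a * ψ b * ((if f (a, b) = z₀ then (1:ℝ) else 0) - q)| ≤ ε := by
    intro φ ψ hφ hψ z₀
    have h1 : ∀ a : X, ∑ b : Y, φ a * ψ b * ((if f (a, b) = z₀ then (1:ℝ) else 0) - q)
        = φ a * ∑ b ∈ Finset.univ.filter (fun b => ψ b = 1),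
            ((if f (a, b) = z₀ then (1:ℝ) else 0) - q) := by
      intro a
      calc ∑ b : Y, φ a * ψ b * ((if f (a, b) = z₀ then (1:ℝ) else 0) - q)
          = φ a * ∑ b : Y, ψ b * ((if f (a, b) = z₀ then (1:ℝ) else 0) - q) := by
            rw [Finset.mul_sum]
            exact Finset.sum_congr rfl fun b _ => by ring
        _ = φ a * ∑ b ∈ Finset.univ.filter (fun b => ψ b = 1),
              ((if f (a, b) = z₀ then (1:ℝ) else 0) - q) := by
            rw [sum_boole_mul ψ hψ]
    rw [Finset.sum_congr rfl fun a _ => h1 a,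
      sum_boole_mul φ hφ (fun a => ∑ b ∈ Finset.univ.filter (fun b => ψ b = 1),
        ((if f (a, b) = z₀ then (1:ℝ) else 0) - q))]
    exact hfs _ _ z₀
  -- counting facts
  have hXl : (Fintype.card (Fin l → X) : ℝ) = (Fintype.card X : ℝ) ^ l := by
    rw [show Fintype.card (Fin l → X) = Fintype.card X ^ l from by
      rw [Fintype.card_fun, Fintype.card_fin]]
    push_cast
    rfl
  have hYr : (Fintype.card (Fin r → Y) : ℝ) = (Fintype.card Y : ℝ) ^ r := by
    rw [show Fintype.card (Fin r → Y) = Fintype.card Y ^ r from by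
      rw [Fintype.card_fun, Fintype.card_fin]]
    push_cast
    rfl
  have hZk : (Fintype.card (Fin k → Z) : ℝ) = (Fintype.card Z : ℝ) ^ k := by
    rw [show Fintype.card (Fin k → Z) = Fintype.card Z ^ k from by
      rw [Fintype.card_fun, Fintype.card_fin]]
    push_cast
    rfl
  have hNXl0 : (0:ℝ) < (Fintype.card (Fin l → X) : ℝ) := by rw [hXl]; positivity
  have hNYr0 : (0:ℝ) < (Fintype.card (Fin r → Y) : ℝ) := by rw [hYr]; positivity
  have hNZk0 : (0:ℝ) < (Fintype.card (Fin k → Z) : ℝ) := by rw [hZk]; positivity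
  have hq_pow : q ^ k = 1 / (Fintype.card (Fin k → Z) : ℝ) := by
    rw [hZk, hqdef, one_div_pow]
  -- the prefix functions
  set aN : (Fin l → X) → (Fin r → Y) → ℕ → ℝ := fun x y n =>
    if h : n < k then (if f (x (o ⟨n, h⟩).1, y (o ⟨n, h⟩).2) = z ⟨n, h⟩ then (1:ℝ) else 0)
    else 1 with haN
  have hpoint : ∀ (x : Fin l → X) (y : Fin r → Y),
      ((if (fun t : Fin k => f (x (o t).1, y (o t).2)) = z then (1:ℝ) else 0)
          - 1 / (Fintype.card (Fin k → Z) : ℝ))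
        = ∑ s ∈ Finset.range k,
            (∏ t' ∈ Finset.range s, aN x y t') * (aN x y s - q) * q ^ (k - 1 - s) := by
    intro x y
    rw [← telescope (aN x y) q k]
    congr 1
    · rw [← Fin.prod_univ_eq_prod_range (aN x y) k]
      have h1 : ∀ t : Fin k, aN x y (t : ℕ) =
          if f (x (o t).1, y (o t).2) = z t then (1:ℝ) else 0 := by
        intro t
        rw [haN]
        simp only [Fin.is_lt, dite_true, dif_pos t.isLt, Fin.eta]
      rw [Finset.prod_congr rfl fun t _ => h1 t, Finset.prod_boole]
      simp only [Finset.mem_univ, forall_true_left, funext_iff]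
    · exact hq_pow.symm
  -- goal reduction
  have hcard : (((A ×ˢ B).filter (fun p => (fun t : Fin k => f (p.1 (o t).1, p.2 (o t).2)) = z)).card : ℝ)
      = ∑ x ∈ A, ∑ y ∈ B,
          (if (fun t : Fin k => f (x (o t).1, y (o t).2)) = z then (1:ℝ) else 0) := by
    rw [Finset.card_filter]
    push_cast
    rw [Finset.sum_product]
  set U : ℝ := ∑ x ∈ A, ∑ y ∈ B,
      ((if (fun t : Fin k => f (x (o t).1, y (o t).2)) = z then (1:ℝ) else 0)
        - 1 / (Fintype.card (Fin k → Z) : ℝ)) with hU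
  have hUeq1 : U = (((A ×ˢ B).filter (fun p => (fun t : Fin k => f (p.1 (o t).1, p.2 (o t).2)) = z)).card : ℝ)
      - (A.card : ℝ) * (B.card : ℝ) * (1 / (Fintype.card (Fin k → Z) : ℝ)) := by
    rw [hU]
    have h1 : ∀ x : Fin l → X, ∑ y ∈ B,
        ((if (fun t : Fin k => f (x (o t).1, y (o t).2)) = z then (1:ℝ) else 0)
          - 1 / (Fintype.card (Fin k → Z) : ℝ))
        = (∑ y ∈ B, (if (fun t : Fin k => f (x (o t).1, y (o t).2)) = z then (1:ℝ) else 0))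
          - (B.card : ℝ) * (1 / (Fintype.card (Fin k → Z) : ℝ)) := by
      intro x
      rw [Finset.sum_sub_distrib, Finset.sum_const, nsmul_eq_mul]
    rw [Finset.sum_congr rfl (fun x _ => h1 x), Finset.sum_sub_distrib,
      Finset.sum_const, nsmul_eq_mul, hcard]
    ring
  have hgoal : (((A ×ˢ B).filter (fun p => (fun t : Fin k => f (p.1 (o t).1, p.2 (o t).2)) = z)).card : ℝ) /
        ((Fintype.card (Fin l → X) : ℝ) * (Fintype.card (Fin r → Y) : ℝ)) -
      ((A.card : ℝ) * (B.card : ℝ)) /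
        ((Fintype.card (Fin l → X) : ℝ) * (Fintype.card (Fin r → Y) : ℝ) *
          (Fintype.card (Fin k → Z) : ℝ))
      = U / ((Fintype.card (Fin l → X) : ℝ) * (Fintype.card (Fin r → Y) : ℝ)) := by
    rw [hUeq1]
    field_simp
  rw [hgoal, abs_div, abs_of_pos (mul_pos hNXl0 hNYr0), div_le_iff₀ (mul_pos hNXl0 hNYr0)]
  -- expansion via telescoping
  have hUeq2 : U = ∑ s ∈ Finset.range k, q ^ (k - 1 - s) *
      (∑ x ∈ A, ∑ y ∈ B, (∏ t' ∈ Finset.range s, aN x y t') * (aN x y s - q)) := by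
    calc U = ∑ x ∈ A, ∑ y ∈ B, ∑ s ∈ Finset.range k,
          (∏ t' ∈ Finset.range s, aN x y t') * (aN x y s - q) * q ^ (k - 1 - s) :=
        Finset.sum_congr rfl fun x _ => Finset.sum_congr rfl fun y _ => hpoint x y
      _ = ∑ x ∈ A, ∑ s ∈ Finset.range k, ∑ y ∈ B,
          (∏ t' ∈ Finset.range s, aN x y t') * (aN x y s - q) * q ^ (k - 1 - s) :=
        Finset.sum_congr rfl fun x _ => Finset.sum_comm
      _ = ∑ s ∈ Finset.range k, ∑ x ∈ A, ∑ y ∈ B,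
          (∏ t' ∈ Finset.range s, aN x y t') * (aN x y s - q) * q ^ (k - 1 - s) :=
        Finset.sum_comm
      _ = ∑ s ∈ Finset.range k, q ^ (k - 1 - s) *
          (∑ x ∈ A, ∑ y ∈ B, (∏ t' ∈ Finset.range s, aN x y t') * (aN x y s - q)) := by
        refine Finset.sum_congr rfl fun s _ => ?_
        rw [Finset.mul_sum]
        refine Finset.sum_congr rfl fun x _ => ?_
        rw [Finset.mul_sum]
        exact Finset.sum_congr rfl fun y _ => by ring
  have hT : ∀ s ∈ Finset.range k,
      |∑ x ∈ A, ∑ y ∈ B, (∏ t' ∈ Finset.range s, aN x y t') * (aN x y s - q)|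
        ≤ δ * ((Fintype.card (Fin l → X) : ℝ) * (Fintype.card (Fin r → Y) : ℝ)) := by
    intro s hs
    have hsk : s < k := Finset.mem_range.mp hs
    set s' : Fin k := ⟨s, hsk⟩ with hs'
    set S₀ : Finset (Fin k) := Finset.univ.filter (fun t : Fin k => (t : ℕ) < s) with hS₀def
    have hS₀ : s' ∉ S₀ := by simp [hS₀def, hs']
    have hrw : ∀ (x : Fin l → X) (y : Fin r → Y),
        (∏ t' ∈ Finset.range s, aN x y t') * (aN x y s - q)
        = (∏ t ∈ S₀, (if f (x (o t).1, y (o t).2) = z t then (1:ℝ) else 0)) *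
          ((if f (x (o s').1, y (o s').2) = z s' then (1:ℝ) else 0) - q) := by
      intro x y
      congr 1
      · refine Finset.prod_bij' (fun n hn => (⟨n, lt_trans (Finset.mem_range.mp hn) hsk⟩ : Fin k))
          (fun t _ => (t : ℕ)) ?_ ?_ ?_ ?_ ?_
        · intro n hn
          simp [hS₀def]
          exact Finset.mem_range.mp hn
        · intro t ht
          simp [hS₀def] at ht
          exact Finset.mem_range.mpr ht
        · intro n hn
          rfl
        · intro t ht
          simp
        · intro n hn
          rw [haN]
          simp only [dif_pos (lt_trans (Finset.mem_range.mp hn) hsk)]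
      · congr 1
        rw [haN]
        simp only [dif_pos hsk]
        rfl
    have hconv : (∑ x ∈ A, ∑ y ∈ B, (∏ t' ∈ Finset.range s, aN x y t') * (aN x y s - q))
        = ∑ x ∈ A, ∑ y ∈ B,
            (∏ t ∈ S₀, (if f (x (o t).1, y (o t).2) = z t then (1:ℝ) else 0)) *
              ((if f (x (o s').1, y (o s').2) = z s' then (1:ℝ) else 0) - q) :=
      Finset.sum_congr rfl fun x _ => Finset.sum_congr rfl fun y _ => hrw x y
    rw [hconv]
    have hcore := core a₀ b₀ f q ε hε0 hfφ o ho z s' S₀ hS₀ A B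
    refine hcore.trans (le_of_eq ?_)
    have c1 : Fintype.card ({t : Fin l // t ≠ (o s').1} → X)
        = Fintype.card X ^ (l - 1) := by
      rw [Fintype.card_fun]
      congr 1
      rw [Fintype.card_subtype_compl, Fintype.card_subtype_eq, Fintype.card_fin]
    have c2 : Fintype.card ({t : Fin r // t ≠ (o s').2} → Y)
        = Fintype.card Y ^ (r - 1) := by
      rw [Fintype.card_fun]
      congr 1
      rw [Fintype.card_subtype_compl, Fintype.card_subtype_eq, Fintype.card_fin]
    rw [c1, c2, hεdef, hXl, hYr]
    push_cast
    have e1 : (Fintype.card X : ℝ) ^ (l - 1) * (Fintype.card X : ℝ)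
        = (Fintype.card X : ℝ) ^ l := by
      rw [← pow_succ]
      congr 1
      omega
    have e2 : (Fintype.card Y : ℝ) ^ (r - 1) * (Fintype.card Y : ℝ)
        = (Fintype.card Y : ℝ) ^ r := by
      rw [← pow_succ]
      congr 1
      omega
    rw [← e1, ← e2]
    ring
  have hgeom : ∑ s ∈ Finset.range k, q ^ (k - 1 - s) ≤ 2 := by
    rw [Finset.sum_range_reflect (fun j => q ^ j) k]
    calc ∑ j ∈ Finset.range k, q ^ j
        ≤ ∑ j ∈ Finset.range k, (1/2 : ℝ) ^ j :=
          Finset.sum_le_sum fun jj _ => pow_le_pow_left₀ hq0 hq2 jj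
      _ ≤ 2 := sum_geometric_two_le k
  have hP0 : (0:ℝ) < (Fintype.card (Fin l → X) : ℝ) * (Fintype.card (Fin r → Y) : ℝ) :=
    mul_pos hNXl0 hNYr0
  have hUb : |U| ≤ 2 * (δ * ((Fintype.card (Fin l → X) : ℝ) * (Fintype.card (Fin r → Y) : ℝ))) := by
    rw [hUeq2]
    calc |∑ s ∈ Finset.range k, q ^ (k - 1 - s) *
          (∑ x ∈ A, ∑ y ∈ B, (∏ t' ∈ Finset.range s, aN x y t') * (aN x y s - q))|
        ≤ ∑ s ∈ Finset.range k, |q ^ (k - 1 - s) *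
          (∑ x ∈ A, ∑ y ∈ B, (∏ t' ∈ Finset.range s, aN x y t') * (aN x y s - q))| :=
          Finset.abs_sum_le_sum_abs _ _
      _ = ∑ s ∈ Finset.range k, q ^ (k - 1 - s) *
          |∑ x ∈ A, ∑ y ∈ B, (∏ t' ∈ Finset.range s, aN x y t') * (aN x y s - q)| :=
          Finset.sum_congr rfl fun s _ => by
            rw [abs_mul, abs_of_nonneg (pow_nonneg hq0 _)]
      _ ≤ ∑ s ∈ Finset.range k, q ^ (k - 1 - s) *
          (δ * ((Fintype.card (Fin l → X) : ℝ) * (Fintype.card (Fin r → Y) : ℝ))) :=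
          Finset.sum_le_sum fun s hs =>
            mul_le_mul_of_nonneg_left (hT s hs) (pow_nonneg hq0 _)
      _ = (∑ s ∈ Finset.range k, q ^ (k - 1 - s)) *
          (δ * ((Fintype.card (Fin l → X) : ℝ) * (Fintype.card (Fin r → Y) : ℝ))) :=
          (Finset.sum_mul _ _ _).symm
      _ ≤ 2 * (δ * ((Fintype.card (Fin l → X) : ℝ) * (Fintype.card (Fin r → Y) : ℝ))) :=
          mul_le_mul_of_nonneg_right hgeom (by positivity)
  have hδ4 : δ ≤ (2:ℝ) ^ (-d / 4) := by
    rw [hδdef]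
    apply Real.rpow_le_rpow_of_exponent_le one_le_two
    linarith
  have hfinal : δ * ((Fintype.card (Fin l → X) : ℝ) * (Fintype.card (Fin r → Y) : ℝ))
      ≤ (2:ℝ) ^ (-d / 4) * ((Fintype.card (Fin l → X) : ℝ) * (Fintype.card (Fin r → Y) : ℝ)) :=
    mul_le_mul_of_nonneg_right hδ4 (le_of_lt hP0)
  calc |U| ≤ 2 * (δ * ((Fintype.card (Fin l → X) : ℝ) * (Fintype.card (Fin r → Y) : ℝ))) := hUb
    _ ≤ 2 * ((2:ℝ) ^ (-d / 4) * ((Fintype.card (Fin l → X) : ℝ) * (Fintype.card (Fin r → Y) : ℝ))) := by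
        linarith
    _ = 2 * (2:ℝ) ^ (-d / 4) * ((Fintype.card (Fin l → X) : ℝ) * (Fintype.card (Fin r → Y) : ℝ)) := by
        ring
end

section
/- Let F be a finite field and n a positive integer. Define h : F^n × (F^n × F) → F by h(x, (y, a)) = (Σ_{i=1}^n x_i · y_i) + a, with arithmetic in F. Then mdisc(h) ≤ |F|^{-n/4}. -/
open scoped Classical

section Aux

open Finset

private lemma addChar_map_finsum {A M : Type*} [AddCommMonoid A] [CommMonoid M]
    (ψ : AddChar A M) {ι : Type*} (s : Finset ι) (f : ι → A) :
    ψ (∑ i ∈ s, f i) = ∏ i ∈ s, ψ (f i) := by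
  induction s using Finset.cons_induction with
  | empty => simp
  | cons a s ha ih => rw [Finset.sum_cons, Finset.prod_cons, AddChar.map_add_eq_mul, ih]

variable {F : Type} [Field F] [Fintype F]

private lemma sum_mul_char (ψ : AddChar F ℂ) (hψ : ψ ≠ 1) (c : F) :
    ∑ t : F, ψ (t * c) = if c = 0 then (Fintype.card F : ℂ) else 0 := by
  split_ifs with h
  · simp [h, Finset.card_univ]
  · exact (Fintype.sum_equiv (Equiv.mulRight₀ c h) _ _ fun t => rfl).trans
      (AddChar.sum_eq_zero_of_ne_one hψ)

private lemma sum_char_ip {n : ℕ} (ψ : AddChar F ℂ) (hψ : ψ ≠ 1) (c : Fin n → F) :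
    ∑ x : Fin n → F, ψ (∑ i, x i * c i) =
      if c = 0 then ((Fintype.card F : ℂ) ^ n) else 0 := by
  have h1 : ∀ x : Fin n → F, ψ (∑ i, x i * c i) = ∏ i, ψ (x i * c i) :=
    fun x => addChar_map_finsum ψ _ _
  rw [Finset.sum_congr rfl fun x _ => h1 x,
    ← Fintype.prod_sum (fun i (t : F) => ψ (t * c i)),
    Finset.prod_congr rfl fun i _ => sum_mul_char ψ hψ (c i)]
  by_cases hc : c = 0
  · rw [if_pos hc]
    have : ∀ i, c i = 0 := fun i => congrFun hc i
    simp [this]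
  · rw [if_neg hc]
    obtain ⟨j, hj⟩ : ∃ j, c j ≠ 0 := by
      by_contra h
      push_neg at h
      exact hc (funext h)
    exact Finset.prod_eq_zero (Finset.mem_univ j) (if_neg hj)

private lemma abs_psi_eq_one (ψ : AddChar F ℂ) (w : F) : ‖ψ w‖ = 1 := by
  have hp : 0 < ringChar F :=
    Nat.pos_of_ne_zero (CharP.ringChar_ne_zero_of_finite F)
  exact Complex.norm_eq_one_of_mem_rootsOfUnity (ψ.val_mem_rootsOfUnity w hp)

private lemma conj_psi (ψ : AddChar F ℂ) (w : F) :
    (starRingEnd ℂ) (ψ w) = ψ (-w) := by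
  have hp : 0 < ringChar F :=
    Nat.pos_of_ne_zero (CharP.ringChar_ne_zero_of_finite F)
  rw [AddChar.starComp_apply hp, AddChar.inv_apply]

/-- The key character-sum bound, via Cauchy–Schwarz. -/
private lemma abs_S_le {n : ℕ} (ψ : AddChar F ℂ) (hψ : ψ ≠ 1)
    (A : Finset (Fin n → F)) (B : Finset ((Fin n → F) × F)) (z : F) :
    ‖∑ x ∈ A, ∑ b ∈ B, ψ ((∑ i, x i * b.1 i) + b.2 - z)‖ ≤
      Real.sqrt ((Fintype.card F : ℝ) ^ (3 * n + 2)) := by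
  set q : ℝ := (Fintype.card F : ℝ) with hq
  have hq0 : (0 : ℝ) < q := by rw [hq]; exact_mod_cast Fintype.card_pos
  set g : (Fin n → F) → ℂ :=
    fun x => ∑ b ∈ B, ψ ((∑ i, x i * b.1 i) + b.2 - z) with hg
  -- Step 1: expand ∑_x |g x|^2
  have hT : ∑ x : Fin n → F, g x * (starRingEnd ℂ) (g x)
      = ∑ b ∈ B, ∑ b' ∈ B,
          (if b.1 = b'.1 then ((Fintype.card F : ℂ) ^ n) * ψ (b.2 - b'.2) else 0) := by
    have expand : ∀ x : Fin n → F, g x * (starRingEnd ℂ) (g x)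
        = ∑ b ∈ B, ∑ b' ∈ B,
            ψ (∑ i, x i * (b.1 i - b'.1 i)) * ψ (b.2 - b'.2) := by
      intro x
      rw [hg, map_sum, Finset.sum_mul_sum]
      refine Finset.sum_congr rfl fun b _ => Finset.sum_congr rfl fun b' _ => ?_
      rw [conj_psi, ← AddChar.map_add_eq_mul, ← AddChar.map_add_eq_mul]
      congr 1
      have hs : (∑ i, x i * (b.1 i - b'.1 i))
          = (∑ i, x i * b.1 i) - (∑ i, x i * b'.1 i) := by
        rw [← Finset.sum_sub_distrib]
        exact Finset.sum_congr rfl fun i _ => mul_sub _ _ _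
      rw [hs]; ring
    rw [Finset.sum_congr rfl fun x _ => expand x]
    rw [Finset.sum_comm]
    refine Finset.sum_congr rfl fun b _ => ?_
    rw [Finset.sum_comm]
    refine Finset.sum_congr rfl fun b' _ => ?_
    rw [← Finset.sum_mul, sum_char_ip ψ hψ]
    have hiff : ((fun i => b.1 i - b'.1 i) = 0) ↔ b.1 = b'.1 := by
      constructor
      · intro h; funext i
        have := congrFun h i
        simpa [sub_eq_zero] using this
      · intro h; funext i; simp [h]
    by_cases h : b.1 = b'.1
    · rw [if_pos (hiff.2 h), if_pos h]
    · rw [if_neg (fun hh => h (hiff.1 hh)), if_neg h, zero_mul]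
  -- Step 2: bound ∑_x |g x|^2
  have hsum_sq : ∑ x : Fin n → F, (‖g x‖) ^ 2 ≤ q ^ n * (q * B.card) := by
    have h1 : ((∑ x : Fin n → F, (‖g x‖) ^ 2 : ℝ) : ℂ)
        = ∑ x : Fin n → F, g x * (starRingEnd ℂ) (g x) := by
      push_cast
      refine Finset.sum_congr rfl fun x _ => ?_
      rw [Complex.mul_conj]
      norm_cast
      rw [Complex.sq_norm]
    have h2 : ∑ x : Fin n → F, (‖g x‖) ^ 2
        = ‖∑ x : Fin n → F, g x * (starRingEnd ℂ) (g x)‖ := by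
      rw [← h1, Complex.norm_real, Real.norm_eq_abs, abs_of_nonneg]
      exact Finset.sum_nonneg fun x _ => sq_nonneg _
    rw [h2, hT]
    calc ‖∑ b ∈ B, ∑ b' ∈ B,
            (if b.1 = b'.1 then ((Fintype.card F : ℂ) ^ n) * ψ (b.2 - b'.2) else 0)‖
        ≤ ∑ b ∈ B, ∑ b' ∈ B, (if b.1 = b'.1 then q ^ n else 0) := by
          refine (norm_sum_le _ _).trans ?_
          refine Finset.sum_le_sum fun b _ => ?_
          refine (norm_sum_le _ _).trans ?_
          refine Finset.sum_le_sum fun b' _ => ?_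
          by_cases h : b.1 = b'.1
          · rw [if_pos h, if_pos h, norm_mul, norm_pow, abs_psi_eq_one, mul_one,
              Complex.norm_natCast]
          · rw [if_neg h, if_neg h, norm_zero]
      _ ≤ ∑ b ∈ B, (q ^ n * q) := by
          refine Finset.sum_le_sum fun b _ => ?_
          have hcard : ((B.filter fun b' => b.1 = b'.1).card : ℝ) ≤ q := by
            have hle : (B.filter fun b' => b.1 = b'.1).card ≤ Fintype.card F := by
              have := Finset.card_le_card_of_injOn (f := Prod.snd)
                (s := B.filter fun b' => b.1 = b'.1) (t := Finset.univ)
                (fun _ _ => Finset.mem_univ _)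
                (by
                  intro u hu v hv huv
                  simp only [Finset.coe_filter, Set.mem_setOf_eq] at hu hv
                  exact Prod.ext (hu.2.symm.trans hv.2) huv)
              simpa using this
            rw [hq]; exact_mod_cast hle
          calc ∑ b' ∈ B, (if b.1 = b'.1 then q ^ n else 0)
              = q ^ n * ((B.filter fun b' => b.1 = b'.1).card : ℝ) := by
                rw [← Finset.sum_filter, Finset.sum_const, nsmul_eq_mul, mul_comm]
            _ ≤ q ^ n * q := by
                exact mul_le_mul_of_nonneg_left hcard (by positivity)
      _ = q ^ n * q * B.card := by rw [Finset.sum_const, nsmul_eq_mul]; ring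
      _ = q ^ n * (q * B.card) := by ring
  -- Step 3: Cauchy–Schwarz
  have hCS : (‖∑ x ∈ A, g x‖) ^ 2 ≤ (A.card : ℝ) * (q ^ n * (q * B.card)) := by
    have h1 : ‖∑ x ∈ A, g x‖ ≤ ∑ x ∈ A, ‖g x‖ :=
      norm_sum_le _ _
    have h2 : (∑ x ∈ A, ‖g x‖) ^ 2
        ≤ (A.card : ℝ) * ∑ x ∈ A, (‖g x‖) ^ 2 := by
      have := Finset.sum_mul_sq_le_sq_mul_sq A (fun _ => (1 : ℝ))
        (fun x => ‖g x‖)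
      simpa using this
    have h3 : ∑ x ∈ A, (‖g x‖) ^ 2
        ≤ ∑ x : Fin n → F, (‖g x‖) ^ 2 :=
      Finset.sum_le_sum_of_subset_of_nonneg (Finset.subset_univ A)
        (fun x _ _ => sq_nonneg _)
    have h4 : (‖∑ x ∈ A, g x‖) ^ 2 ≤ (∑ x ∈ A, ‖g x‖) ^ 2 := by
      exact pow_le_pow_left₀ (norm_nonneg _) h1 2
    refine h4.trans (h2.trans ?_)
    exact mul_le_mul_of_nonneg_left (h3.trans hsum_sq) (Nat.cast_nonneg _)
  -- Step 4: assemble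
  have hA : (A.card : ℝ) ≤ q ^ n := by
    have := Finset.card_le_univ A
    have hcu : (Fintype.card (Fin n → F)) = Fintype.card F ^ n := by
      simp [Fintype.card_fun]
    calc (A.card : ℝ) ≤ (Fintype.card (Fin n → F) : ℝ) := by exact_mod_cast this
      _ = q ^ n := by rw [hcu]; push_cast; rfl
  have hB : (B.card : ℝ) ≤ q ^ n * q := by
    have := Finset.card_le_univ B
    have hcu : (Fintype.card ((Fin n → F) × F)) = Fintype.card F ^ n * Fintype.card F := by
      simp [Fintype.card_fun]
    calc (B.card : ℝ) ≤ (Fintype.card ((Fin n → F) × F) : ℝ) := by exact_mod_cast this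
      _ = q ^ n * q := by rw [hcu]; push_cast; rfl
  have hfinal : (‖∑ x ∈ A, g x‖) ^ 2 ≤ q ^ (3 * n + 2) := by
    have hqn : (0:ℝ) ≤ q ^ n := by positivity
    have h5 : (A.card : ℝ) * (q ^ n * (q * B.card)) ≤ q ^ n * (q ^ n * (q * (q ^ n * q))) := by
      have hBq : q * (B.card : ℝ) ≤ q * (q ^ n * q) :=
        mul_le_mul_of_nonneg_left hB hq0.le
      have : q ^ n * (q * (B.card:ℝ)) ≤ q ^ n * (q * (q ^ n * q)) :=
        mul_le_mul_of_nonneg_left hBq hqn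
      calc (A.card : ℝ) * (q ^ n * (q * B.card))
          ≤ (q ^ n) * (q ^ n * (q * B.card)) := by
            refine mul_le_mul_of_nonneg_right hA ?_
            have : (0:ℝ) ≤ (B.card : ℝ) := Nat.cast_nonneg _
            positivity
        _ ≤ q ^ n * (q ^ n * (q * (q ^ n * q))) := mul_le_mul_of_nonneg_left this hqn
    refine hCS.trans (h5.trans_eq ?_)
    ring
  have : ‖∑ x ∈ A, g x‖ ≤ Real.sqrt (q ^ (3 * n + 2)) := by
    rw [show ‖∑ x ∈ A, g x‖
        = Real.sqrt ((‖∑ x ∈ A, g x‖) ^ 2) from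
      (Real.sqrt_sq (norm_nonneg _)).symm]
    exact Real.sqrt_le_sqrt hfinal
  exact this

end Aux

theorem stmt1 (F : Type) [Field F] [Fintype F] (n : ℕ) (hn : 0 < n) :
    mdiscLE
      (fun p : (Fin n → F) × ((Fin n → F) × F) =>
        (∑ i, p.1 i * p.2.1 i) + p.2.2)
      ((Fintype.card F : ℝ) ^ (-(n : ℝ) / 4)) := by
  intro A B z
  beta_reduce
  set q : ℝ := (Fintype.card F : ℝ) with hq
  have hq0 : (0:ℝ) < q := by rw [hq]; exact_mod_cast Fintype.card_pos
  have hq1 : (1:ℝ) ≤ q := by rw [hq]; exact_mod_cast Fintype.card_pos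
  set S : AddChar F ℂ → ℂ :=
    (fun ψ => ∑ x ∈ A, ∑ b ∈ B, ψ ((∑ i, x i * b.1 i) + b.2 - z)) with hS
  set N : ℕ := ((A ×ˢ B).filter
      (fun p : (Fin n → F) × ((Fin n → F) × F) =>
        (∑ i, p.1 i * p.2.1 i) + p.2.2 = z)).card with hNdef
  have hchar : ((N : ℂ)) * (Fintype.card F : ℂ) = ∑ ψ : AddChar F ℂ, S ψ := by
    have hswap : ∑ ψ : AddChar F ℂ, S ψ
        = ∑ x ∈ A, ∑ b ∈ B, ∑ ψ : AddChar F ℂ, ψ ((∑ i, x i * b.1 i) + b.2 - z) := by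
      simp only [hS]
      rw [Finset.sum_comm]
      exact Finset.sum_congr rfl fun x _ => Finset.sum_comm
    have hin : ∀ x ∈ A, ∀ b ∈ B,
        (∑ ψ : AddChar F ℂ, ψ ((∑ i, x i * b.1 i) + b.2 - z))
        = if (∑ i, x i * b.1 i) + b.2 = z then ((Fintype.card F : ℂ)) else 0 := by
      intro x _ b _
      rw [AddChar.sum_apply_eq_ite]
      simp only [sub_eq_zero]
    rw [hswap,
      Finset.sum_congr rfl fun x hx => Finset.sum_congr rfl fun b hb => hin x hx b hb]
    have hNsum : ((N:ℂ)) = ∑ x ∈ A, ∑ b ∈ B,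
        (if (∑ i, x i * b.1 i) + b.2 = z then (1:ℂ) else 0) := by
      rw [hNdef]
      push_cast [Finset.card_filter]
      rw [Finset.sum_product]
    rw [hNsum, Finset.sum_mul]
    refine Finset.sum_congr rfl fun x _ => ?_
    rw [Finset.sum_mul]
    refine Finset.sum_congr rfl fun b _ => ?_
    split_ifs <;> simp
  have hsplit : ∑ ψ : AddChar F ℂ, S ψ
      = S 1 + ∑ ψ ∈ (Finset.univ.erase (1 : AddChar F ℂ)), S ψ :=
    (Finset.add_sum_erase _ S (Finset.mem_univ 1)).symm
  have hone : S 1 = (A.card : ℂ) * B.card := by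
    simp [hS]
  have keyC : ‖(N : ℂ) * (Fintype.card F : ℂ) - (A.card : ℂ) * B.card‖
      ≤ q * Real.sqrt (q ^ (3*n+2)) := by
    have hdiff : (N : ℂ) * (Fintype.card F : ℂ) - (A.card : ℂ) * B.card
        = ∑ ψ ∈ (Finset.univ.erase (1 : AddChar F ℂ)), S ψ := by
      rw [hchar, hsplit, hone]; ring
    rw [hdiff]
    refine (norm_sum_le _ _).trans ?_
    have hbound : ∀ ψ ∈ Finset.univ.erase (1 : AddChar F ℂ),
        ‖S ψ‖ ≤ Real.sqrt (q ^ (3*n+2)) := fun ψ hψ =>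
      abs_S_le ψ (Finset.ne_of_mem_erase hψ) A B z
    refine (Finset.sum_le_sum hbound).trans ?_
    rw [Finset.sum_const, nsmul_eq_mul]
    have hcard : ((Finset.univ.erase (1 : AddChar F ℂ)).card : ℝ) ≤ q := by
      have h1 : (Finset.univ.erase (1 : AddChar F ℂ)).card
          ≤ (Finset.univ : Finset (AddChar F ℂ)).card :=
        Finset.card_le_card (Finset.erase_subset _ _)
      have h2 : (Finset.univ : Finset (AddChar F ℂ)).card = Fintype.card F := by
        rw [Finset.card_univ, AddChar.card_eq]
      rw [hq]; exact_mod_cast h1.trans_eq h2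
    exact mul_le_mul_of_nonneg_right hcard (Real.sqrt_nonneg _)
  have keyR : |(N:ℝ) * q - (A.card:ℝ) * B.card| ≤ q * Real.sqrt (q ^ (3*n+2)) := by
    have hcast : ((|(N:ℝ) * q - (A.card:ℝ) * B.card| : ℝ))
        = ‖(N:ℂ) * (Fintype.card F : ℂ) - (A.card:ℂ) * B.card‖ := by
      rw [← Real.norm_eq_abs, ← Complex.norm_real]
      congr 1
      push_cast [hq]
      ring
    rw [hcast]; exact keyC
  have hcX : ((Fintype.card (Fin n → F) : ℝ)) = q ^ n := by
    rw [hq]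
    simp [Fintype.card_fun]
  have hcY : ((Fintype.card ((Fin n → F) × F) : ℝ)) = q ^ n * q := by
    rw [hq]
    simp [Fintype.card_fun]
  have hrw : (N:ℝ) / ((Fintype.card (Fin n → F) : ℝ) * (Fintype.card ((Fin n → F) × F) : ℝ))
      - (A.card:ℝ) * (B.card:ℝ) / ((Fintype.card (Fin n → F) : ℝ)
          * (Fintype.card ((Fin n → F) × F) : ℝ) * (Fintype.card F : ℝ))
      = ((N:ℝ) * q - (A.card:ℝ) * B.card) / (q ^ (2*n+1) * q) := by
    rw [hcX, hcY, ← hq]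
    have hne : q ≠ 0 := ne_of_gt hq0
    field_simp
    ring
  rw [hrw, abs_div, abs_of_pos (by positivity : (0:ℝ) < q ^ (2*n+1) * q),
    div_le_iff₀ (by positivity : (0:ℝ) < q ^ (2*n+1) * q)]
  refine keyR.trans ?_
  have hsq : Real.sqrt (q ^ (3*n+2)) ≤ q ^ (-(n:ℝ)/4) * q ^ (2*n+1) := by
    have e1 : Real.sqrt (q ^ (3*n+2)) = q ^ (((3*n+2 : ℕ) : ℝ) * (1/2 : ℝ)) := by
      rw [Real.sqrt_eq_rpow, ← Real.rpow_natCast q (3*n+2), ← Real.rpow_mul hq0.le]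
    have e2 : (q : ℝ) ^ (2*n+1) = q ^ (((2*n+1 : ℕ)) : ℝ) := (Real.rpow_natCast q (2*n+1)).symm
    rw [e1, e2, ← Real.rpow_add hq0]
    apply Real.rpow_le_rpow_of_exponent_le hq1
    have hn0 : (0:ℝ) ≤ (n:ℝ) := Nat.cast_nonneg n
    push_cast
    linarith
  calc q * Real.sqrt (q ^ (3*n+2)) ≤ q * (q ^ (-(n:ℝ)/4) * q ^ (2*n+1)) :=
        mul_le_mul_of_nonneg_left hsq hq0.le
    _ = q ^ (-(n:ℝ)/4) * (q ^ (2*n+1) * q) := by ring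
end

section
/- Let F be a finite field and n a positive integer. Define the inner product function IP^F : F^n × F^n → F by IP^F(x, y) = Σ_{i=1}^n x_i · y_i, with arithmetic in F. Then mdisc(IP^F) ≤ |F| · |F|^{-n/4}. -/
open scoped Classical

set_option linter.unusedSectionVars false

namespace MdiscAux

open Finset

variable {F : Type} [Field F] [Fintype F]

private lemma card_fiber_mul {V W : Type*} [AddCommGroup V] [Module F V] [Fintype V]
    [AddCommGroup W] [Module F W] [Fintype W]
    (φ : V →ₗ[F] W) (hφ : Function.Surjective φ) (c : W) :
    (univ.filter fun x => φ x = c).card * Fintype.card W = Fintype.card V := by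
  have key : ∀ c' : W, (univ.filter fun x => φ x = c').card
      = (univ.filter fun x => φ x = c).card := by
    intro c'
    obtain ⟨d, hd⟩ := hφ (c - c')
    apply Finset.card_bij (fun x _ => x + d)
    · intro a ha
      simp only [mem_filter, mem_univ, true_and] at ha ⊢
      rw [map_add, ha, hd]
      abel
    · intro a _ b _ h
      exact add_right_cancel h
    · intro b hb
      simp only [mem_filter, mem_univ, true_and] at hb
      refine ⟨b - d, ?_, by abel⟩
      simp only [mem_filter, mem_univ, true_and, map_sub, hb, hd]
      abel
  calc (univ.filter fun x => φ x = c).card * Fintype.card W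
      = ∑ c' : W, (univ.filter fun x => φ x = c').card := by
        rw [Finset.sum_congr rfl fun c' _ => key c', Finset.sum_const, card_univ,
          smul_eq_mul, mul_comm]
    _ = Fintype.card V := by
        rw [← Finset.card_eq_sum_card_fiberwise (fun x _ => mem_univ (φ x)), card_univ]

private def dotL (n : ℕ) (v : Fin n → F) : (Fin n → F) →ₗ[F] F := ∑ i, v i • LinearMap.proj i

private lemma dotL_apply (n : ℕ) (v x : Fin n → F) : dotL n v x = ∑ i, x i * v i := by
  simp [dotL, mul_comm]

private lemma dotL_surj (n : ℕ) (v : Fin n → F) (hv : v ≠ 0) :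
    Function.Surjective (dotL n v) := by
  obtain ⟨j, hj⟩ : ∃ j, v j ≠ 0 := by
    by_contra h; push_neg at h; exact hv (funext h)
  intro a
  refine ⟨Pi.single j (a / v j), ?_⟩
  rw [dotL_apply, Finset.sum_eq_single j]
  · rw [Pi.single_eq_same, div_mul_cancel₀ _ hj]
  · intro i _ hij; rw [Pi.single_eq_of_ne hij, zero_mul]
  · simp

private lemma dotL_single (n : ℕ) (v : Fin n → F) (i : Fin n) :
    dotL n v (Pi.single i 1) = v i := by
  rw [dotL_apply, Finset.sum_eq_single i]
  · rw [Pi.single_eq_same, one_mul]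
  · intro j _ hj; rw [Pi.single_eq_of_ne hj, zero_mul]
  · simp

private lemma dot2_surj {n : ℕ} {y y' : Fin n → F} (hy : y ≠ 0)
    (hy' : y' ∉ Submodule.span F {y}) :
    Function.Surjective ((dotL n y).prod (dotL n y')) := by
  obtain ⟨u, hu⟩ := dotL_surj n y hy 1
  have hw : ∃ w, dotL n y w = 0 ∧ dotL n y' w ≠ 0 := by
    by_contra h
    push_neg at h
    apply hy'
    have hyy' : ∀ x, dotL n y' x = dotL n y x * dotL n y' u := by
      intro x
      have h1 : dotL n y (x - dotL n y x • u) = 0 := by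
        simp [map_sub, map_smul, hu, smul_eq_mul]
      have h2 := h _ h1
      simp only [map_sub, map_smul, smul_eq_mul] at h2
      linear_combination h2
    refine Submodule.mem_span_singleton.2 ⟨dotL n y' u, ?_⟩
    funext i
    have hi := hyy' (Pi.single i 1)
    rw [dotL_single, dotL_single] at hi
    simp [hi, mul_comm]
  obtain ⟨w, hw0, hw1⟩ := hw
  rintro ⟨a, b⟩
  refine ⟨a • u + ((b - a * dotL n y' u) / dotL n y' w) • w, ?_⟩
  have h1 : dotL n y (a • u + ((b - a * dotL n y' u) / dotL n y' w) • w) = a := by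
    simp [map_add, map_smul, hu, hw0, smul_eq_mul]
  have h2 : dotL n y' (a • u + ((b - a * dotL n y' u) / dotL n y' w) • w) = b := by
    simp only [map_add, map_smul, smul_eq_mul]
    field_simp
    ring
  simp [LinearMap.prod_apply, h1, h2, Prod.ext_iff]

private lemma count1 {n : ℕ} {v : Fin n → F} (hv : v ≠ 0) (c : F) :
    ((univ.filter fun x : Fin n → F => ∑ i, x i * v i = c).card : ℝ)
      = (Fintype.card F : ℝ) ^ n / (Fintype.card F : ℝ) := by
  have h := card_fiber_mul (dotL n v) (dotL_surj n v hv) c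
  simp only [dotL_apply] at h
  have hq : (0:ℝ) < (Fintype.card F : ℝ) := by exact_mod_cast Fintype.card_pos
  rw [eq_div_iff hq.ne']
  have h2 := congrArg (Nat.cast : ℕ → ℝ) h
  push_cast at h2
  rw [h2]
  norm_cast
  rw [Fintype.card_fun, Fintype.card_fin]

private lemma count2 {n : ℕ} {y y' : Fin n → F} (hy : y ≠ 0)
    (hy' : y' ∉ Submodule.span F {y}) (c c' : F) :
    ((univ.filter fun x : Fin n → F => ∑ i, x i * y i = c ∧ ∑ i, x i * y' i = c').card : ℝ)
      = (Fintype.card F : ℝ) ^ n / (Fintype.card F : ℝ) ^ 2 := by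
  have h := card_fiber_mul ((dotL n y).prod (dotL n y')) (dot2_surj hy hy') (c, c')
  simp only [LinearMap.prod_apply, Function.prod, dotL_apply, Prod.mk.injEq] at h
  have hq : (0:ℝ) < (Fintype.card F : ℝ) := by exact_mod_cast Fintype.card_pos
  rw [eq_div_iff (by positivity : ((Fintype.card F : ℝ) ^ 2) ≠ 0)]
  have h2 := congrArg (Nat.cast : ℕ → ℝ) h
  push_cast at h2
  rw [Fintype.card_prod] at h2
  push_cast at h2
  rw [show ((Fintype.card F : ℝ))^2 = (Fintype.card F : ℝ) * (Fintype.card F : ℝ) from sq _, h2]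
  norm_cast
  rw [Fintype.card_fun, Fintype.card_fin]

private lemma card_span_filter {n : ℕ} (B : Finset (Fin n → F)) (y : Fin n → F) :
    (B.filter (fun y' => y' ∈ Submodule.span F {y})).card ≤ Fintype.card F := by
  have hsub : B.filter (fun y' => y' ∈ Submodule.span F {y})
      ⊆ univ.image (fun a : F => a • y) := by
    intro y' hmem
    simp only [mem_filter] at hmem
    obtain ⟨a, ha⟩ := Submodule.mem_span_singleton.1 hmem.2
    exact mem_image.2 ⟨a, mem_univ a, ha⟩
  calc (B.filter (fun y' => y' ∈ Submodule.span F {y})).card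
      ≤ (univ.image (fun a : F => a • y)).card := Finset.card_le_card hsub
    _ ≤ (univ : Finset F).card := Finset.card_image_le
    _ = Fintype.card F := card_univ

/-- The indicator function `e`. -/
private noncomputable def eF (n : ℕ) (z : F) (x y : Fin n → F) : ℝ :=
  if ∑ i, x i * y i = z then 1 else 0

/-- The balanced indicator `g`. -/
private noncomputable def gF (n : ℕ) (z : F) (x y : Fin n → F) : ℝ :=
  eF n z x y - 1 / (Fintype.card F : ℝ)

private lemma sum_eF {n : ℕ} (z : F) {y : Fin n → F} (hy : y ≠ 0) :
    ∑ x : Fin n → F, eF n z x y = (Fintype.card F : ℝ) ^ n / (Fintype.card F : ℝ) := by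
  simp only [eF]
  rw [Finset.sum_boole]
  exact count1 hy z

private lemma sum_eF_mul {n : ℕ} (z : F) {y y' : Fin n → F} (hy : y ≠ 0)
    (hy' : y' ∉ Submodule.span F {y}) :
    ∑ x : Fin n → F, eF n z x y * eF n z x y'
      = (Fintype.card F : ℝ) ^ n / (Fintype.card F : ℝ) ^ 2 := by
  have hprod : ∀ x : Fin n → F, eF n z x y * eF n z x y'
      = if (∑ i, x i * y i = z ∧ ∑ i, x i * y' i = z) then (1:ℝ) else 0 := by
    intro x
    by_cases h1 : ∑ i, x i * y i = z <;> by_cases h2 : ∑ i, x i * y' i = z <;>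
      simp [eF, h1, h2]
  rw [Finset.sum_congr rfl fun x _ => hprod x, Finset.sum_boole]
  exact count2 hy hy' z z

private lemma abs_gF_le_one {n : ℕ} (z : F) (x y : Fin n → F) : |gF n z x y| ≤ 1 := by
  have hq1 : (1:ℝ) ≤ (Fintype.card F : ℝ) := by exact_mod_cast Fintype.card_pos
  have hq0 : (0:ℝ) < (Fintype.card F : ℝ) := lt_of_lt_of_le one_pos hq1
  have h1 : 0 ≤ 1 / (Fintype.card F : ℝ) := by positivity
  have h2 : 1 / (Fintype.card F : ℝ) ≤ 1 := by rw [div_le_one hq0]; linarith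
  simp only [gF, eF]
  split_ifs <;> rw [abs_le] <;> constructor <;> linarith

private lemma sum_gg_eq_zero {n : ℕ} (z : F) {y y' : Fin n → F} (hy : y ≠ 0)
    (hy' : y' ∉ Submodule.span F {y}) :
    ∑ x : Fin n → F, gF n z x y * gF n z x y' = 0 := by
  have hy'0 : y' ≠ 0 := fun h => hy' (h ▸ Submodule.zero_mem _)
  have hq0 : (0:ℝ) < (Fintype.card F : ℝ) := by exact_mod_cast Fintype.card_pos
  have expand : ∀ x : Fin n → F, gF n z x y * gF n z x y'
      = eF n z x y * eF n z x y' - (1 / (Fintype.card F : ℝ)) * eF n z x y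
        - (1 / (Fintype.card F : ℝ)) * eF n z x y' + 1 / (Fintype.card F : ℝ) ^ 2 := by
    intro x; simp only [gF]; ring
  rw [Finset.sum_congr rfl fun x _ => expand x]
  rw [Finset.sum_add_distrib, Finset.sum_sub_distrib, Finset.sum_sub_distrib,
    ← Finset.mul_sum, ← Finset.mul_sum, sum_eF_mul z hy hy', sum_eF z hy, sum_eF z hy'0,
    Finset.sum_const, card_univ, nsmul_eq_mul]
  have hcV : ((Fintype.card (Fin n → F) : ℕ) : ℝ) = (Fintype.card F : ℝ) ^ n := by
    norm_cast
    rw [Fintype.card_fun, Fintype.card_fin]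
  rw [hcV]
  field_simp
  ring

private lemma abs_sum_gg_le {n : ℕ} (z : F) (y y' : Fin n → F) :
    |∑ x : Fin n → F, gF n z x y * gF n z x y'| ≤ (Fintype.card F : ℝ) ^ n := by
  calc |∑ x : Fin n → F, gF n z x y * gF n z x y'|
      ≤ ∑ x : Fin n → F, |gF n z x y * gF n z x y'| := Finset.abs_sum_le_sum_abs _ _
    _ ≤ ∑ _x : Fin n → F, (1:ℝ) := by
        refine Finset.sum_le_sum fun x _ => ?_
        rw [abs_mul]
        exact mul_le_one₀ (abs_gF_le_one z x y) (abs_nonneg _) (abs_gF_le_one z x y')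
    _ = ((Fintype.card (Fin n → F) : ℕ) : ℝ) := by
        rw [Finset.sum_const, card_univ, nsmul_eq_mul, mul_one]
    _ = (Fintype.card F : ℝ) ^ n := by
        norm_cast
        rw [Fintype.card_fun, Fintype.card_fin]

end MdiscAux

open MdiscAux Finset in
theorem stmt2 (F : Type) [Field F] [Fintype F] (n : ℕ) (hn : 0 < n) :
    mdiscLE
      (fun p : (Fin n → F) × (Fin n → F) => ∑ i, p.1 i * p.2 i)
      ((Fintype.card F : ℝ) * (Fintype.card F : ℝ) ^ (-(n : ℝ) / 4)) := by
  intro A B z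
  have hq1 : (1:ℝ) < (Fintype.card F : ℝ) := by exact_mod_cast Fintype.one_lt_card
  have hq0 : (0:ℝ) < (Fintype.card F : ℝ) := lt_trans one_pos hq1
  set q : ℝ := (Fintype.card F : ℝ) with hq_def
  have hcV : ((Fintype.card (Fin n → F) : ℕ) : ℝ) = q ^ n := by
    rw [hq_def]; norm_cast; rw [Fintype.card_fun, Fintype.card_fin]
  have hcB : ((B.card : ℕ) : ℝ) ≤ q ^ n := by
    rw [← hcV]; exact_mod_cast Finset.card_le_univ B
  have hcA : ((A.card : ℕ) : ℝ) ≤ q ^ n := by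
    rw [← hcV]; exact_mod_cast Finset.card_le_univ A
  -- the deviation D
  set D : ℝ := ∑ x ∈ A, ∑ y ∈ B, gF n z x y with hD_def
  -- Step 1: Cauchy-Schwarz
  have hCS : D ^ 2 ≤ q ^ n * ∑ x : Fin n → F, (∑ y ∈ B, gF n z x y) ^ 2 := by
    have h1 : D ^ 2 ≤ (A.card : ℝ) * ∑ x ∈ A, (∑ y ∈ B, gF n z x y) ^ 2 := by
      rw [hD_def]
      exact sq_sum_le_card_mul_sum_sq
    have h2 : ∑ x ∈ A, (∑ y ∈ B, gF n z x y) ^ 2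
        ≤ ∑ x : Fin n → F, (∑ y ∈ B, gF n z x y) ^ 2 :=
      Finset.sum_le_sum_of_subset_of_nonneg (Finset.subset_univ A)
        (fun x _ _ => sq_nonneg _)
    calc D ^ 2 ≤ (A.card : ℝ) * ∑ x ∈ A, (∑ y ∈ B, gF n z x y) ^ 2 := h1
      _ ≤ q ^ n * ∑ x : Fin n → F, (∑ y ∈ B, gF n z x y) ^ 2 := by
          apply mul_le_mul hcA h2 ?_ (by positivity)
          exact Finset.sum_nonneg fun x _ => sq_nonneg _
  -- Step 2: bound the second moment T
  have hT : ∑ x : Fin n → F, (∑ y ∈ B, gF n z x y) ^ 2 ≤ q ^ (2*n+2) := by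
    have hswap : ∑ x : Fin n → F, (∑ y ∈ B, gF n z x y) ^ 2
        = ∑ y ∈ B, ∑ y' ∈ B, ∑ x : Fin n → F, gF n z x y * gF n z x y' := by
      have h1 : ∀ x : Fin n → F, (∑ y ∈ B, gF n z x y) ^ 2
          = ∑ y ∈ B, ∑ y' ∈ B, gF n z x y * gF n z x y' := by
        intro x; rw [sq, Finset.sum_mul_sum]
      rw [Finset.sum_congr rfl fun x _ => h1 x, Finset.sum_comm]
      exact Finset.sum_congr rfl fun y _ => Finset.sum_comm
    rw [hswap]
    have hinner : ∀ y ∈ B, ∑ y' ∈ B, ∑ x : Fin n → F, gF n z x y * gF n z x y'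
        ≤ if y = 0 then q ^ (2*n) else q ^ (n+1) := by
      intro y _
      by_cases hy : y = 0
      · rw [if_pos hy]
        calc ∑ y' ∈ B, ∑ x : Fin n → F, gF n z x y * gF n z x y'
            ≤ ∑ y' ∈ B, q ^ n := Finset.sum_le_sum fun y' _ =>
              (le_abs_self _).trans (abs_sum_gg_le z y y')
          _ = (B.card : ℝ) * q ^ n := by rw [Finset.sum_const, nsmul_eq_mul]
          _ ≤ q ^ n * q ^ n := by
              apply mul_le_mul_of_nonneg_right hcB (by positivity)
          _ = q ^ (2*n) := by rw [← pow_add]; ring_nf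
      · rw [if_neg hy]
        rw [← Finset.sum_filter_add_sum_filter_not B
          (fun y' => y' ∈ Submodule.span F {y})]
        have hzero : ∑ y' ∈ B.filter (fun y' => ¬ y' ∈ Submodule.span F {y}),
            ∑ x : Fin n → F, gF n z x y * gF n z x y' = 0 := by
          apply Finset.sum_eq_zero
          intro y' hy'
          simp only [mem_filter] at hy'
          exact sum_gg_eq_zero z hy hy'.2
        rw [hzero, add_zero]
        calc ∑ y' ∈ B.filter (fun y' => y' ∈ Submodule.span F {y}),
              ∑ x : Fin n → F, gF n z x y * gF n z x y'
            ≤ ∑ y' ∈ B.filter (fun y' => y' ∈ Submodule.span F {y}), q ^ n :=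
              Finset.sum_le_sum fun y' _ =>
                (le_abs_self _).trans (abs_sum_gg_le z y y')
          _ = ((B.filter (fun y' => y' ∈ Submodule.span F {y})).card : ℝ) * q ^ n := by
              rw [Finset.sum_const, nsmul_eq_mul]
          _ ≤ q * q ^ n := by
              apply mul_le_mul_of_nonneg_right _ (by positivity)
              rw [hq_def]
              exact_mod_cast card_span_filter B y
          _ = q ^ (n+1) := by rw [pow_succ]; ring
    calc ∑ y ∈ B, ∑ y' ∈ B, ∑ x : Fin n → F, gF n z x y * gF n z x y'
        ≤ ∑ y ∈ B, (if y = 0 then q ^ (2*n) else q ^ (n+1)) := Finset.sum_le_sum hinner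
      _ ≤ ∑ y ∈ B, (q ^ (2*n) * (if y = 0 then (1:ℝ) else 0) + q ^ (n+1)) := by
          refine Finset.sum_le_sum fun y _ => ?_
          by_cases hy : y = 0 <;> simp [hy] <;> positivity
      _ = q ^ (2*n) * (∑ y ∈ B, if y = 0 then (1:ℝ) else 0) + (B.card : ℝ) * q ^ (n+1) := by
          rw [Finset.sum_add_distrib, ← Finset.mul_sum, Finset.sum_const, nsmul_eq_mul]
      _ ≤ q ^ (2*n) * 1 + q ^ n * q ^ (n+1) := by
          have h01 : (∑ y ∈ B, if y = 0 then (1:ℝ) else 0) ≤ 1 := by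
            rw [Finset.sum_ite_eq' B 0 (fun _ => (1:ℝ))]
            split_ifs <;> norm_num
          have hnn : (0:ℝ) ≤ ∑ y ∈ B, if y = 0 then (1:ℝ) else 0 :=
            Finset.sum_nonneg fun y _ => by positivity
          gcongr
      _ ≤ q ^ (2*n+2) := by
          have hq2 : (2:ℝ) ≤ q := by
            rw [hq_def]; exact_mod_cast Fintype.one_lt_card
          have h1q : (1:ℝ) + q ≤ q ^ 2 := by nlinarith
          have : q ^ (2*n) * 1 + q ^ n * q ^ (n+1) = q ^ (2*n) * (1 + q) := by
            rw [← pow_add]; ring_nf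
          rw [this, show 2*n+2 = 2*n + 2 from rfl, pow_add]
          exact mul_le_mul_of_nonneg_left h1q (by positivity)
  -- combine: D^2 ≤ q^(3n+2)
  have hD2 : D ^ 2 ≤ q ^ (3*n+2) := by
    calc D ^ 2 ≤ q ^ n * ∑ x : Fin n → F, (∑ y ∈ B, gF n z x y) ^ 2 := hCS
      _ ≤ q ^ n * q ^ (2*n+2) := mul_le_mul_of_nonneg_left hT (by positivity)
      _ = q ^ (3*n+2) := by rw [← pow_add]; ring_nf
  -- the bound R
  set R : ℝ := q ^ n * q ^ n * (q * q ^ (-(n:ℝ) / 4)) with hR_def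
  have hR0 : 0 ≤ R := by rw [hR_def]; positivity
  have hR_rpow : R = q ^ ((n:ℝ) + (n:ℝ) + (1 + (-(n:ℝ) / 4))) := by
    rw [Real.rpow_add hq0, Real.rpow_add hq0, Real.rpow_add hq0, Real.rpow_one,
      Real.rpow_natCast]
  have hD2R : D ^ 2 ≤ R ^ 2 := by
    have hq3 : q ^ (3*n+2) = q ^ (((3*n+2 : ℕ) : ℝ)) := by
      rw [Real.rpow_natCast]
    have hR2 : R ^ 2 = q ^ (((n:ℝ) + (n:ℝ) + (1 + (-(n:ℝ) / 4)))
        + ((n:ℝ) + (n:ℝ) + (1 + (-(n:ℝ) / 4)))) := by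
      rw [hR_rpow, sq, ← Real.rpow_add hq0]
    rw [hR2]
    refine hD2.trans ?_
    rw [hq3]
    rw [Real.rpow_le_rpow_left_iff hq1]
    push_cast
    linarith
  have hDR : |D| ≤ R := by
    have h := Real.sqrt_le_sqrt hD2R
    rwa [Real.sqrt_sq_eq_abs, Real.sqrt_sq hR0] at h
  -- rewrite the goal
  have hN : ((((A ×ˢ B).filter
      (fun p : (Fin n → F) × (Fin n → F) => ∑ i, p.1 i * p.2 i = z)).card : ℕ) : ℝ)
      = ∑ x ∈ A, ∑ y ∈ B, eF n z x y := by
    rw [Finset.card_filter]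
    push_cast
    rw [Finset.sum_product]
    simp [eF]
  have hD_eq : D = (∑ x ∈ A, ∑ y ∈ B, eF n z x y) - (A.card : ℝ) * (B.card : ℝ) / q := by
    rw [hD_def]
    simp only [gF]
    calc ∑ x ∈ A, ∑ y ∈ B, (eF n z x y - 1 / q)
        = ∑ x ∈ A, ((∑ y ∈ B, eF n z x y) - (B.card : ℝ) * (1 / q)) :=
          Finset.sum_congr rfl fun x _ => by
            rw [Finset.sum_sub_distrib, Finset.sum_const, nsmul_eq_mul]
      _ = (∑ x ∈ A, ∑ y ∈ B, eF n z x y) - (A.card : ℝ) * ((B.card : ℝ) * (1 / q)) := by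
          rw [Finset.sum_sub_distrib, Finset.sum_const, nsmul_eq_mul]
      _ = (∑ x ∈ A, ∑ y ∈ B, eF n z x y) - (A.card : ℝ) * (B.card : ℝ) / q := by ring
  -- final assembly
  have hQQ : (0:ℝ) < q ^ n * q ^ n := by positivity
  rw [hcV]
  have hgoal_eq : ((((A ×ˢ B).filter
      (fun p : (Fin n → F) × (Fin n → F) => ∑ i, p.1 i * p.2 i = z)).card : ℕ) : ℝ)
        / (q ^ n * q ^ n)
      - (A.card : ℝ) * (B.card : ℝ) / (q ^ n * q ^ n * q) = D / (q ^ n * q ^ n) := by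
    rw [hN, hD_eq]
    field_simp
  rw [hgoal_eq, abs_div, abs_of_pos hQQ, div_le_iff₀ hQQ]
  calc |D| ≤ R := hDR
    _ = q * q ^ (-(n:ℝ) / 4) * (q ^ n * q ^ n) := by rw [hR_def]; ring
end

section
/- Let X, Y be finite nonempty sets, f : X × Y → {0,1}, and let ν be a probability distribution on X × Y. Let b > 0 be a real number and assume that for every rectangle R in X × Y with ν(R) ≥ 2^{-b} one has ν(R ∩ f⁻¹(1)) ≤ (3/4)·ν(R). Then for every positive integer k ≤ b, every rectangle R in X^k × Y^k with ν^k(R) ≥ 2^{-b/2}, and every c ∈ {0,1}^k with at least k/3 coordinates equal to 1, the following holds: ν^k({((x₁,…,x_k),(y₁,…,y_k)) ∈ R : f(x_i, y_i) = c_i for all i}) ≤ ((3/4)^{k/3} + k·2^{-b/2}) · ν^k(R). -/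
open scoped Classical
set_option maxHeartbeats 1000000

lemma sum_filter_product_eq {α β : Type*} [Fintype α] [Fintype β]
    (A : Finset α) (B : Finset β) (P : α × β → Prop) [DecidablePred P] (g : α × β → ℝ) :
    ∑ p ∈ (A ×ˢ B).filter P, g p
      = ∑ a : α, ∑ b : β, if a ∈ A ∧ b ∈ B ∧ P (a, b) then g (a, b) else 0 := by
  symm
  calc ∑ a : α, ∑ b : β, (if a ∈ A ∧ b ∈ B ∧ P (a,b) then g (a,b) else 0)
      = ∑ a : α, (if a ∈ A then ∑ b : β, (if b ∈ B ∧ P (a,b) then g (a,b) else 0) else 0) := by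
        refine Finset.sum_congr rfl fun a _ => ?_
        by_cases ha : a ∈ A <;> simp [ha]
    _ = ∑ a ∈ A, ∑ b : β, (if b ∈ B ∧ P (a,b) then g (a,b) else 0) := by
        rw [Finset.sum_ite_mem, Finset.univ_inter]
    _ = ∑ a ∈ A, ∑ b ∈ B, (if P (a,b) then g (a,b) else 0) := by
        refine Finset.sum_congr rfl fun a _ => ?_
        calc ∑ b : β, (if b ∈ B ∧ P (a,b) then g (a,b) else 0)
            = ∑ b : β, (if b ∈ B then (if P (a,b) then g (a,b) else 0) else 0) := by
              refine Finset.sum_congr rfl fun b _ => ?_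
              by_cases hb : b ∈ B <;> simp [hb]
          _ = ∑ b ∈ B, (if P (a,b) then g (a,b) else 0) := by
              rw [Finset.sum_ite_mem, Finset.univ_inter]
    _ = ∑ p ∈ (A ×ˢ B).filter P, g p := by rw [Finset.sum_filter, Finset.sum_product]

lemma prod_split {k : ℕ} (i : Fin k) (g : Fin k → ℝ) :
    ∏ t, g t = g i * ∏ j : {j : Fin k // j ≠ i}, g j := by
  rw [← Finset.mul_prod_erase Finset.univ g (Finset.mem_univ i)]
  congr 1
  exact Finset.prod_subtype (Finset.univ.erase i) (fun j => by simp [Finset.mem_erase]) g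

lemma splitAt_symm_same {α β : Type*} [DecidableEq α] (i : α) (a : β) (g : {j // j ≠ i} → β) :
    (Equiv.funSplitAt i β).symm (a, g) i = a := by
  simp [Equiv.funSplitAt, Equiv.piSplitAt]

lemma splitAt_symm_ne {α β : Type*} [DecidableEq α] (i : α) (a : β) (g : {j // j ≠ i} → β)
    (j : α) (hj : j ≠ i) :
    (Equiv.funSplitAt i β).symm (a, g) j = g ⟨j, hj⟩ := by
  simp [Equiv.funSplitAt, Equiv.piSplitAt, hj]

lemma sum_prod_one {ι X Y : Type*} [Fintype ι] [Fintype X] [Fintype Y]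
    (ν : X × Y → ℝ) (hν1 : ∑ p, ν p = 1) :
    ∑ x : ι → X, ∑ y : ι → Y, ∏ j : ι, ν (x j, y j) = 1 := by
  have h1 : (∑ x : ι → X, ∑ y : ι → Y, ∏ j, ν (x j, y j))
      = ∑ q : (ι → X) × (ι → Y), ∏ j, ν (q.1 j, q.2 j) :=
    (Fintype.sum_prod_type (f := fun q : (ι → X) × (ι → Y) => ∏ j, ν (q.1 j, q.2 j))).symm
  rw [h1,
    ← Fintype.sum_equiv (Equiv.arrowProdEquivProdArrow ι (fun _ => X) (fun _ => Y))
      (fun z => ∏ j, ν (z j)) (fun q => ∏ j, ν (q.1 j, q.2 j)) (fun z => by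
        simp [Equiv.arrowProdEquivProdArrow]),
    ← Fintype.piFinset_univ, ← Finset.prod_univ_sum]
  simp [hν1]

lemma key_step {X Y : Type} [Fintype X] [Fintype Y]
    (f : X × Y → Bool) (ν : X × Y → ℝ)
    (hν0 : ∀ p, 0 ≤ ν p) (hν1 : ∑ p, ν p = 1)
    (b : ℝ)
    (hrect : ∀ (A : Finset X) (B : Finset Y),
      (2 : ℝ) ^ (-b) ≤ ∑ p ∈ A ×ˢ B, ν p →
      ∑ p ∈ (A ×ˢ B).filter (fun p => f p = true), ν p ≤ (3 / 4) * ∑ p ∈ A ×ˢ B, ν p)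
    {k : ℕ} (A : Finset (Fin k → X)) (B : Finset (Fin k → Y))
    (S : Finset (Fin k)) (i : Fin k) (hi : i ∉ S) :
    ∑ p ∈ (A ×ˢ B).filter (fun p => ∀ j ∈ insert i S, f (p.1 j, p.2 j) = true),
        ∏ t, ν (p.1 t, p.2 t)
      ≤ 3 / 4 * (∑ p ∈ (A ×ˢ B).filter (fun p => ∀ j ∈ S, f (p.1 j, p.2 j) = true),
          ∏ t, ν (p.1 t, p.2 t)) + (2:ℝ) ^ (-b) := by
  classical
  let I := {j : Fin k // j ≠ i}
  let sx : X → (I → X) → (Fin k → X) := fun a x' => (Equiv.funSplitAt i X).symm (a, x')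
  let sy : Y → (I → Y) → (Fin k → Y) := fun bb y' => (Equiv.funSplitAt i Y).symm (bb, y')
  have hsx_i : ∀ a x', sx a x' i = a := fun a x' => splitAt_symm_same i a x'
  have hsy_i : ∀ a y', sy a y' i = a := fun a y' => splitAt_symm_same i a y'
  have hsx_ne : ∀ a x' (j : Fin k) (hj : j ≠ i), sx a x' j = x' ⟨j, hj⟩ :=
    fun a x' j hj => splitAt_symm_ne i a x' j hj
  have hsy_ne : ∀ a y' (j : Fin k) (hj : j ≠ i), sy a y' j = y' ⟨j, hj⟩ :=
    fun a y' j hj => splitAt_symm_ne i a y' j hj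
  have hprod : ∀ a x' bb y',
      (∏ t, ν ((sx a x') t, (sy bb y') t)) = ν (a, bb) * ∏ j : I, ν (x' j, y' j) := by
    intro a x' bb y'
    rw [prod_split i]
    rw [hsx_i, hsy_i]
    congr 1
    refine Finset.prod_congr rfl fun j _ => ?_
    rw [hsx_ne a x' j.1 j.2, hsy_ne bb y' j.1 j.2]
  -- main re-expression
  have main : ∀ (P : (Fin k → X) × (Fin k → Y) → Prop), ∀ (_ : DecidablePred P),
      ∑ p ∈ (A ×ˢ B).filter P, ∏ t, ν (p.1 t, p.2 t)
        = ∑ x' : I → X, ∑ y' : I → Y, ∑ a : X, ∑ bb : Y,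
            (if sx a x' ∈ A ∧ sy bb y' ∈ B ∧ P (sx a x', sy bb y')
              then ν (a, bb) * ∏ j : I, ν (x' j, y' j) else 0) := by
    intro P _
    rw [sum_filter_product_eq]
    let T : (Fin k → X) → (Fin k → Y) → ℝ := fun x y =>
      if x ∈ A ∧ y ∈ B ∧ P (x, y) then ∏ t, ν (x t, y t) else 0
    have step1 : ∀ x : Fin k → X,
        (∑ y : Fin k → Y, T x y) = ∑ bb : Y, ∑ y' : I → Y, T x (sy bb y') := by
      intro x
      rw [← Equiv.sum_comp (Equiv.funSplitAt i Y).symm (fun y => T x y),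
        Fintype.sum_prod_type]
    have step2 : (∑ x : Fin k → X, ∑ y : Fin k → Y, T x y)
        = ∑ a : X, ∑ x' : I → X, ∑ bb : Y, ∑ y' : I → Y, T (sx a x') (sy bb y') := by
      rw [← Equiv.sum_comp (Equiv.funSplitAt i X).symm
        (fun x => ∑ y : Fin k → Y, T x y), Fintype.sum_prod_type]
      exact Finset.sum_congr rfl fun a _ => Finset.sum_congr rfl fun x' _ => step1 _
    trans (∑ x : Fin k → X, ∑ y : Fin k → Y, T x y)
    · exact Finset.sum_congr rfl fun a _ => Finset.sum_congr rfl fun bb _ => by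
        simp only [T]
    rw [step2]
    have comm1 : (∑ a : X, ∑ x' : I → X, ∑ bb : Y, ∑ y' : I → Y, T (sx a x') (sy bb y'))
        = ∑ x' : I → X, ∑ y' : I → Y, ∑ a : X, ∑ bb : Y, T (sx a x') (sy bb y') := by
      rw [show (∑ a : X, ∑ x' : I → X, ∑ bb : Y, ∑ y' : I → Y, T (sx a x') (sy bb y'))
          = ∑ x' : I → X, ∑ a : X, ∑ bb : Y, ∑ y' : I → Y, T (sx a x') (sy bb y')
        from Finset.sum_comm]
      refine Finset.sum_congr rfl fun x' _ => ?_
      rw [show (∑ a : X, ∑ bb : Y, ∑ y' : I → Y, T (sx a x') (sy bb y'))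
          = ∑ a : X, ∑ y' : I → Y, ∑ bb : Y, T (sx a x') (sy bb y')
        from Finset.sum_congr rfl fun a _ => Finset.sum_comm]
      exact Finset.sum_comm
    rw [comm1]
    refine Finset.sum_congr rfl fun x' _ => Finset.sum_congr rfl fun y' _ =>
      Finset.sum_congr rfl fun a _ => Finset.sum_congr rfl fun bb _ => ?_
    simp only [T]
    rw [hprod a x' bb y']
  -- slice sets
  let A' : (I → X) → Finset X := fun x' => Finset.univ.filter (fun a => sx a x' ∈ A)
  let B' : (I → Y) → Finset Y := fun y' => Finset.univ.filter (fun bb => sy bb y' ∈ B)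
  let D : (I → X) → (I → Y) → Prop := fun x' y' =>
    ∀ j : I, (j : Fin k) ∈ S → f (x' j, y' j) = true
  have hC0 : ∀ (x' : I → X) (y' : I → Y), (0:ℝ) ≤ ∏ j : I, ν (x' j, y' j) :=
    fun x' y' => Finset.prod_nonneg fun j _ => hν0 _
  have hP0 : ∀ a x' bb y',
      ((∀ j ∈ S, f ((sx a x') j, (sy bb y') j) = true) ↔ D x' y') := by
    intro a x' bb y'
    constructor
    · intro h j hj
      have hne : (j : Fin k) ≠ i := j.2
      have := h j.1 hj
      rwa [hsx_ne a x' j.1 hne, hsy_ne bb y' j.1 hne, Subtype.coe_eta] at this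
    · intro h j hj
      have hne : j ≠ i := fun hji => hi (hji ▸ hj)
      rw [hsx_ne a x' j hne, hsy_ne bb y' j hne]
      exact h ⟨j, hne⟩ hj
  have hP1 : ∀ a x' bb y',
      ((∀ j ∈ insert i S, f ((sx a x') j, (sy bb y') j) = true)
        ↔ (f (a, bb) = true ∧ D x' y')) := by
    intro a x' bb y'
    constructor
    · intro h
      refine ⟨?_, (hP0 a x' bb y').1 fun j hj => h j (Finset.mem_insert_of_mem hj)⟩
      have := h i (Finset.mem_insert_self i S)
      rwa [hsx_i, hsy_i] at this
    · rintro ⟨h1, h2⟩ j hj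
      rcases Finset.mem_insert.1 hj with rfl | hj
      · rwa [hsx_i, hsy_i]
      · exact (hP0 a x' bb y').2 h2 j hj
  -- converting inner double sums to slice-rectangle sums
  have conv : ∀ (x' : I → X) (y' : I → Y) (Q : X × Y → Prop) (_ : DecidablePred Q)
      (P : (Fin k → X) × (Fin k → Y) → Prop) (_ : DecidablePred P),
      (∀ a bb, P (sx a x', sy bb y') ↔ Q (a, bb)) →
      (∑ a : X, ∑ bb : Y, (if sx a x' ∈ A ∧ sy bb y' ∈ B ∧ P (sx a x', sy bb y')
          then ν (a, bb) * (∏ j : I, ν (x' j, y' j)) else 0))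
        = (∑ p ∈ (A' x' ×ˢ B' y').filter Q, ν p) * (∏ j : I, ν (x' j, y' j)) := by
    intro x' y' Q _ P _ hPQ
    rw [Finset.sum_mul, sum_filter_product_eq (A' x') (B' y') Q (fun p => ν p * (∏ j : I, ν (x' j, y' j)))]
    refine Finset.sum_congr rfl fun a _ => Finset.sum_congr rfl fun bb _ => ?_
    refine if_congr ?_ rfl rfl
    simp only [A', B', Finset.mem_filter, Finset.mem_univ, true_and]
    exact and_congr_right fun _ => and_congr_right fun _ => hPQ a bb
  -- the slice bound
  have slicebound : ∀ (x' : I → X) (y' : I → Y),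
      (∑ p ∈ (A' x' ×ˢ B' y').filter (fun p => f p = true ∧ D x' y'), ν p)
        ≤ 3 / 4 * (∑ p ∈ (A' x' ×ˢ B' y').filter (fun _ => D x' y'), ν p) + (2:ℝ) ^ (-b) := by
    intro x' y'
    have h2b : (0:ℝ) < (2:ℝ) ^ (-b) := Real.rpow_pos_of_pos (by norm_num) _
    by_cases hD : D x' y'
    · have h1 : (A' x' ×ˢ B' y').filter (fun p => f p = true ∧ D x' y')
          = (A' x' ×ˢ B' y').filter (fun p => f p = true) :=
        Finset.filter_congr fun p _ => and_iff_left hD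
      have h2 : (A' x' ×ˢ B' y').filter (fun _ => D x' y') = A' x' ×ˢ B' y' :=
        Finset.filter_true_of_mem (fun _ _ => hD)
      rw [h1, h2]
      by_cases hm : (2:ℝ) ^ (-b) ≤ ∑ p ∈ A' x' ×ˢ B' y', ν p
      · linarith [hrect (A' x') (B' y') hm]
      · have hm0 : (0:ℝ) ≤ ∑ p ∈ A' x' ×ˢ B' y', ν p :=
          Finset.sum_nonneg fun p _ => hν0 p
        have hsub : (∑ p ∈ (A' x' ×ˢ B' y').filter (fun p => f p = true), ν p)
            ≤ ∑ p ∈ A' x' ×ˢ B' y', ν p :=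
          Finset.sum_le_sum_of_subset_of_nonneg (Finset.filter_subset _ _)
            (fun p _ _ => hν0 p)
        linarith
    · have h1 : (A' x' ×ˢ B' y').filter (fun p => f p = true ∧ D x' y') = ∅ := by
        simp [hD]
      have h2 : (A' x' ×ˢ B' y').filter (fun _ => D x' y') = ∅ := by
        simp [hD]
      rw [h1, h2]
      simp
      positivity
  -- put it together
  rw [main (fun p => ∀ j ∈ insert i S, f (p.1 j, p.2 j) = true) inferInstance,
    main (fun p => ∀ j ∈ S, f (p.1 j, p.2 j) = true) inferInstance]
  have e1 : ∀ x' y',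
      (∑ a : X, ∑ bb : Y, (if sx a x' ∈ A ∧ sy bb y' ∈ B ∧
          (∀ j ∈ insert i S, f ((sx a x') j, (sy bb y') j) = true)
        then ν (a, bb) * (∏ j : I, ν (x' j, y' j)) else 0))
      = (∑ p ∈ (A' x' ×ˢ B' y').filter (fun p => f p = true ∧ D x' y'), ν p) * (∏ j : I, ν (x' j, y' j)) :=
    fun x' y' => conv x' y' (fun p => f p = true ∧ D x' y') inferInstance
      (fun p => ∀ j ∈ insert i S, f (p.1 j, p.2 j) = true) inferInstance
      (fun a bb => hP1 a x' bb y')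
  have e0 : ∀ x' y',
      (∑ a : X, ∑ bb : Y, (if sx a x' ∈ A ∧ sy bb y' ∈ B ∧
          (∀ j ∈ S, f ((sx a x') j, (sy bb y') j) = true)
        then ν (a, bb) * (∏ j : I, ν (x' j, y' j)) else 0))
      = (∑ p ∈ (A' x' ×ˢ B' y').filter (fun _ => D x' y'), ν p) * (∏ j : I, ν (x' j, y' j)) :=
    fun x' y' => conv x' y' (fun _ => D x' y') inferInstance
      (fun p => ∀ j ∈ S, f (p.1 j, p.2 j) = true) inferInstance
      (fun a bb => hP0 a x' bb y')
  have distrib : ∀ (F G : (I → X) → (I → Y) → ℝ),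
      (∑ x' : I → X, ∑ y' : I → Y, (3 / 4 * F x' y' + (2:ℝ) ^ (-b) * G x' y'))
        = 3 / 4 * (∑ x' : I → X, ∑ y' : I → Y, F x' y')
          + (2:ℝ) ^ (-b) * (∑ x' : I → X, ∑ y' : I → Y, G x' y') := by
    intro F G
    rw [Finset.mul_sum, Finset.mul_sum, ← Finset.sum_add_distrib]
    exact Finset.sum_congr rfl fun x' _ => by
      rw [Finset.mul_sum, Finset.mul_sum, ← Finset.sum_add_distrib]
  calc (∑ x' : I → X, ∑ y' : I → Y, ∑ a : X, ∑ bb : Y,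
          (if sx a x' ∈ A ∧ sy bb y' ∈ B ∧
              (∀ j ∈ insert i S, f ((sx a x') j, (sy bb y') j) = true)
            then ν (a, bb) * (∏ j : I, ν (x' j, y' j)) else 0))
      ≤ ∑ x' : I → X, ∑ y' : I → Y,
          (3 / 4 * ((∑ p ∈ (A' x' ×ˢ B' y').filter (fun _ => D x' y'), ν p) * (∏ j : I, ν (x' j, y' j)))
            + (2:ℝ) ^ (-b) * (∏ j : I, ν (x' j, y' j))) := by
        refine Finset.sum_le_sum fun x' _ => Finset.sum_le_sum fun y' _ => ?_
        rw [e1 x' y']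
        have := mul_le_mul_of_nonneg_right (slicebound x' y') (hC0 x' y')
        calc (∑ p ∈ (A' x' ×ˢ B' y').filter (fun p => f p = true ∧ D x' y'), ν p) * (∏ j : I, ν (x' j, y' j))
            ≤ (3 / 4 * (∑ p ∈ (A' x' ×ˢ B' y').filter (fun _ => D x' y'), ν p)
                + (2:ℝ) ^ (-b)) * (∏ j : I, ν (x' j, y' j)) := this
          _ = 3 / 4 * ((∑ p ∈ (A' x' ×ˢ B' y').filter (fun _ => D x' y'), ν p) * (∏ j : I, ν (x' j, y' j)))
                + (2:ℝ) ^ (-b) * (∏ j : I, ν (x' j, y' j)) := by ring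
    _ = 3 / 4 * (∑ x' : I → X, ∑ y' : I → Y,
            (∑ p ∈ (A' x' ×ˢ B' y').filter (fun _ => D x' y'), ν p) * (∏ j : I, ν (x' j, y' j)))
          + (2:ℝ) ^ (-b) * (∑ x' : I → X, ∑ y' : I → Y, (∏ j : I, ν (x' j, y' j))) :=
        distrib _ _
    _ = 3 / 4 * (∑ x' : I → X, ∑ y' : I → Y, ∑ a : X, ∑ bb : Y,
            (if sx a x' ∈ A ∧ sy bb y' ∈ B ∧
                (∀ j ∈ S, f ((sx a x') j, (sy bb y') j) = true)
              then ν (a, bb) * (∏ j : I, ν (x' j, y' j)) else 0))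
          + (2:ℝ) ^ (-b) := by
        have hCsum : (∑ x' : I → X, ∑ y' : I → Y, (∏ j : I, ν (x' j, y' j))) = 1 := by
          rw [← Fintype.sum_prod_type']
          rw [← Fintype.sum_equiv (Equiv.arrowProdEquivProdArrow I (fun _ => X) (fun _ => Y))
            (fun z => ∏ j, ν (z j)) (fun q => ∏ j, ν (q.1 j, q.2 j)) (fun z => by
              simp [Equiv.arrowProdEquivProdArrow]),
            ← Fintype.piFinset_univ, ← Finset.prod_univ_sum]
          simp [hν1]
        rw [hCsum, mul_one]
        congr 1
        congr 1
        exact Finset.sum_congr rfl fun x' _ => Finset.sum_congr rfl fun y' _ => (e0 x' y').symm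

theorem stmt3 (X Y : Type) [Fintype X] [Fintype Y] [Nonempty X] [Nonempty Y]
    (f : X × Y → Bool) (ν : X × Y → ℝ)
    (hν0 : ∀ p, 0 ≤ ν p) (hν1 : ∑ p, ν p = 1)
    (b : ℝ) (hb : 0 < b)
    -- every rectangle of ν-measure at least 2^{-b} has at most a 3/4 fraction of 1-inputs
    (hrect : ∀ (A : Finset X) (B : Finset Y),
      (2 : ℝ) ^ (-b) ≤ ∑ p ∈ A ×ˢ B, ν p →
      ∑ p ∈ (A ×ˢ B).filter (fun p => f p = true), ν p ≤ (3 / 4) * ∑ p ∈ A ×ˢ B, ν p)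
    (k : ℕ) (hk : 0 < k) (hkb : (k : ℝ) ≤ b)
    (A : Finset (Fin k → X)) (B : Finset (Fin k → Y))
    -- the rectangle A × B has ν^k-measure at least 2^{-b/2}
    (hAB : (2 : ℝ) ^ (-b / 2) ≤ ∑ p ∈ A ×ˢ B, ∏ t, ν (p.1 t, p.2 t))
    (c : Fin k → Bool)
    -- at least k/3 coordinates of c equal 1
    (hc : (k : ℝ) / 3 ≤ ((Finset.univ.filter (fun i => c i = true)).card : ℝ)) :
    ∑ p ∈ (A ×ˢ B).filter (fun p => ∀ i, f (p.1 i, p.2 i) = c i), ∏ t, ν (p.1 t, p.2 t)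
      ≤ ((3 / 4 : ℝ) ^ ((k : ℝ) / 3) + (k : ℝ) * (2 : ℝ) ^ (-b / 2)) *
          ∑ p ∈ A ×ˢ B, ∏ t, ν (p.1 t, p.2 t) := by
  classical
  set M := ∑ p ∈ A ×ˢ B, ∏ t, ν (p.1 t, p.2 t) with hM
  have h2b2 : (0:ℝ) < (2:ℝ) ^ (-b / 2) := Real.rpow_pos_of_pos (by norm_num) _
  have h2b : (0:ℝ) < (2:ℝ) ^ (-b) := Real.rpow_pos_of_pos (by norm_num) _
  have hM0 : (0:ℝ) ≤ M := le_trans h2b2.le hAB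
  have hind : ∀ S : Finset (Fin k),
      (∑ p ∈ (A ×ˢ B).filter (fun p => ∀ j ∈ S, f (p.1 j, p.2 j) = true),
          ∏ t, ν (p.1 t, p.2 t))
        ≤ (3/4:ℝ) ^ (S.card) * M + (S.card : ℝ) * (2:ℝ) ^ (-b) := by
    intro S
    induction S using Finset.induction_on with
    | empty =>
        have he : (A ×ˢ B).filter
            (fun p => ∀ j ∈ (∅ : Finset (Fin k)), f (p.1 j, p.2 j) = true) = A ×ˢ B :=
          Finset.filter_true_of_mem (fun _ _ => by simp)
        rw [he]
        simp [hM]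
    | @insert i S hi ih =>
        have hkey := key_step f ν hν0 hν1 b hrect A B S i hi
        have hpown : (0:ℝ) ≤ (3/4:ℝ) ^ S.card := by positivity
        calc (∑ p ∈ (A ×ˢ B).filter
                (fun p => ∀ j ∈ insert i S, f (p.1 j, p.2 j) = true),
                ∏ t, ν (p.1 t, p.2 t))
            ≤ 3 / 4 * (∑ p ∈ (A ×ˢ B).filter
                (fun p => ∀ j ∈ S, f (p.1 j, p.2 j) = true),
                ∏ t, ν (p.1 t, p.2 t)) + (2:ℝ) ^ (-b) := hkey
          _ ≤ 3 / 4 * ((3/4:ℝ) ^ S.card * M + (S.card : ℝ) * (2:ℝ) ^ (-b)) + (2:ℝ) ^ (-b) := by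
              linarith
          _ ≤ (3/4:ℝ) ^ (insert i S).card * M + ((insert i S).card : ℝ) * (2:ℝ) ^ (-b) := by
              rw [Finset.card_insert_of_notMem hi]
              push_cast
              rw [pow_succ]
              nlinarith
  set T := Finset.univ.filter (fun i => c i = true) with hT
  have hsubset : (A ×ˢ B).filter (fun p => ∀ i, f (p.1 i, p.2 i) = c i)
      ⊆ (A ×ˢ B).filter (fun p => ∀ j ∈ T, f (p.1 j, p.2 j) = true) := by
    intro p hp
    rw [Finset.mem_filter] at hp ⊢
    refine ⟨hp.1, fun j hj => ?_⟩
    have hcj : c j = true := (Finset.mem_filter.1 hj).2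
    rw [hp.2 j, hcj]
  have hstep1 : (∑ p ∈ (A ×ˢ B).filter (fun p => ∀ i, f (p.1 i, p.2 i) = c i),
      ∏ t, ν (p.1 t, p.2 t))
      ≤ ∑ p ∈ (A ×ˢ B).filter (fun p => ∀ j ∈ T, f (p.1 j, p.2 j) = true),
        ∏ t, ν (p.1 t, p.2 t) :=
    Finset.sum_le_sum_of_subset_of_nonneg hsubset
      (fun p _ _ => Finset.prod_nonneg fun t _ => hν0 _)
  have hpowle : (3/4:ℝ) ^ (T.card) ≤ (3/4:ℝ) ^ ((k:ℝ)/3) := by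
    rw [← Real.rpow_natCast (3/4:ℝ) T.card]
    exact Real.rpow_le_rpow_of_exponent_ge (by norm_num) (by norm_num) hc
  have hcard : (T.card : ℝ) ≤ (k : ℝ) := by
    have : T.card ≤ Fintype.card (Fin k) := Finset.card_le_univ T
    exact_mod_cast le_trans this (le_of_eq (Fintype.card_fin k))
  have hsplit2 : (2:ℝ) ^ (-b) = (2:ℝ) ^ (-b/2) * (2:ℝ) ^ (-b/2) := by
    rw [← Real.rpow_add (by norm_num)]
    norm_num
  have h1 : (3/4:ℝ) ^ (T.card) * M ≤ (3/4:ℝ) ^ ((k:ℝ)/3) * M :=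
    mul_le_mul_of_nonneg_right hpowle hM0
  have h2 : (T.card : ℝ) * (2:ℝ) ^ (-b) ≤ (k : ℝ) * (2:ℝ) ^ (-b/2) * M := by
    rw [hsplit2]
    have hk0 : (0:ℝ) ≤ (k:ℝ) := Nat.cast_nonneg k
    have hT0 : (0:ℝ) ≤ (T.card:ℝ) := Nat.cast_nonneg _
    have e1 := mul_le_mul_of_nonneg_right hcard (mul_nonneg h2b2.le h2b2.le)
    have e2 := mul_le_mul_of_nonneg_left hAB (mul_nonneg hk0 h2b2.le)
    nlinarith [e1, e2]
  calc (∑ p ∈ (A ×ˢ B).filter (fun p => ∀ i, f (p.1 i, p.2 i) = c i),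
        ∏ t, ν (p.1 t, p.2 t))
      ≤ ∑ p ∈ (A ×ˢ B).filter (fun p => ∀ j ∈ T, f (p.1 j, p.2 j) = true),
          ∏ t, ν (p.1 t, p.2 t) := hstep1
    _ ≤ (3/4:ℝ) ^ (T.card) * M + (T.card : ℝ) * (2:ℝ) ^ (-b) := hind T
    _ ≤ (3/4:ℝ) ^ ((k:ℝ)/3) * M + (k : ℝ) * (2:ℝ) ^ (-b/2) * M := by linarith
    _ = ((3 / 4 : ℝ) ^ ((k : ℝ) / 3) + (k : ℝ) * (2 : ℝ) ^ (-b / 2)) * M := by ring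
end

section
/- There is a universal constant γ > 0 with the following property. Let X, Y be finite nonempty sets, f : X × Y → {0,1}, and let ν be a probability distribution on X × Y that is balanced for f, i.e. ν(f⁻¹(1)) = ν(f⁻¹(0)) = 1/2. Let b > 0 be a real number and assume that for every rectangle R in X × Y with ν(R) ≥ 2^{-b} one has ν(R ∩ f⁻¹(1)) ≤ (3/4)·ν(R). Then for every positive integer k ≤ b and every family of at most 2^{b/3} pairwise disjoint rectangles in X^k × Y^k whose union is all of X^k × Y^k, each rectangle labeled with a vector in {0,1}^k, the ν^k-probability that the label of the rectangle containing ((x₁,…,x_k),(y₁,…,y_k)) equals (f(x₁,y₁),…,f(x_k,y_k)) is at most 2^{-γk}. -/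
open scoped Classical
open Finset

set_option linter.unusedSectionVars false
set_option linter.unusedVariables false
set_option maxHeartbeats 1000000

variable {X Y : Type} [Fintype X] [Fintype Y]
lemma prodsplit {k : ℕ} (a : Fin k) (g : Fin k → ℝ) :
    ∏ j, g j = g a * ∏ j : {j : Fin k // j ≠ a}, g ↑j := by
  rw [← Finset.mul_prod_erase univ g (mem_univ a)]
  congr 1
  exact Finset.prod_subtype (univ.erase a) (by simp) g

lemma evalS {Z : Type} {k : ℕ} (a : Fin k) (c : Z) (u : {j : Fin k // j ≠ a} → Z) :
    (Equiv.funSplitAt a Z).symm (c, u) a = c := by simp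

lemma evalS' {Z : Type} {k : ℕ} (a : Fin k) (c : Z) (u : {j : Fin k // j ≠ a} → Z)
    (j : {j : Fin k // j ≠ a}) :
    (Equiv.funSplitAt a Z).symm (c, u) ↑j = u j := by
  obtain ⟨j, hj⟩ := j; simp [Equiv.funSplitAt, hj]

lemma sum_univ_ite {α : Type} [Fintype α] (A : Finset α) (g : α → ℝ) :
    ∑ x ∈ A, g x = ∑ x : α, if x ∈ A then g x else 0 := by
  rw [Finset.sum_ite_mem, univ_inter]

lemma sum_split_s4 {Z : Type} [Fintype Z] {k : ℕ} (a : Fin k) (φ : (Fin k → Z) → ℝ) :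
    ∑ x : Fin k → Z, φ x
      = ∑ c : Z, ∑ u : {j : Fin k // j ≠ a} → Z, φ ((Equiv.funSplitAt a Z).symm (c, u)) := by
  rw [← Equiv.sum_comp (Equiv.funSplitAt a Z).symm φ, Fintype.sum_prod_type]

lemma sliceSum {k : ℕ} (a : Fin k) (A : Finset (Fin k → X)) (B : Finset (Fin k → Y))
    (h : Fin k → X × Y → ℝ) :
    ∑ x ∈ A, ∑ y ∈ B, ∏ j, h j (x j, y j)
      = ∑ u : {j : Fin k // j ≠ a} → X, ∑ v : {j : Fin k // j ≠ a} → Y,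
          (∏ j : {j : Fin k // j ≠ a}, h ↑j (u j, v j)) *
          ∑ q ∈ (univ.filter fun c : X => (Equiv.funSplitAt a X).symm (c, u) ∈ A) ×ˢ
                (univ.filter fun d : Y => (Equiv.funSplitAt a Y).symm (d, v) ∈ B), h a q := by
  have key : ∀ (x : Fin k → X) (y : Fin k → Y), (∏ j, h j (x j, y j))
      = h a (x a, y a) * ∏ j : {j : Fin k // j ≠ a}, h ↑j (x ↑j, y ↑j) :=
    fun x y => prodsplit a (fun j => h j (x j, y j))
  calc ∑ x ∈ A, ∑ y ∈ B, ∏ j, h j (x j, y j)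
      = ∑ c : X, ∑ u, ∑ d : Y, ∑ v,
          (if (Equiv.funSplitAt a X).symm (c, u) ∈ A then
            (if (Equiv.funSplitAt a Y).symm (d, v) ∈ B then
              (∏ j : {j : Fin k // j ≠ a}, h ↑j (u j, v j)) * h a (c, d) else 0) else 0) := by
        rw [sum_univ_ite, sum_split_s4 a]
        refine Fintype.sum_congr _ _ (fun c => Fintype.sum_congr _ _ (fun u => ?_))
        split_ifs with hA
        · rw [sum_univ_ite, sum_split_s4 a]
          refine Fintype.sum_congr _ _ (fun d => Fintype.sum_congr _ _ (fun v => ?_))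
          split_ifs with hB
          · rw [key, mul_comm]
            congr 1
            · exact Finset.prod_congr rfl (fun j _ => by rw [evalS', evalS'])
            · rw [evalS, evalS]
          · rfl
        · simp
    _ = ∑ u, ∑ v, (∏ j : {j : Fin k // j ≠ a}, h ↑j (u j, v j)) *
          ∑ q ∈ (univ.filter fun c : X => (Equiv.funSplitAt a X).symm (c, u) ∈ A) ×ˢ
                (univ.filter fun d : Y => (Equiv.funSplitAt a Y).symm (d, v) ∈ B), h a q := by
        rw [Finset.sum_comm]
        refine Fintype.sum_congr _ _ (fun u => ?_)
        have hv : ∀ v : {j : Fin k // j ≠ a} → Y,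
            (∏ j : {j : Fin k // j ≠ a}, h ↑j (u j, v j)) *
              ∑ q ∈ (univ.filter fun c : X => (Equiv.funSplitAt a X).symm (c, u) ∈ A) ×ˢ
                    (univ.filter fun d : Y => (Equiv.funSplitAt a Y).symm (d, v) ∈ B), h a q
            = ∑ c : X, ∑ d : Y,
              (if (Equiv.funSplitAt a X).symm (c, u) ∈ A then
                (if (Equiv.funSplitAt a Y).symm (d, v) ∈ B then
                  (∏ j : {j : Fin k // j ≠ a}, h ↑j (u j, v j)) * h a (c, d) else 0) else 0) := by
          intro v
          rw [Finset.sum_product]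
          simp only [Finset.sum_filter, Finset.mul_sum, mul_ite, mul_zero]
          refine Fintype.sum_congr _ _ (fun c => ?_)
          split_ifs with h1
          · rfl
          · exact Finset.sum_const_zero.symm
        calc ∑ c : X, ∑ d : Y, ∑ v, _ = ∑ c : X, ∑ v, ∑ d : Y, _ :=
              Fintype.sum_congr _ _ (fun c => Finset.sum_comm)
          _ = ∑ v, ∑ c : X, ∑ d : Y, _ := Finset.sum_comm
          _ = _ := (Fintype.sum_congr _ _ (fun v => (hv v).symm))
lemma lemA {ι : Type} [Fintype ι] [DecidableEq ι] (g : ι → X × Y → ℝ) :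
    ∑ u : ι → X, ∑ v : ι → Y, ∏ j, g j (u j, v j) = ∏ j, ∑ q : X × Y, g j q := by
  rw [Fintype.prod_sum, ← Fintype.sum_prod_type']
  exact ((Equiv.sum_comp (Equiv.arrowProdEquivProdArrow ι (fun _ => X) (fun _ => Y))
    (fun p : (ι → X) × (ι → Y) => ∏ j, g j (p.1 j, p.2 j))).symm).trans rfl

-- double-sum-of-products helpers
lemma dsp_nonneg {k : ℕ} (A : Finset (Fin k → X)) (B : Finset (Fin k → Y))
    (h : Fin k → X × Y → ℝ) (h0 : ∀ j q, 0 ≤ h j q) :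
    0 ≤ ∑ x ∈ A, ∑ y ∈ B, ∏ j, h j (x j, y j) :=
  Finset.sum_nonneg fun x _ => Finset.sum_nonneg fun y _ =>
    Finset.prod_nonneg fun j _ => h0 j _

lemma dsp_mono {k : ℕ} (A : Finset (Fin k → X)) (B : Finset (Fin k → Y))
    (h h' : Fin k → X × Y → ℝ) (h0 : ∀ j q, 0 ≤ h j q) (hle : ∀ j q, h j q ≤ h' j q) :
    ∑ x ∈ A, ∑ y ∈ B, ∏ j, h j (x j, y j) ≤ ∑ x ∈ A, ∑ y ∈ B, ∏ j, h' j (x j, y j) :=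
  Finset.sum_le_sum fun x _ => Finset.sum_le_sum fun y _ =>
    Finset.prod_le_prod (fun j _ => h0 j _) (fun j _ => hle j _)

lemma dsp_le_full {k : ℕ} (A : Finset (Fin k → X)) (B : Finset (Fin k → Y))
    (h : Fin k → X × Y → ℝ) (h0 : ∀ j q, 0 ≤ h j q) :
    ∑ x ∈ A, ∑ y ∈ B, ∏ j, h j (x j, y j) ≤ ∏ j, ∑ q : X × Y, h j q := by
  rw [← lemA]
  refine le_trans (Finset.sum_le_sum_of_subset_of_nonneg (Finset.subset_univ A) ?_)
    (Finset.sum_le_sum fun x _ => Finset.sum_le_sum_of_subset_of_nonneg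
      (Finset.subset_univ B) ?_) <;>
  · intro i _ _
    first
    | exact Finset.sum_nonneg fun y _ => Finset.prod_nonneg fun j _ => h0 j _
    | exact Finset.prod_nonneg fun j _ => h0 j _

section Ones

variable (f : X × Y → Bool) (ν : X × Y → ℝ) (b : ℝ)

/-- weight of bit c -/
noncomputable def pw (c : Bool) (q : X × Y) : ℝ := if f q = c then ν q else 0

noncomputable def Phi {k : ℕ} (A : Finset (Fin k → X)) (B : Finset (Fin k → Y))
    (T : Finset (Fin k)) : ℝ :=
  ∑ x ∈ A, ∑ y ∈ B, ∏ t, (if t ∈ T then pw f ν true (x t, y t) else ν (x t, y t))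

variable (hν0 : ∀ q, 0 ≤ ν q)
  (hbal1 : ∑ q ∈ univ.filter (fun q => f q = true), ν q = 1 / 2)
  (hν1 : ∑ q : X × Y, ν q = 1)
  (Hrect : ∀ (sA : Finset X) (sB : Finset Y),
      (2 : ℝ) ^ (-b) ≤ ∑ q ∈ sA ×ˢ sB, ν q →
      ∑ q ∈ (sA ×ˢ sB).filter (fun q => f q = true), ν q ≤ (3 / 4) * ∑ q ∈ sA ×ˢ sB, ν q)

lemma sum_pw_true (hbal1 : ∑ q ∈ univ.filter (fun q => f q = true), ν q = 1 / 2) :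
    ∑ q : X × Y, pw f ν true q = 1 / 2 := by
  rw [← hbal1, Finset.sum_filter]; rfl

lemma sum_pw_false (hbal0 : ∑ q ∈ univ.filter (fun q => f q = false), ν q = 1 / 2) :
    ∑ q : X × Y, pw f ν false q = 1 / 2 := by
  rw [← hbal0, Finset.sum_filter]; rfl

include hν0

lemma pw_nonneg : ∀ c q, 0 ≤ pw f ν c q := by
  intro c q; unfold pw; split_ifs
  · exact hν0 q
  · exact le_refl 0

lemma pw_le : ∀ c q, pw f ν c q ≤ ν q := by
  intro c q; unfold pw; split_ifs
  · exact le_refl _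
  · exact hν0 q

lemma Phi_nonneg {k : ℕ} (A : Finset (Fin k → X)) (B : Finset (Fin k → Y))
    (T : Finset (Fin k)) : 0 ≤ Phi f ν A B T := by
  unfold Phi
  refine dsp_nonneg A B (fun j q => if j ∈ T then pw f ν true q else ν q) (fun j q => ?_)
  show 0 ≤ (if j ∈ T then pw f ν true q else ν q)
  split_ifs
  · exact pw_nonneg f ν hν0 true q
  · exact hν0 q

lemma Phi_mono {k : ℕ} (A : Finset (Fin k → X)) (B : Finset (Fin k → Y))
    (T : Finset (Fin k)) : Phi f ν A B T ≤ Phi f ν A B ∅ := by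
  unfold Phi
  refine dsp_mono A B (fun j q => if j ∈ T then pw f ν true q else ν q)
    (fun j q => if j ∈ (∅ : Finset (Fin k)) then pw f ν true q else ν q)
    (fun j q => ?_) (fun j q => ?_)
  · split_ifs
    · exact pw_nonneg f ν hν0 true q
    · exact hν0 q
  · simp only [Finset.notMem_empty, if_false]
    split_ifs
    · exact pw_le f ν hν0 true q
    · exact le_refl _

include hbal1 hν1 Hrect

/-- single-copy corruption consequence -/
lemma corrupt (sA : Finset X) (sB : Finset Y) :
    ∑ q ∈ sA ×ˢ sB, pw f ν true q
      ≤ 3 / 4 * (∑ q ∈ sA ×ˢ sB, ν q) + 1 / 4 * min (∑ q ∈ sA ×ˢ sB, ν q) ((2:ℝ) ^ (-b)) := by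
  have hpw : ∑ q ∈ sA ×ˢ sB, pw f ν true q
      = ∑ q ∈ (sA ×ˢ sB).filter (fun q => f q = true), ν q := by
    rw [Finset.sum_filter]; rfl
  have htot0 : 0 ≤ ∑ q ∈ sA ×ˢ sB, ν q := Finset.sum_nonneg fun q _ => hν0 q
  rcases le_or_gt ((2:ℝ) ^ (-b)) (∑ q ∈ sA ×ˢ sB, ν q) with hbig | hsmall
  · have := Hrect sA sB hbig
    rw [hpw]
    have hmin : 0 ≤ min (∑ q ∈ sA ×ˢ sB, ν q) ((2:ℝ) ^ (-b)) :=
      le_min htot0 (le_of_lt (Real.rpow_pos_of_pos (by norm_num) _))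
    linarith
  · have h1 : ∑ q ∈ sA ×ˢ sB, pw f ν true q ≤ ∑ q ∈ sA ×ˢ sB, ν q :=
      Finset.sum_le_sum fun q _ => pw_le f ν hν0 true q
    have hmin : min (∑ q ∈ sA ×ˢ sB, ν q) ((2:ℝ) ^ (-b)) = ∑ q ∈ sA ×ˢ sB, ν q :=
      min_eq_left (le_of_lt hsmall)
    rw [hmin]; linarith

lemma Phi_step {k : ℕ} (A : Finset (Fin k → X)) (B : Finset (Fin k → Y))
    (T : Finset (Fin k)) (a : Fin k) (ha : a ∉ T) :
    Phi f ν A B (insert a T)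
      ≤ 3 / 4 * Phi f ν A B T + 1 / 4 * min (Phi f ν A B T) ((2:ℝ) ^ (-b)) := by
  set c : ℝ := (2:ℝ) ^ (-b) with hc
  have hc0 : 0 < c := Real.rpow_pos_of_pos (by norm_num) _
  set W : ({j : Fin k // j ≠ a} → X) → ({j : Fin k // j ≠ a} → Y) → ℝ :=
    fun u v => ∏ j : {j : Fin k // j ≠ a},
      (if (j : Fin k) ∈ T then pw f ν true (u j, v j) else ν (u j, v j)) with hW
  set sA : ({j : Fin k // j ≠ a} → X) → Finset X :=
    fun u => univ.filter fun e : X => (Equiv.funSplitAt a X).symm (e, u) ∈ A with hsA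
  set sB : ({j : Fin k // j ≠ a} → Y) → Finset Y :=
    fun v => univ.filter fun d : Y => (Equiv.funSplitAt a Y).symm (d, v) ∈ B with hsB
  have e1 : Phi f ν A B (insert a T)
      = ∑ u, ∑ v, W u v * ∑ q ∈ sA u ×ˢ sB v, pw f ν true q := by
    show (∑ x ∈ A, ∑ y ∈ B, ∏ j, (fun j q => if j ∈ insert a T then pw f ν true q else ν q) j (x j, y j)) = _
    rw [sliceSum a A B (fun j q => if j ∈ insert a T then pw f ν true q else ν q)]
    refine Fintype.sum_congr _ _ (fun u => Fintype.sum_congr _ _ (fun v => ?_))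
    congr 1
    · exact Finset.prod_congr rfl (fun j _ => by
        simp only [Finset.mem_insert, j.2, false_or])
    · exact Finset.sum_congr rfl (fun q _ => by
        simp only [Finset.mem_insert_self, if_pos])
  have e2 : Phi f ν A B T = ∑ u, ∑ v, W u v * ∑ q ∈ sA u ×ˢ sB v, ν q := by
    show (∑ x ∈ A, ∑ y ∈ B, ∏ j, (fun j q => if j ∈ T then pw f ν true q else ν q) j (x j, y j)) = _
    rw [sliceSum a A B (fun j q => if j ∈ T then pw f ν true q else ν q)]
    refine Fintype.sum_congr _ _ (fun u => Fintype.sum_congr _ _ (fun v => ?_))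
    congr 1
    exact Finset.sum_congr rfl (fun q _ => by rw [if_neg ha])
  have hW0 : ∀ u v, 0 ≤ W u v := by
    intro u v
    refine Finset.prod_nonneg fun j _ => ?_
    split_ifs
    · exact pw_nonneg f ν hν0 true _
    · exact hν0 _
  have htot0 : ∀ u v, 0 ≤ ∑ q ∈ sA u ×ˢ sB v, ν q :=
    fun u v => Finset.sum_nonneg fun q _ => hν0 q
  have hWsum : ∑ u, ∑ v, W u v ≤ 1 := by
    rw [hW, lemA (fun (j : {j : Fin k // j ≠ a}) q => if (j : Fin k) ∈ T then pw f ν true q else ν q)]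
    refine Finset.prod_le_one (fun j _ => ?_) (fun j _ => ?_) <;> split_ifs
    · exact Finset.sum_nonneg fun q _ => pw_nonneg f ν hν0 true q
    · exact Finset.sum_nonneg fun q _ => hν0 q
    · rw [sum_pw_true f ν hbal1]; norm_num
    · rw [hν1]
  have main : Phi f ν A B (insert a T)
      ≤ 3 / 4 * Phi f ν A B T
        + 1 / 4 * ∑ u, ∑ v, W u v * min (∑ q ∈ sA u ×ˢ sB v, ν q) c := by
    rw [e1, e2, Finset.mul_sum, Finset.mul_sum, ← Finset.sum_add_distrib]
    refine Finset.sum_le_sum fun u _ => ?_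
    rw [Finset.mul_sum, Finset.mul_sum, ← Finset.sum_add_distrib]
    refine Finset.sum_le_sum fun v _ => ?_
    have hcor := corrupt f ν b hν0 hbal1 hν1 Hrect (sA u) (sB v)
    have h0 := hW0 u v
    have := mul_le_mul_of_nonneg_left hcor h0
    nlinarith [this]
  have hm1 : ∑ u, ∑ v, W u v * min (∑ q ∈ sA u ×ˢ sB v, ν q) c ≤ Phi f ν A B T := by
    rw [e2]
    exact Finset.sum_le_sum fun u _ => Finset.sum_le_sum fun v _ =>
      mul_le_mul_of_nonneg_left (min_le_left _ _) (hW0 u v)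
  have hm2 : ∑ u, ∑ v, W u v * min (∑ q ∈ sA u ×ˢ sB v, ν q) c ≤ c := by
    calc ∑ u, ∑ v, W u v * min (∑ q ∈ sA u ×ˢ sB v, ν q) c
        ≤ ∑ u, ∑ v, W u v * c :=
          Finset.sum_le_sum fun u _ => Finset.sum_le_sum fun v _ =>
            mul_le_mul_of_nonneg_left (min_le_right _ _) (hW0 u v)
      _ = (∑ u, ∑ v, W u v) * c := by rw [Finset.sum_mul]; exact Finset.sum_congr rfl fun u _ => by rw [Finset.sum_mul]
      _ ≤ 1 * c := mul_le_mul_of_nonneg_right hWsum (le_of_lt hc0)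
      _ = c := one_mul c
  have := le_min hm1 hm2
  linarith

lemma Phi_bound {k : ℕ} (A : Finset (Fin k → X)) (B : Finset (Fin k → Y))
    (T : Finset (Fin k)) :
    Phi f ν A B T ≤ (3/4 : ℝ) ^ T.card * Phi f ν A B ∅
      + (1 - (3/4 : ℝ) ^ T.card) * min (Phi f ν A B ∅) ((2:ℝ) ^ (-b)) := by
  induction T using Finset.induction_on with
  | empty => simp
  | @insert a T ha ih =>
    have step := Phi_step f ν b hν0 hbal1 hν1 Hrect A B T a ha
    have mono := Phi_mono f ν hν0 A B T
    have minmono : min (Phi f ν A B T) ((2:ℝ) ^ (-b))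
        ≤ min (Phi f ν A B ∅) ((2:ℝ) ^ (-b)) := min_le_min mono le_rfl
    have ih34 := mul_le_mul_of_nonneg_left ih (by norm_num : (0:ℝ) ≤ 3/4)
    rw [Finset.card_insert_of_notMem ha]
    calc Phi f ν A B (insert a T)
        ≤ 3 / 4 * Phi f ν A B T + 1 / 4 * min (Phi f ν A B T) ((2:ℝ) ^ (-b)) := step
      _ ≤ 3 / 4 * ((3/4 : ℝ) ^ T.card * Phi f ν A B ∅
            + (1 - (3/4 : ℝ) ^ T.card) * min (Phi f ν A B ∅) ((2:ℝ) ^ (-b)))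
          + 1 / 4 * min (Phi f ν A B ∅) ((2:ℝ) ^ (-b)) := by linarith
      _ = (3/4 : ℝ) ^ (T.card + 1) * Phi f ν A B ∅
          + (1 - (3/4 : ℝ) ^ (T.card + 1)) * min (Phi f ν A B ∅) ((2:ℝ) ^ (-b)) := by ring

end Ones


lemma disj_sum_le {P : Type} [Fintype P] {N : ℕ} (R : Fin N → Finset P)
    (hdisj : ∀ i j, i ≠ j → Disjoint (R i) (R j)) (s : Finset (Fin N)) (g : P → ℝ)
    (hg : ∀ p, 0 ≤ g p) : ∑ i ∈ s, ∑ p ∈ R i, g p ≤ ∑ p : P, g p := by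
  rw [← Finset.sum_biUnion (fun i _ j _ hij => hdisj i j hij)]
  exact Finset.sum_le_sum_of_subset_of_nonneg (Finset.subset_univ _) (fun p _ _ => hg p)

lemma cover_sum_eq {P : Type} [Fintype P] {N : ℕ} (R : Fin N → Finset P)
    (hdisj : ∀ i j, i ≠ j → Disjoint (R i) (R j)) (hcov : ∀ p, ∃ i, p ∈ R i) (g : P → ℝ) :
    ∑ i, ∑ p ∈ R i, g p = ∑ p : P, g p := by
  rw [← Finset.sum_biUnion (fun i _ j _ hij => hdisj i j hij)]
  congr 1
  apply Finset.eq_univ_of_forall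
  intro p
  rw [Finset.mem_biUnion]
  obtain ⟨i, hi⟩ := hcov p
  exact ⟨i, Finset.mem_univ i, hi⟩

lemma prod_ite_half {k : ℕ} (L : Fin k → Bool) :
    ∏ t, (if L t = true then (1:ℝ) else 1/2)
      = (1/2:ℝ) ^ ((univ.filter (fun t => L t = false)).card) := by
  rw [Finset.prod_ite]
  rw [Finset.prod_const_one, Finset.prod_const, one_mul]
  congr 2
  apply Finset.filter_congr
  intro t _
  simp


-- base comparisons
lemma base1 : ((3:ℝ)/4) ^ ((1:ℝ)/4) ≤ (2:ℝ) ^ (-(1:ℝ)/10) := by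
  have h20 : (0:ℕ) ≠ 20 := by norm_num
  refine le_of_pow_le_pow_left₀ (n := 20) (by norm_num) (Real.rpow_nonneg (by norm_num) _) ?_
  have e1 : (((3:ℝ)/4) ^ ((1:ℝ)/4)) ^ (20:ℕ) = ((3:ℝ)/4) ^ ((5:ℝ)) := by
    rw [← Real.rpow_natCast (((3:ℝ)/4) ^ ((1:ℝ)/4)) 20, ← Real.rpow_mul (by norm_num)]
    norm_num
  have e2 : (((2:ℝ)) ^ (-(1:ℝ)/10)) ^ (20:ℕ) = ((2:ℝ)) ^ ((-2:ℝ)) := by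
    rw [← Real.rpow_natCast (((2:ℝ)) ^ (-(1:ℝ)/10)) 20, ← Real.rpow_mul (by norm_num)]
    norm_num
  rw [e1, e2]
  have e3 : ((3:ℝ)/4) ^ ((5:ℝ)) = ((3:ℝ)/4) ^ (5:ℕ) := by
    rw [show ((5:ℝ)) = ((5:ℕ):ℝ) by norm_num, Real.rpow_natCast]
  have e4 : ((2:ℝ)) ^ ((-2:ℝ)) = 1/4 := by
    rw [show ((-2:ℝ)) = ((-2 : ℤ) : ℝ) by norm_num, Real.rpow_intCast]
    norm_num
  rw [e3, e4]
  norm_num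

lemma base3 : ((3:ℝ)/2) ≤ (2:ℝ) ^ ((13:ℝ)/20) := by
  refine le_of_pow_le_pow_left₀ (n := 20) (by norm_num) (Real.rpow_nonneg (by norm_num) _) ?_
  have e2 : (((2:ℝ)) ^ ((13:ℝ)/20)) ^ (20:ℕ) = ((2:ℝ)) ^ ((13:ℝ)) := by
    rw [← Real.rpow_natCast (((2:ℝ)) ^ ((13:ℝ)/20)) 20, ← Real.rpow_mul (by norm_num)]
    norm_num
  rw [e2, show ((13:ℝ)) = ((13:ℕ) : ℝ) by norm_num, Real.rpow_natCast]
  norm_num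

lemma numA : (15/16 : ℝ) ≤ (2:ℝ) ^ (-((2:ℝ)/25)) := by
  rw [Real.rpow_neg (by norm_num), le_inv_comm₀] <;> try norm_num
  · refine le_of_pow_le_pow_left₀ (n := 25) (by norm_num) (by norm_num) ?_
    have e : (((2:ℝ)) ^ ((2:ℝ)/25)) ^ (25:ℕ) = ((2:ℝ)) ^ ((2:ℝ)) := by
      rw [← Real.rpow_natCast (((2:ℝ)) ^ ((2:ℝ)/25)) 25, ← Real.rpow_mul (by norm_num)]
      norm_num
    rw [e, show ((2:ℝ)) = ((2:ℕ):ℝ) by norm_num, Real.rpow_natCast]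
    norm_num
  · exact Real.rpow_pos_of_pos (by norm_num) _

lemma pow1 (k : ℕ) : ((3:ℝ)/4) ^ ((k:ℝ)/4) ≤ (2:ℝ) ^ (-(k:ℝ)/10) := by
  have e1 : ((3:ℝ)/4) ^ ((k:ℝ)/4) = (((3:ℝ)/4) ^ ((1:ℝ)/4)) ^ ((k:ℝ)) := by
    rw [← Real.rpow_mul (by norm_num)]; congr 1; ring
  have e2 : (2:ℝ) ^ (-(k:ℝ)/10) = ((2:ℝ) ^ (-(1:ℝ)/10)) ^ ((k:ℝ)) := by
    rw [← Real.rpow_mul (by norm_num)]; congr 1; ring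
  rw [e1, e2]
  exact Real.rpow_le_rpow (Real.rpow_nonneg (by norm_num) _) base1 (Nat.cast_nonneg k)

lemma pow3 (k : ℕ) : ((3:ℝ)/2) ^ k * (2:ℝ) ^ (-(3*(k:ℝ)/4)) ≤ (2:ℝ) ^ (-(k:ℝ)/10) := by
  have h1 : ((3:ℝ)/2) ^ k ≤ (2:ℝ) ^ ((13:ℝ)*(k:ℝ)/20) := by
    have e : (2:ℝ) ^ ((13:ℝ)*(k:ℝ)/20) = ((2:ℝ) ^ ((13:ℝ)/20)) ^ ((k:ℝ)) := by
      rw [← Real.rpow_mul (by norm_num)]; congr 1; ring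
    rw [e, ← Real.rpow_natCast ((3:ℝ)/2) k]
    exact Real.rpow_le_rpow (by norm_num) base3 (Nat.cast_nonneg k)
  calc ((3:ℝ)/2) ^ k * (2:ℝ) ^ (-(3*(k:ℝ)/4))
      ≤ (2:ℝ) ^ ((13:ℝ)*(k:ℝ)/20) * (2:ℝ) ^ (-(3*(k:ℝ)/4)) :=
        mul_le_mul_of_nonneg_right h1 (Real.rpow_nonneg (by norm_num) _)
    _ = (2:ℝ) ^ ((13:ℝ)*(k:ℝ)/20 + -(3*(k:ℝ)/4)) := (Real.rpow_add (by norm_num) _ _).symm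
    _ = (2:ℝ) ^ (-(k:ℝ)/10) := by congr 1; ring

lemma pow4 (k : ℕ) (hk : 80 ≤ k) :
    3 * (2:ℝ) ^ (-(k:ℝ)/10) ≤ (2:ℝ) ^ (-(1/1000*(k:ℝ))) := by
  have hk' : (80:ℝ) ≤ (k:ℝ) := by exact_mod_cast hk
  have split : (2:ℝ) ^ (-(k:ℝ)/10)
      = (2:ℝ) ^ (-(1/1000*(k:ℝ))) * (2:ℝ) ^ (-(99*(k:ℝ)/1000)) := by
    rw [← Real.rpow_add (by norm_num)]; congr 1; ring
  have h2 : (2:ℝ) ^ (-(99*(k:ℝ)/1000)) ≤ (2:ℝ) ^ (-(3:ℝ)) :=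
    Real.rpow_le_rpow_of_exponent_le (by norm_num) (by linarith)
  have h3 : (2:ℝ) ^ (-(3:ℝ)) = 1/8 := by
    rw [show (-(3:ℝ)) = ((-3:ℤ):ℝ) by norm_num, Real.rpow_intCast]; norm_num
  have hp : (0:ℝ) < (2:ℝ) ^ (-(1/1000*(k:ℝ))) := Real.rpow_pos_of_pos (by norm_num) _
  rw [split]
  nlinarith [h2, h3, hp]

lemma pow5 (k : ℕ) (hk80 : k ≤ 80) : (15/16:ℝ) ≤ (2:ℝ) ^ (-(1/1000*(k:ℝ))) := by
  refine le_trans numA (Real.rpow_le_rpow_of_exponent_le (by norm_num) ?_)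
  have : (k:ℝ) ≤ 80 := by exact_mod_cast hk80
  linarith

lemma pow6 (k : ℕ) : ((1:ℝ)/2) ^ k ≤ (2:ℝ) ^ (-(1/1000*(k:ℝ))) := by
  have e : ((1:ℝ)/2) ^ k = (2:ℝ) ^ (-(k:ℝ)) := by
    rw [Real.rpow_neg (by norm_num), Real.rpow_natCast, one_div, inv_pow]
  rw [e]
  refine Real.rpow_le_rpow_of_exponent_le (by norm_num) ?_
  have : (0:ℝ) ≤ (k:ℝ) := Nat.cast_nonneg k
  linarith

theorem stmt4 :
    ∃ γ : ℝ, 0 < γ ∧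
      ∀ (X Y : Type) [Fintype X] [Fintype Y] [Nonempty X] [Nonempty Y]
        (f : X × Y → Bool) (ν : X × Y → ℝ),
        (∀ p, 0 ≤ ν p) → (∑ p, ν p = 1) →
        -- ν is balanced for f
        (∑ p ∈ Finset.univ.filter (fun p => f p = true), ν p = 1 / 2) →
        (∑ p ∈ Finset.univ.filter (fun p => f p = false), ν p = 1 / 2) →
        ∀ (b : ℝ), 0 < b →
        -- every rectangle of ν-measure at least 2^{-b} has at most a 3/4 fraction of 1-inputs
        (∀ (A : Finset X) (B : Finset Y),
          (2 : ℝ) ^ (-b) ≤ ∑ p ∈ A ×ˢ B, ν p →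
          ∑ p ∈ (A ×ˢ B).filter (fun p => f p = true), ν p
            ≤ (3 / 4) * ∑ p ∈ A ×ˢ B, ν p) →
        ∀ (k : ℕ), 0 < k → (k : ℝ) ≤ b →
          ∀ (N : ℕ) (A : Fin N → Finset (Fin k → X)) (B : Fin N → Finset (Fin k → Y))
            (L : Fin N → (Fin k → Bool)),
            (N : ℝ) ≤ (2 : ℝ) ^ (b / 3) →
            -- the labeled rectangles are pairwise disjoint and cover everything
            (∀ i j, i ≠ j → Disjoint (A i ×ˢ B i) (A j ×ˢ B j)) →
            (∀ p : (Fin k → X) × (Fin k → Y), ∃ i, p ∈ A i ×ˢ B i) →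
            -- the ν^k-probability that the label is correct is at most 2^{-γk}
            ∑ i, ∑ p ∈ (A i ×ˢ B i).filter (fun p => ∀ t, f (p.1 t, p.2 t) = L i t),
                ∏ t, ν (p.1 t, p.2 t)
              ≤ (2 : ℝ) ^ (-(γ * k)) := by
  refine ⟨1/1000, by norm_num, ?_⟩
  intro X Y _ _ _ _ f ν hν0 hν1 hbal1 hbal0 b hb Hrect k hk hkb N A B L hN hdisj hcover
  set R : Fin N → Finset ((Fin k → X) × (Fin k → Y)) := fun i => A i ×ˢ B i with hRdef
  set C : Fin N → ℝ :=
    fun i => ∑ x ∈ A i, ∑ y ∈ B i, ∏ t, pw f ν (L i t) (x t, y t) with hCdef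
  set M : Fin N → ℝ :=
    fun i => ∑ x ∈ A i, ∑ y ∈ B i, ∏ t, ν (x t, y t) with hMdef
  have hcb0 : (0:ℝ) < (2:ℝ) ^ (-b) := Real.rpow_pos_of_pos (by norm_num) _
  -- convert goal to C
  have hconv : ∀ i, ∑ p ∈ (A i ×ˢ B i).filter (fun p => ∀ t, f (p.1 t, p.2 t) = L i t),
      ∏ t, ν (p.1 t, p.2 t) = C i := by
    intro i
    rw [hCdef, Finset.sum_filter, Finset.sum_product]
    refine Finset.sum_congr rfl (fun x _ => Finset.sum_congr rfl (fun y _ => ?_))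
    by_cases h : ∀ t, f (x t, y t) = L i t
    · rw [if_pos h]
      refine Finset.prod_congr rfl (fun t _ => ?_)
      unfold pw
      rw [if_pos (h t)]
    · rw [if_neg h]
      push_neg at h
      obtain ⟨t0, ht0⟩ := h
      refine (Finset.prod_eq_zero (Finset.mem_univ t0) ?_).symm
      unfold pw
      rw [if_neg ht0]
  rw [Finset.sum_congr rfl (fun i _ => hconv i)]
  -- basic facts
  have hpw0 : ∀ (c : Bool) q, 0 ≤ pw f ν c q := pw_nonneg f ν hν0
  have hC0 : ∀ i, 0 ≤ C i := by
    intro i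
    rw [hCdef]
    exact dsp_nonneg (A i) (B i) (fun t q => pw f ν (L i t) q) (fun t q => hpw0 _ q)
  have hM0 : ∀ i, 0 ≤ M i := by
    intro i
    rw [hMdef]
    exact dsp_nonneg (A i) (B i) (fun t q => ν q) (fun t q => hν0 q)
  have hCM : ∀ i, C i ≤ M i := by
    intro i
    rw [hCdef, hMdef]
    exact dsp_mono (A i) (B i) (fun t q => pw f ν (L i t) q) (fun t q => ν q)
      (fun t q => hpw0 _ q) (fun t q => pw_le f ν hν0 _ q)
  have hRM : ∀ i, M i = ∑ p ∈ R i, ∏ t, ν (p.1 t, p.2 t) := by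
    intro i
    rw [hMdef, hRdef]
    exact (Finset.sum_product (s := A i) (t := B i) (f := fun p => ∏ t, ν (p.1 t, p.2 t))).symm
  have htotal : ∑ p : (Fin k → X) × (Fin k → Y), ∏ t, ν (p.1 t, p.2 t) = 1 := by
    rw [Fintype.sum_prod_type, lemA (fun (_ : Fin k) q => ν q)]
    rw [hν1]
    exact Finset.prod_const_one
  have hMsum : ∑ i, M i = 1 := by
    rw [Finset.sum_congr rfl (fun i _ => hRM i)]
    rw [cover_sum_eq R hdisj hcover]
    exact htotal
  have hPhi0 : ∀ i, Phi f ν (A i) (B i) ∅ = M i := by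
    intro i
    rw [hMdef]
    unfold Phi
    exact Finset.sum_congr rfl (fun x _ => Finset.sum_congr rfl (fun y _ =>
      Finset.prod_congr rfl (fun t _ => by simp)))
  -- case split on N
  rcases Nat.lt_or_ge N 2 with hN2 | hN2
  · -- N = 0 or N = 1
    have : N = 0 ∨ N = 1 := by omega
    rcases this with h0 | h1
    · exfalso
      obtain ⟨x0⟩ := (inferInstance : Nonempty X)
      obtain ⟨y0⟩ := (inferInstance : Nonempty Y)
      obtain ⟨i, _⟩ := hcover (fun _ => x0, fun _ => y0)
      subst h0
      exact i.elim0
    · subst h1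
      rw [Fin.sum_univ_one]
      have h1 : C 0 ≤ ∏ t : Fin k, ∑ q : X × Y, pw f ν (L 0 t) q := by
        rw [hCdef]
        exact dsp_le_full (A 0) (B 0) (fun t q => pw f ν (L 0 t) q) (fun t q => hpw0 _ q)
      have h2 : ∏ t : Fin k, ∑ q : X × Y, pw f ν (L 0 t) q = ((1:ℝ)/2) ^ k := by
        rw [Finset.prod_congr rfl (fun (t : Fin k) _ => show ∑ q : X × Y, pw f ν (L 0 t) q = 1/2 from ?_)]
        · rw [Finset.prod_const]
          congr 1
          exact Finset.card_univ.trans (Fintype.card_fin k)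
        · cases hL : L 0 t
          · exact sum_pw_false f ν hbal0
          · exact sum_pw_true f ν hbal1
      calc C 0 ≤ ((1:ℝ)/2) ^ k := h2 ▸ h1
        _ ≤ (2:ℝ) ^ (-(1/1000*(k:ℝ))) := pow6 k
  · -- N ≥ 2, hence b ≥ 3
    have hb3 : (3:ℝ) ≤ b := by
      have h2N : (2:ℝ) ≤ (N:ℝ) := by exact_mod_cast hN2
      have : (2:ℝ) ^ (1:ℝ) ≤ (2:ℝ) ^ (b/3) := by
        rw [Real.rpow_one]; linarith
      have := (Real.rpow_le_rpow_left_iff (by norm_num : (1:ℝ) < 2)).mp this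
      linarith
    have hNcb : (N:ℝ) * (2:ℝ) ^ (-b) ≤ (2:ℝ) ^ (-(2*b/3)) := by
      calc (N:ℝ) * (2:ℝ) ^ (-b) ≤ (2:ℝ) ^ (b/3) * (2:ℝ) ^ (-b) :=
            mul_le_mul_of_nonneg_right hN (le_of_lt hcb0)
        _ = (2:ℝ) ^ (b/3 + -b) := (Real.rpow_add (by norm_num) _ _).symm
        _ = (2:ℝ) ^ (-(2*b/3)) := by congr 1; ring
    rcases le_or_gt k 80 with hk80 | hk80
    · -- small k : total success at most 15/16
      have hsplit : ∑ i, C i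
          = ∑ i ∈ univ.filter (fun i => ∃ t, L i t = true), C i
            + ∑ i ∈ univ.filter (fun i => ¬ ∃ t, L i t = true), C i :=
        (Finset.sum_filter_add_sum_filter_not univ _ C).symm
      set s1 := ∑ i ∈ univ.filter (fun i => ∃ t, L i t = true), M i with hs1
      set s0 := ∑ i ∈ univ.filter (fun i => ¬ ∃ t, L i t = true), M i with hs0
      have hs01 : s1 + s0 = 1 := by
        rw [hs1, hs0, Finset.sum_filter_add_sum_filter_not]; exact hMsum
      have hs10 : 0 ≤ s1 := Finset.sum_nonneg (fun i _ => hM0 i)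
      have hs00 : 0 ≤ s0 := Finset.sum_nonneg (fun i _ => hM0 i)
      have hones : ∀ i ∈ univ.filter (fun i => ∃ t, L i t = true),
          C i ≤ 3/4 * M i + 1/4 * min (M i) ((2:ℝ)^(-b)) := by
        intro i hi
        rw [Finset.mem_filter] at hi
        obtain ⟨-, t0, ht0⟩ := hi
        have hle : C i ≤ Phi f ν (A i) (B i) {t0} := by
          rw [hCdef]; unfold Phi
          refine dsp_mono (A i) (B i) (fun t q => pw f ν (L i t) q)
            (fun t q => if t ∈ ({t0} : Finset (Fin k)) then pw f ν true q else ν q)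
            (fun t q => hpw0 _ q) (fun t q => ?_)
          show pw f ν (L i t) q ≤ (if t ∈ ({t0} : Finset (Fin k)) then pw f ν true q else ν q)
          by_cases h : t ∈ ({t0} : Finset (Fin k))
          · rw [if_pos h]
            rw [Finset.mem_singleton] at h
            subst h; rw [ht0]
          · rw [if_neg h]; exact pw_le f ν hν0 _ q
        have hbd := Phi_bound f ν b hν0 hbal1 hν1 Hrect (A i) (B i) {t0}
        rw [Finset.card_singleton, pow_one, hPhi0 i] at hbd
        linarith
      have hsum1 : ∑ i ∈ univ.filter (fun i => ∃ t, L i t = true), C i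
          ≤ 3/4 * s1 + 1/4 * ∑ i ∈ univ.filter (fun i => ∃ t, L i t = true),
              min (M i) ((2:ℝ)^(-b)) := by
        calc ∑ i ∈ univ.filter (fun i => ∃ t, L i t = true), C i
            ≤ ∑ i ∈ univ.filter (fun i => ∃ t, L i t = true),
                (3/4 * M i + 1/4 * min (M i) ((2:ℝ)^(-b))) := Finset.sum_le_sum hones
          _ = 3/4 * s1 + 1/4 * ∑ i ∈ univ.filter (fun i => ∃ t, L i t = true),
                min (M i) ((2:ℝ)^(-b)) := by
              rw [Finset.sum_add_distrib, ← Finset.mul_sum, ← Finset.mul_sum, hs1]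
      have hminbound : ∑ i ∈ univ.filter (fun i => ∃ t, L i t = true),
          min (M i) ((2:ℝ)^(-b)) ≤ 1/4 := by
        have hcard : ((univ.filter (fun i => ∃ t, L i t = true)).card : ℝ) ≤ (N:ℝ) := by
          have h := Finset.card_filter_le (univ : Finset (Fin N)) (fun i => ∃ t, L i t = true)
          rw [Finset.card_univ, Fintype.card_fin] at h
          exact_mod_cast h
        calc ∑ i ∈ univ.filter (fun i => ∃ t, L i t = true), min (M i) ((2:ℝ)^(-b))
            ≤ ∑ i ∈ univ.filter (fun i => ∃ t, L i t = true), (2:ℝ)^(-b) :=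
              Finset.sum_le_sum (fun i _ => min_le_right _ _)
          _ = ((univ.filter (fun i => ∃ t, L i t = true)).card : ℝ) * (2:ℝ)^(-b) := by
              rw [Finset.sum_const, nsmul_eq_mul]
          _ ≤ (N:ℝ) * (2:ℝ)^(-b) := mul_le_mul_of_nonneg_right hcard (le_of_lt hcb0)
          _ ≤ (2:ℝ)^(-(2*b/3)) := hNcb
          _ ≤ (2:ℝ)^(-(2:ℝ)) :=
              Real.rpow_le_rpow_of_exponent_le (by norm_num) (by linarith)
          _ = 1/4 := by
              rw [show (-(2:ℝ)) = ((-2:ℤ):ℝ) by norm_num, Real.rpow_intCast]; norm_num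
      have hzero2 : ∑ i ∈ univ.filter (fun i => ¬ ∃ t, L i t = true), C i ≤ ((1:ℝ)/2)^k := by
        have heq : ∀ i ∈ univ.filter (fun i => ¬ ∃ t, L i t = true),
            C i = ∑ p ∈ R i, ∏ t, pw f ν false (p.1 t, p.2 t) := by
          intro i hi
          rw [Finset.mem_filter] at hi
          have hall : ∀ t, L i t = false := by
            intro t
            have := hi.2
            push_neg at this
            simpa using this t
          simp only [hCdef, hRdef]
          rw [Finset.sum_product (s := A i) (t := B i)
            (f := fun p => ∏ t, pw f ν false (p.1 t, p.2 t))]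
          exact Finset.sum_congr rfl (fun x _ => Finset.sum_congr rfl (fun y _ =>
            Finset.prod_congr rfl (fun t _ => by rw [hall t])))
        rw [Finset.sum_congr rfl heq]
        have hg0 : ∀ p : (Fin k → X) × (Fin k → Y), 0 ≤ ∏ t, pw f ν false (p.1 t, p.2 t) :=
          fun p => Finset.prod_nonneg (fun t _ => hpw0 _ _)
        calc ∑ i ∈ univ.filter (fun i => ¬ ∃ t, L i t = true),
              ∑ p ∈ R i, ∏ t, pw f ν false (p.1 t, p.2 t)
            ≤ ∑ p : (Fin k → X) × (Fin k → Y), ∏ t, pw f ν false (p.1 t, p.2 t) :=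
              disj_sum_le R hdisj _ _ hg0
          _ = ((1:ℝ)/2)^k := by
              rw [Fintype.sum_prod_type, lemA (fun (_ : Fin k) q => pw f ν false q)]
              rw [Finset.prod_congr rfl (fun (t : Fin k) _ => sum_pw_false f ν hbal0)]
              rw [Finset.prod_const]
              congr 1
              exact Finset.card_univ.trans (Fintype.card_fin k)
      have hzero1 : ∑ i ∈ univ.filter (fun i => ¬ ∃ t, L i t = true), C i ≤ s0 :=
        Finset.sum_le_sum (fun i _ => hCM i)
      have hhalf : ((1:ℝ)/2)^k ≤ 1/2 := by
        calc ((1:ℝ)/2)^k ≤ ((1:ℝ)/2)^1 :=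
              pow_le_pow_of_le_one (by norm_num) (by norm_num) hk
          _ = 1/2 := pow_one _
      have h15 : ∑ i, C i ≤ 15/16 := by
        rw [hsplit]
        rcases le_or_gt s1 (1/2) with hcase | hcase
        · linarith
        · linarith
      calc ∑ i, C i ≤ 15/16 := h15
        _ ≤ (2:ℝ) ^ (-(1/1000*(k:ℝ))) := pow5 k hk80
    · -- large k
      have hk80' : 80 ≤ k := Nat.le_of_lt hk80
      set z : Fin N → ℕ := fun i => (univ.filter (fun t => L i t = false)).card with hzdef
      set mw : X × Y → ℝ := fun q => if f q = true then ν q else 2 * ν q with hmwdef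
      have hmw0 : ∀ q, 0 ≤ mw q := by
        intro q
        rw [hmwdef]
        simp only
        split_ifs
        · exact hν0 q
        · nlinarith [hν0 q]
      have hmwsum : ∑ q : X × Y, mw q = 3/2 := by
        have hq : ∀ q : X × Y, mw q = ν q + pw f ν false q := by
          intro q
          rw [hmwdef]
          unfold pw
          cases h : f q <;> simp [h] <;> ring
        rw [Finset.sum_congr rfl (fun q _ => hq q), Finset.sum_add_distrib, hν1,
          sum_pw_false f ν hbal0]
        norm_num
      have hsplit : ∑ i, C i
          = ∑ i ∈ univ.filter (fun i => 4 * z i ≤ 3 * k), C i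
            + ∑ i ∈ univ.filter (fun i => ¬ 4 * z i ≤ 3 * k), C i :=
        (Finset.sum_filter_add_sum_filter_not univ _ C).symm
      -- heavy rectangles
      have hheavy : ∀ i ∈ univ.filter (fun i => 4 * z i ≤ 3 * k),
          C i ≤ ((3:ℝ)/4)^((k:ℝ)/4) * M i + (2:ℝ)^(-b) := by
        intro i hi
        rw [Finset.mem_filter] at hi
        have hzi := hi.2
        set T : Finset (Fin k) := univ.filter (fun t => L i t = true) with hTdef
        have hcardT : T.card + z i = k := by
          have h := Finset.card_filter_add_card_filter_not
            (s := (univ : Finset (Fin k))) (p := fun t => L i t = true)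
          rw [Finset.card_univ, Fintype.card_fin] at h
          have e : (univ : Finset (Fin k)).filter (fun t => ¬ (L i t = true))
              = univ.filter (fun t => L i t = false) := by
            apply Finset.filter_congr
            intro t _
            simp
          rw [e] at h
          rw [hTdef, hzdef]
          exact h
        have hk4 : (k:ℝ)/4 ≤ (T.card : ℝ) := by
          have hn : k ≤ 4 * T.card := by omega
          have hn' : (k:ℝ) ≤ 4 * (T.card:ℝ) := by exact_mod_cast hn
          linarith
        have hle : C i ≤ Phi f ν (A i) (B i) T := by
          rw [hCdef]; unfold Phi
          refine dsp_mono (A i) (B i) (fun t q => pw f ν (L i t) q)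
            (fun t q => if t ∈ T then pw f ν true q else ν q)
            (fun t q => hpw0 _ q) (fun t q => ?_)
          show pw f ν (L i t) q ≤ (if t ∈ T then pw f ν true q else ν q)
          by_cases h : t ∈ T
          · rw [if_pos h]
            rw [hTdef, Finset.mem_filter] at h
            rw [h.2]
          · rw [if_neg h]; exact pw_le f ν hν0 _ q
        have hbd := Phi_bound f ν b hν0 hbal1 hν1 Hrect (A i) (B i) T
        rw [hPhi0 i] at hbd
        have hpowle : ((3:ℝ)/4)^(T.card) ≤ ((3:ℝ)/4)^((k:ℝ)/4) := by
          rw [← Real.rpow_natCast ((3:ℝ)/4) T.card]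
          exact Real.rpow_le_rpow_of_exponent_ge (by norm_num) (by norm_num) hk4
        have hmin0 : 0 ≤ min (M i) ((2:ℝ)^(-b)) := le_min (hM0 i) (le_of_lt hcb0)
        have hminle : min (M i) ((2:ℝ)^(-b)) ≤ (2:ℝ)^(-b) := min_le_right _ _
        have hpow0 : (0:ℝ) ≤ ((3:ℝ)/4)^(T.card) := pow_nonneg (by norm_num) _
        have h1 : ((3:ℝ)/4)^(T.card) * M i ≤ ((3:ℝ)/4)^((k:ℝ)/4) * M i :=
          mul_le_mul_of_nonneg_right hpowle (hM0 i)
        nlinarith [hbd, hle]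
      have hheavysum : ∑ i ∈ univ.filter (fun i => 4 * z i ≤ 3 * k), C i
          ≤ ((3:ℝ)/4)^((k:ℝ)/4) + (2:ℝ)^(-(2*(k:ℝ)/3)) := by
        have hMQ : ∑ i ∈ univ.filter (fun i => 4 * z i ≤ 3 * k), M i ≤ 1 := by
          rw [← hMsum]
          exact Finset.sum_le_sum_of_subset_of_nonneg (Finset.subset_univ _)
            (fun i _ _ => hM0 i)
        have hcardQ : (((univ.filter (fun i => 4 * z i ≤ 3 * k)).card : ℝ)) ≤ (N:ℝ) := by
          have h := Finset.card_filter_le (univ : Finset (Fin N)) (fun i => 4 * z i ≤ 3 * k)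
          rw [Finset.card_univ, Fintype.card_fin] at h
          exact_mod_cast h
        have hrp0 : (0:ℝ) ≤ ((3:ℝ)/4)^((k:ℝ)/4) := Real.rpow_nonneg (by norm_num) _
        calc ∑ i ∈ univ.filter (fun i => 4 * z i ≤ 3 * k), C i
            ≤ ∑ i ∈ univ.filter (fun i => 4 * z i ≤ 3 * k),
                (((3:ℝ)/4)^((k:ℝ)/4) * M i + (2:ℝ)^(-b)) := Finset.sum_le_sum hheavy
          _ = ((3:ℝ)/4)^((k:ℝ)/4) * (∑ i ∈ univ.filter (fun i => 4 * z i ≤ 3 * k), M i)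
              + ((univ.filter (fun i => 4 * z i ≤ 3 * k)).card : ℝ) * (2:ℝ)^(-b) := by
              rw [Finset.sum_add_distrib, ← Finset.mul_sum, Finset.sum_const, nsmul_eq_mul]
          _ ≤ ((3:ℝ)/4)^((k:ℝ)/4) * 1 + (N:ℝ) * (2:ℝ)^(-b) :=
              add_le_add (mul_le_mul_of_nonneg_left hMQ hrp0)
                (mul_le_mul_of_nonneg_right hcardQ (le_of_lt hcb0))
          _ ≤ ((3:ℝ)/4)^((k:ℝ)/4) + (2:ℝ)^(-(2*(k:ℝ)/3)) := by
              have h1 : (2:ℝ)^(-(2*b/3)) ≤ (2:ℝ)^(-(2*(k:ℝ)/3)) :=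
                Real.rpow_le_rpow_of_exponent_le (by norm_num) (by linarith)
              have := hNcb.trans h1
              linarith
      -- light rectangles
      have hpoint : ∀ i, (3 * k < 4 * z i) → ∀ p : (Fin k → X) × (Fin k → Y),
          ∏ t, pw f ν (L i t) (p.1 t, p.2 t)
            ≤ (2:ℝ)^(-(3*(k:ℝ)/4)) * ∏ t, mw (p.1 t, p.2 t) := by
        intro i hzi p
        have hprodmw0 : (0:ℝ) ≤ ∏ t, mw (p.1 t, p.2 t) :=
          Finset.prod_nonneg (fun t _ => hmw0 _)
        have step1 : ∏ t, pw f ν (L i t) (p.1 t, p.2 t)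
            ≤ ∏ t, ((if L i t = true then (1:ℝ) else 1/2) * mw (p.1 t, p.2 t)) := by
          refine Finset.prod_le_prod (fun t _ => hpw0 _ _) (fun t _ => ?_)
          rw [hmwdef]
          unfold pw
          cases hL : L i t <;> cases hf : f (p.1 t, p.2 t) <;>
            simp only [hL, hf, if_true, if_false] <;> simp <;> nlinarith [hν0 (p.1 t, p.2 t)]
        have step2 : ∏ t, ((if L i t = true then (1:ℝ) else 1/2) * mw (p.1 t, p.2 t))
            = ((1:ℝ)/2)^(z i) * ∏ t, mw (p.1 t, p.2 t) := by
          rw [Finset.prod_mul_distrib, prod_ite_half (L i)]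
        have step3 : ((1:ℝ)/2)^(z i) ≤ (2:ℝ)^(-(3*(k:ℝ)/4)) := by
          have e : ((1:ℝ)/2) ^ (z i) = (2:ℝ) ^ (-(z i:ℝ)) := by
            rw [Real.rpow_neg (by norm_num), Real.rpow_natCast, one_div, inv_pow]
          rw [e]
          refine Real.rpow_le_rpow_of_exponent_le (by norm_num) ?_
          have hzc : (3*(k:ℝ) + 1) ≤ 4 * (z i : ℝ) := by exact_mod_cast hzi
          linarith
        calc ∏ t, pw f ν (L i t) (p.1 t, p.2 t)
            ≤ ((1:ℝ)/2)^(z i) * ∏ t, mw (p.1 t, p.2 t) := step1.trans_eq step2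
          _ ≤ (2:ℝ)^(-(3*(k:ℝ)/4)) * ∏ t, mw (p.1 t, p.2 t) :=
              mul_le_mul_of_nonneg_right step3 hprodmw0
      have hlightsum : ∑ i ∈ univ.filter (fun i => ¬ 4 * z i ≤ 3 * k), C i
          ≤ (2:ℝ)^(-(3*(k:ℝ)/4)) * ((3:ℝ)/2)^k := by
        have hCi : ∀ i ∈ univ.filter (fun i => ¬ 4 * z i ≤ 3 * k),
            C i ≤ (2:ℝ)^(-(3*(k:ℝ)/4)) * ∑ p ∈ R i, ∏ t, mw (p.1 t, p.2 t) := by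
          intro i hi
          rw [Finset.mem_filter] at hi
          have hzi : 3 * k < 4 * z i := by
            have := hi.2
            omega
          have hCR : C i = ∑ p ∈ R i, ∏ t, pw f ν (L i t) (p.1 t, p.2 t) := by
            simp only [hCdef, hRdef]
            exact (Finset.sum_product (s := A i) (t := B i)
              (f := fun p => ∏ t, pw f ν (L i t) (p.1 t, p.2 t))).symm
          rw [hCR, Finset.mul_sum]
          exact Finset.sum_le_sum (fun p _ => hpoint i hzi p)
        calc ∑ i ∈ univ.filter (fun i => ¬ 4 * z i ≤ 3 * k), C i
            ≤ ∑ i ∈ univ.filter (fun i => ¬ 4 * z i ≤ 3 * k),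
                (2:ℝ)^(-(3*(k:ℝ)/4)) * ∑ p ∈ R i, ∏ t, mw (p.1 t, p.2 t) :=
              Finset.sum_le_sum hCi
          _ = (2:ℝ)^(-(3*(k:ℝ)/4)) * ∑ i ∈ univ.filter (fun i => ¬ 4 * z i ≤ 3 * k),
                ∑ p ∈ R i, ∏ t, mw (p.1 t, p.2 t) := by rw [Finset.mul_sum]
          _ ≤ (2:ℝ)^(-(3*(k:ℝ)/4)) * ∑ p : (Fin k → X) × (Fin k → Y),
                ∏ t, mw (p.1 t, p.2 t) := by
              refine mul_le_mul_of_nonneg_left ?_ (Real.rpow_nonneg (by norm_num) _)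
              exact disj_sum_le R hdisj _ _
                (fun p => Finset.prod_nonneg (fun t _ => hmw0 _))
          _ = (2:ℝ)^(-(3*(k:ℝ)/4)) * ((3:ℝ)/2)^k := by
              congr 1
              rw [Fintype.sum_prod_type, lemA (fun (_ : Fin k) q => mw q)]
              rw [Finset.prod_congr rfl (fun (t : Fin k) _ => hmwsum)]
              rw [Finset.prod_const]
              congr 1
              exact Finset.card_univ.trans (Fintype.card_fin k)
      -- combine
      have h2mid : (2:ℝ)^(-(2*(k:ℝ)/3)) ≤ (2:ℝ)^(-(k:ℝ)/10) := by
        refine Real.rpow_le_rpow_of_exponent_le (by norm_num) ?_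
        have : (0:ℝ) ≤ (k:ℝ) := Nat.cast_nonneg k
        linarith
      have h3' : (2:ℝ)^(-(3*(k:ℝ)/4)) * ((3:ℝ)/2)^k ≤ (2:ℝ)^(-(k:ℝ)/10) := by
        have := pow3 k
        linarith [this, mul_comm ((2:ℝ)^(-(3*(k:ℝ)/4))) (((3:ℝ)/2)^k)]
      calc ∑ i, C i
          = ∑ i ∈ univ.filter (fun i => 4 * z i ≤ 3 * k), C i
            + ∑ i ∈ univ.filter (fun i => ¬ 4 * z i ≤ 3 * k), C i := hsplit
        _ ≤ (((3:ℝ)/4)^((k:ℝ)/4) + (2:ℝ)^(-(2*(k:ℝ)/3)))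
            + (2:ℝ)^(-(3*(k:ℝ)/4)) * ((3:ℝ)/2)^k := add_le_add hheavysum hlightsum
        _ ≤ 3 * (2:ℝ)^(-(k:ℝ)/10) := by
            have h1 := pow1 k
            linarith
        _ ≤ (2:ℝ)^(-(1/1000*(k:ℝ))) := pow4 k hk80'
end

section
/- Let X, Y be finite nonempty sets, W a finite nonempty set, and f : X × Y → W. Let α > 0 be real, w ∈ [0,1], and N a positive integer. Suppose p : X × Y → (W → ℝ) satisfies, for all (x,y): p(x,y)(b) ≥ 0 for every b ∈ W, Σ_{b ∈ W} p(x,y)(b) ≤ 1, and p(x,y)(f(x,y)) ≥ 1/|W| + α. Suppose R₁,…,R_N are rectangles in X × Y with labels ℓ₁,…,ℓ_N ∈ W and weights w₁,…,w_N ∈ {−w, w}, such that for every (x,y) ∈ X × Y and every b ∈ W: p(x,y)(b) − α/2 ≤ Σ_{i : ℓ_i = b and (x,y) ∈ R_i} w_i ≤ p(x,y)(b). Then there exists an index i with |μ(R_i ∩ f⁻¹(ℓ_i)) − μ(R_i)/|W|| ≥ α/(2N), where μ is the uniform probability distribution on X × Y. -/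
open scoped Classical

theorem stmt6 (X Y W : Type) [Fintype X] [Fintype Y] [Fintype W]
    [Nonempty X] [Nonempty Y] [Nonempty W]
    (f : X × Y → W) (α : ℝ) (hα : 0 < α)
    (w : ℝ) (hw0 : 0 ≤ w) (hw1 : w ≤ 1)
    (N : ℕ) (hN : 0 < N)
    (p : X × Y → W → ℝ)
    (hp0 : ∀ q b, 0 ≤ p q b)
    (hp1 : ∀ q, ∑ b, p q b ≤ 1)
    (hpf : ∀ q, 1 / (Fintype.card W : ℝ) + α ≤ p q (f q))
    (A : Fin N → Finset X) (B : Fin N → Finset Y)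
    (l : Fin N → W) (wt : Fin N → ℝ)
    (hwt : ∀ i, wt i = w ∨ wt i = -w)
    (happrox : ∀ (q : X × Y) (b : W),
      p q b - α / 2 ≤
          ∑ i ∈ Finset.univ.filter (fun i => l i = b ∧ q ∈ A i ×ˢ B i), wt i ∧
        ∑ i ∈ Finset.univ.filter (fun i => l i = b ∧ q ∈ A i ×ˢ B i), wt i ≤ p q b) :
    ∃ i : Fin N,
      α / (2 * N) ≤
        |(((A i ×ˢ B i).filter (fun q => f q = l i)).card : ℝ) /
            ((Fintype.card X : ℝ) * (Fintype.card Y : ℝ)) -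
          (((A i).card : ℝ) * ((B i).card : ℝ)) /
            ((Fintype.card X : ℝ) * (Fintype.card Y : ℝ) * (Fintype.card W : ℝ))| := by
  by_contra hcon
  push_neg at hcon
  set cX : ℝ := (Fintype.card X : ℝ) with hcX
  set cY : ℝ := (Fintype.card Y : ℝ) with hcY
  set cW : ℝ := (Fintype.card W : ℝ) with hcW
  have hXpos : (0:ℝ) < cX := by rw [hcX]; exact_mod_cast Fintype.card_pos
  have hYpos : (0:ℝ) < cY := by rw [hcY]; exact_mod_cast Fintype.card_pos
  have hWpos : (0:ℝ) < cW := by rw [hcW]; exact_mod_cast Fintype.card_pos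
  set Δ : Fin N → ℝ := fun i =>
    (((A i ×ˢ B i).filter (fun q => f q = l i)).card : ℝ) / (cX * cY) -
      (((A i).card : ℝ) * ((B i).card : ℝ)) / (cX * cY * cW) with hΔ
  -- S q b : weight of rectangles labeled b containing q
  set S : X × Y → W → ℝ := fun q b =>
    ∑ i ∈ Finset.univ.filter (fun i => l i = b ∧ q ∈ A i ×ˢ B i), wt i with hS
  -- per-point bound
  have hpt : ∀ q : X × Y, α / 2 ≤ S q (f q) - (1 / cW) * ∑ b, S q b := by
    intro q
    have h1 : 1 / cW + α / 2 ≤ S q (f q) := by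
      have := (happrox q (f q)).1
      have := hpf q
      simp only [hS]
      linarith
    have h2 : ∑ b, S q b ≤ 1 := by
      calc ∑ b, S q b ≤ ∑ b, p q b := Finset.sum_le_sum fun b _ => (happrox q b).2
        _ ≤ 1 := hp1 q
    have h3 : (1 / cW) * ∑ b, S q b ≤ 1 / cW := by
      have : (0:ℝ) < 1 / cW := by positivity
      nlinarith
    linarith
  -- swap sums: sum over q of S q (f q)
  have h1 : ∑ q : X × Y, S q (f q)
      = ∑ i, wt i * (((A i ×ˢ B i).filter (fun q => f q = l i)).card : ℝ) := by
    simp only [hS]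
    rw [Finset.sum_comm' (s := Finset.univ) (t := fun q => Finset.univ.filter (fun i => l i = f q ∧ q ∈ A i ×ˢ B i)) (t' := Finset.univ) (s' := fun i => (A i ×ˢ B i).filter (fun q => f q = l i)) (f := fun _ i => wt i) ?_]
    · simp [Finset.sum_const, mul_comm]
    · intro q i
      simp only [Finset.mem_filter, Finset.mem_univ, true_and]
      tauto
  -- fiberwise: sum over b of S q b
  have h2 : ∀ q : X × Y, ∑ b, S q b
      = ∑ i ∈ Finset.univ.filter (fun i => q ∈ A i ×ˢ B i), wt i := by
    intro q
    simp only [hS]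
    rw [← Finset.sum_fiberwise_of_maps_to (g := l) (fun i _ => Finset.mem_univ (l i))]
    apply Finset.sum_congr rfl
    intro b _
    apply Finset.sum_congr _ fun _ _ => rfl
    ext i
    simp only [Finset.mem_filter, Finset.mem_univ, true_and]
    tauto
  have h3 : ∑ q : X × Y, ∑ i ∈ Finset.univ.filter (fun i => q ∈ A i ×ˢ B i), wt i
      = ∑ i, wt i * (((A i).card : ℝ) * ((B i).card : ℝ)) := by
    rw [Finset.sum_comm' (s := Finset.univ) (t := fun q => Finset.univ.filter (fun i => q ∈ A i ×ˢ B i)) (t' := Finset.univ) (s' := fun i => A i ×ˢ B i) (f := fun _ i => wt i) ?_]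
    · simp [Finset.sum_const, Finset.card_product, mul_comm, mul_assoc]
    · intro q i
      simp
  -- totalize
  have hkey : cX * cY * (α / 2) ≤ (cX * cY) * ∑ i, wt i * Δ i := by
    have hcard : ((Finset.univ : Finset (X × Y)).card : ℝ) = cX * cY := by
      simp [hcX, hcY, Finset.card_univ]
    have hsum : cX * cY * (α / 2) ≤ ∑ q : X × Y, (S q (f q) - (1 / cW) * ∑ b, S q b) := by
      calc cX * cY * (α / 2) = ∑ _q : X × Y, (α / 2) := by
            rw [Finset.sum_const, nsmul_eq_mul, hcard]
        _ ≤ _ := Finset.sum_le_sum fun q _ => hpt q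
    refine hsum.trans_eq ?_
    rw [Finset.sum_sub_distrib, h1]
    simp only [h2]
    rw [← Finset.mul_sum, h3, Finset.mul_sum, ← Finset.sum_sub_distrib, Finset.mul_sum]
    apply Finset.sum_congr rfl
    intro i _
    simp only [hΔ]
    field_simp
  have hkey2 : α / 2 ≤ ∑ i, wt i * Δ i := by
    have hM : (0:ℝ) < cX * cY := by positivity
    nlinarith [hkey]
  -- upper bound
  have hub : ∑ i, wt i * Δ i < α / 2 := by
    have hstep : ∀ i : Fin N, wt i * Δ i < α / (2 * N) := by
      intro i
      have habs : |wt i| = w := by rcases hwt i with h | h <;> simp [h, abs_of_nonneg hw0]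
      calc wt i * Δ i ≤ |wt i * Δ i| := le_abs_self _
        _ = w * |Δ i| := by rw [abs_mul, habs]
        _ ≤ 1 * |Δ i| := by
            apply mul_le_mul_of_nonneg_right hw1 (abs_nonneg _)
        _ = |Δ i| := one_mul _
        _ < α / (2 * N) := hcon i
    calc ∑ i, wt i * Δ i < ∑ _i : Fin N, α / (2 * N) := by
          apply Finset.sum_lt_sum_of_nonempty
          · simpa [Finset.univ_nonempty_iff] using Fin.pos_iff_nonempty.mp hN
          · intro i _; exact hstep i
      _ = N * (α / (2 * N)) := by simp [Finset.sum_const, nsmul_eq_mul]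
      _ = α / 2 := by
          have : (N:ℝ) ≠ 0 := by exact_mod_cast hN.ne'
          field_simp
    
  linarith
end

section
/- Let (h_i)_{i ∈ I} be a pairwise universal family of hash functions from a finite nonempty set X to a finite nonempty set Z, indexed by a finite nonempty set I. Define the evaluation function e : X × I → Z by e(x, i) = h_i(x). Then mdisc(e) ≤ |X|^{-1/4}. -/
open scoped Classical

/-- `(h i)_{i ∈ I}` is a pairwise universal family of hash functions from `X` to `Z`:
for uniformly random `i`, each `h i x` is uniform on `Z`, and for `x ≠ x'` the values
`h i x` and `h i x'` are independent. -/
def PairwiseUniversal {I X Z : Type*} [Fintype I] [Fintype Z]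
    (h : I → X → Z) : Prop :=
  (∀ (x : X) (z : Z),
    (Finset.univ.filter (fun i => h i x = z)).card * Fintype.card Z = Fintype.card I) ∧
  (∀ (x x' : X), x ≠ x' → ∀ (z z' : Z),
    (Finset.univ.filter (fun i => h i x = z ∧ h i x' = z')).card * Fintype.card I =
      (Finset.univ.filter (fun i => h i x = z)).card *
        (Finset.univ.filter (fun i => h i x' = z')).card)

theorem stmt8 (I X Z : Type) [Fintype I] [Fintype X] [Fintype Z]
    [Nonempty I] [Nonempty X] [Nonempty Z]
    (h : I → X → Z) (huniv : PairwiseUniversal h) :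
    mdiscLE (fun q : X × I => h q.2 q.1)
      ((Fintype.card X : ℝ) ^ (-(1 : ℝ) / 4)) := by
  obtain ⟨h1, h2⟩ := huniv
  intro A B z
  set n : ℝ := (Fintype.card X : ℝ) with hn_def
  set m : ℝ := (Fintype.card I : ℝ) with hm_def
  set k : ℝ := (Fintype.card Z : ℝ) with hk_def
  have hn1 : (1:ℝ) ≤ n := by rw [hn_def]; exact_mod_cast Fintype.card_pos (α := X)
  have hm1 : (1:ℝ) ≤ m := by rw [hm_def]; exact_mod_cast Fintype.card_pos (α := I)
  have hk1 : (1:ℝ) ≤ k := by rw [hk_def]; exact_mod_cast Fintype.card_pos (α := Z)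
  have hn0 : (0:ℝ) < n := lt_of_lt_of_le one_pos hn1
  have hm0 : (0:ℝ) < m := lt_of_lt_of_le one_pos hm1
  have hk0 : (0:ℝ) < k := lt_of_lt_of_le one_pos hk1
  set S : I → ℝ := fun i => ((A.filter fun x => h i x = z).card : ℝ) with hS_def
  set c : X → ℝ := fun x => ((Finset.univ.filter fun i => h i x = z).card : ℝ) with hc_def
  set a : ℝ := (A.card : ℝ) with ha_def
  have hA : a ≤ n := by rw [ha_def, hn_def]; exact_mod_cast Finset.card_le_card (Finset.subset_univ A)
  have ha0 : 0 ≤ a := by rw [ha_def]; positivity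
  have hB : ((B.card : ℝ)) ≤ m := by rw [hm_def]; exact_mod_cast Finset.card_le_card (Finset.subset_univ B)
  -- each c x equals m / k
  have hc : ∀ x, c x = m / k := by
    intro x
    have hx : c x * k = m := by
      simp only [hc_def, hk_def, hm_def]; exact_mod_cast h1 x z
    field_simp
    linarith
  -- counting the rectangle
  have hcount : (((A ×ˢ B).filter (fun p : X × I => h p.2 p.1 = z)).card : ℝ)
      = ∑ i ∈ B, S i := by
    push_cast [hS_def, Finset.card_filter]
    rw [Finset.sum_product]
    rw [Finset.sum_comm]
  -- first moment
  have hswap : ∑ i : I, S i = ∑ x ∈ A, c x := by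
    simp only [hS_def, hc_def]
    push_cast [Finset.card_filter]
    rw [Finset.sum_comm]
  have hmom1 : ∑ i : I, S i = a * m / k := by
    rw [hswap]; simp [hc, ha_def]; ring
  -- second moment
  have hmom2 : ∑ i : I, (S i)^2 = a * (m/k) + a * (a - 1) * (m/k^2) := by
    have e1 : ∑ i : I, (S i)^2 = ∑ x ∈ A, ∑ x' ∈ A,
        ((Finset.univ.filter fun i : I => h i x = z ∧ h i x' = z).card : ℝ) := by
      simp only [hS_def, sq]
      push_cast [Finset.card_filter, Finset.sum_mul_sum]
      rw [Finset.sum_comm]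
      refine Finset.sum_congr rfl fun x _ => ?_
      rw [Finset.sum_comm]
      refine Finset.sum_congr rfl fun x' _ => Finset.sum_congr rfl fun i _ => ?_
      by_cases hx : h i x = z <;> by_cases hx' : h i x' = z <;> simp [hx, hx']
    have e2 : ∀ x x', ((Finset.univ.filter fun i : I => h i x = z ∧ h i x' = z).card : ℝ)
        = if x = x' then m/k else m/k^2 := by
      intro x x'
      by_cases hxx : x = x'
      · subst hxx
        simp only [and_self, if_pos rfl]
        exact hc x
      · rw [if_neg hxx]
        have hr : ((Finset.univ.filter fun i : I => h i x = z ∧ h i x' = z).card : ℝ) * m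
            = c x * c x' := by
          simp only [hc_def, hm_def]; exact_mod_cast h2 x x' hxx z z
        rw [hc, hc] at hr
        field_simp at hr ⊢
        nlinarith [hr]
    rw [e1]
    have e3 : ∀ x ∈ A, ∑ x' ∈ A,
        ((Finset.univ.filter fun i : I => h i x = z ∧ h i x' = z).card : ℝ)
        = m/k^2 * a + (m/k - m/k^2) := by
      intro x hx
      rw [Finset.sum_congr rfl fun x' _ => e2 x x']
      have e4 : ∀ x' ∈ A, (if x = x' then m/k else m/k^2)
          = m/k^2 + (if x = x' then m/k - m/k^2 else 0) := by
        intro x' _; by_cases hxx : x = x' <;> simp [hxx]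
      rw [Finset.sum_congr rfl e4, Finset.sum_add_distrib, Finset.sum_const,
        Finset.sum_ite_eq, if_pos hx, nsmul_eq_mul, ← ha_def]
      ring
    rw [Finset.sum_congr rfl e3, Finset.sum_const, nsmul_eq_mul, ← ha_def]
    ring
  -- variance bound
  have hvar : ∑ i : I, (S i - a/k)^2 ≤ n * m := by
    have expand : ∑ i : I, (S i - a/k)^2
        = (∑ i : I, (S i)^2) - 2*(a/k)*(∑ i : I, S i) + m * (a/k)^2 := by
      have e5 : ∀ i : I, (S i - a/k)^2 = (S i)^2 - 2*(a/k)*(S i) + (a/k)^2 :=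
        fun i => by ring
      simp only [e5]
      rw [Finset.sum_add_distrib, Finset.sum_sub_distrib, ← Finset.mul_sum,
        Finset.sum_const, Finset.card_univ, nsmul_eq_mul, ← hm_def]
    rw [expand, hmom1, hmom2]
    have key : a * (m/k) + a * (a - 1) * (m/k^2) - 2*(a/k)*(a * m / k) + m * (a/k)^2
        = a * m / k - a * m / k^2 := by field_simp; ring
    rw [key]
    have h5 : a * m / k^2 ≥ 0 := by positivity
    have h6 : a * m / k ≤ a * m := by
      apply div_le_self (by positivity) hk1
    have h7 : a * m ≤ n * m := mul_le_mul_of_nonneg_right hA hm0.le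
    linarith
  -- Cauchy–Schwarz
  set T : ℝ := ∑ i ∈ B, (S i - a/k) with hT_def
  have hT2 : T^2 ≤ n * m^2 := by
    have cs := Finset.sum_mul_sq_le_sq_mul_sq B (fun _ => (1:ℝ)) (fun i => S i - a/k)
    simp only [one_mul, one_pow, Finset.sum_const, nsmul_eq_mul, mul_one] at cs
    have hsub : ∑ i ∈ B, (S i - a/k)^2 ≤ ∑ i : I, (S i - a/k)^2 :=
      Finset.sum_le_sum_of_subset_of_nonneg (Finset.subset_univ B)
        (fun i _ _ => sq_nonneg _)
    calc T^2 ≤ (B.card : ℝ) * ∑ i ∈ B, (S i - a/k)^2 := cs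
      _ ≤ m * (n * m) := by
          apply mul_le_mul hB (le_trans hsub hvar) (by positivity) hm0.le
      _ = n * m^2 := by ring
  have hTabs : |T| ≤ Real.sqrt n * m := by
    have := Real.sqrt_le_sqrt hT2
    rwa [Real.sqrt_sq_eq_abs, Real.sqrt_mul hn0.le, Real.sqrt_sq hm0.le] at this
  -- rewrite the goal
  have hgoal : (((A ×ˢ B).filter (fun p : X × I => h p.2 p.1 = z)).card : ℝ) / (n * m)
      - (a * (B.card : ℝ)) / (n * m * k) = T / (n * m) := by
    rw [hcount, hT_def, Finset.sum_sub_distrib, Finset.sum_const, nsmul_eq_mul]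
    field_simp
  rw [ha_def] at hgoal
  rw [hgoal]
  rw [abs_div, abs_of_pos (by positivity : (0:ℝ) < n * m)]
  have step1 : |T| / (n * m) ≤ (Real.sqrt n * m) / (n * m) := by
    apply div_le_div_of_nonneg_right hTabs (by positivity)
  have step2 : (Real.sqrt n * m) / (n * m) = n ^ ((1:ℝ)/2 - 1) := by
    rw [Real.sqrt_eq_rpow, Real.rpow_sub hn0, Real.rpow_one, mul_comm n m,
      ← div_div, mul_div_assoc, div_self hm0.ne', mul_one]
  calc |T| / (n * m) ≤ n ^ ((1:ℝ)/2 - 1) := step1.trans_eq step2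
    _ ≤ n ^ (-(1:ℝ)/4) := Real.rpow_le_rpow_of_exponent_le hn1 (by norm_num)
end

section
/- Let m and t be positive integers with 4^t ≤ m, let S ⊆ {0,…,t−1} be a set of k distinct bit positions, and let σ : S → {0,1} be an assignment. Then | #{z ∈ {0,…,m−1} : for all s ∈ S, the s-th binary digit of z equals σ(s)} / m − 2^{-k} | ≤ 2/√m. -/
open Finset


private lemma flip_bit (z a s : ℕ) :
    (z ^^^ 2^a).testBit s = if s = a then !(z.testBit s) else z.testBit s := by
  rw [Nat.testBit_xor, Nat.testBit_two_pow]
  rcases eq_or_ne s a with h | h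
  · subst h; simp
  · simp [Ne.symm h, h]

private lemma block_count (t : ℕ) (σ : ℕ → Bool) (S : Finset ℕ) (hS : S ⊆ Finset.range t) :
    (((Finset.range (2^t)).filter (fun z => ∀ s ∈ S, z.testBit s = σ s)).card) * 2 ^ S.card
      = 2 ^ t := by
  classical
  induction S using Finset.induction_on with
  | empty => simp
  | @insert a S' ha ih =>
    have hat : a < t := by simpa using hS (mem_insert_self a S')
    have hsub' : S' ⊆ range t := (subset_insert a S').trans hS
    set A := (Finset.range (2^t)).filter (fun z => ∀ s ∈ S', z.testBit s = σ s) with hA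
    have hsplit : (Finset.range (2^t)).filter (fun z => ∀ s ∈ insert a S', z.testBit s = σ s)
        = A.filter (fun z => z.testBit a = σ a) := by
      rw [hA, Finset.filter_filter]
      apply Finset.filter_congr
      intro z _
      simp only [Finset.forall_mem_insert]
      tauto
    have hmem : ∀ b : Bool, ∀ z ∈ A.filter (fun z => z.testBit a = b),
        z ^^^ 2^a ∈ A.filter (fun z => z.testBit a = !b) := by
      intro b z hz
      simp only [Finset.mem_filter, hA, Finset.mem_range] at hz ⊢
      obtain ⟨⟨hz1, hz2⟩, hz3⟩ := hz
      refine ⟨⟨Nat.xor_lt_two_pow hz1 (Nat.pow_lt_pow_right one_lt_two hat), ?_⟩, ?_⟩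
      · intro s hs
        rw [flip_bit, if_neg (by rintro rfl; exact ha hs)]
        exact hz2 s hs
      · rw [flip_bit, if_pos rfl, hz3]
    have hbij : (A.filter (fun z => z.testBit a = σ a)).card
        = (A.filter (fun z => z.testBit a = !σ a)).card := by
      apply Finset.card_nbij' (fun z => z ^^^ 2^a) (fun z => z ^^^ 2^a)
      · exact hmem _
      · intro z hz
        have := hmem (!σ a) z hz
        simpa using this
      · intro z _; simp [Nat.xor_assoc]
      · intro z _; simp [Nat.xor_assoc]
    have hAcard : A.card = (A.filter (fun z => z.testBit a = σ a)).card
        + (A.filter (fun z => z.testBit a = !σ a)).card := by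
      have hneg : A.filter (fun z => ¬(z.testBit a = σ a)) = A.filter (fun z => z.testBit a = !σ a) := by
        apply Finset.filter_congr
        intro z _
        cases hzb : z.testBit a <;> cases hσ : σ a <;> simp
      rw [← Finset.card_filter_add_card_filter_not (p := fun z => z.testBit a = σ a), hneg]
    rw [hsplit, Finset.card_insert_of_notMem ha, pow_succ]
    have := ih hsub'
    rw [← this, hAcard, ← hbij]
    ring

private lemma shift_count (t : ℕ) (P : ℕ → Prop) [DecidablePred P]
    (hP : ∀ z w, (∀ s < t, z.testBit s = w.testBit s) → (P z ↔ P w)) (q : ℕ) :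
    ((Finset.Ico (2^t * q) (2^t * q + 2^t)).filter P).card
      = ((Finset.range (2^t)).filter P).card := by
  symm
  apply Finset.card_nbij' (fun r => 2^t * q + r) (fun z => z - 2^t * q)
  · intro r hr
    simp only [Finset.mem_coe, Finset.mem_filter, Finset.mem_range, Finset.mem_Ico] at hr ⊢
    refine ⟨⟨by omega, by omega⟩, ?_⟩
    have hb : ∀ s, s < t → (2^t * q + r).testBit s = r.testBit s := by
      intro s hs
      rw [Nat.testBit_two_pow_mul_add q hr.1 s, if_pos hs]
    exact (hP _ r hb).mpr hr.2
  · intro z hz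
    simp only [Finset.mem_coe, Finset.mem_filter, Finset.mem_range, Finset.mem_Ico] at hz ⊢
    obtain ⟨⟨h1, h2⟩, h3⟩ := hz
    refine ⟨by omega, ?_⟩
    have hlt : z - 2^t * q < 2^t := by omega
    have hb : ∀ s, s < t → (z - 2^t * q).testBit s = z.testBit s := by
      intro s hs
      have hx : (2^t * q + (z - 2^t * q)).testBit s = (z - 2^t * q).testBit s := by
        rw [Nat.testBit_two_pow_mul_add q hlt s, if_pos hs]
      conv_rhs => rw [show z = 2^t * q + (z - 2^t * q) by omega]
      exact hx.symm
    exact (hP _ z hb).mpr h3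
  · intro r hr; simp
  · intro z hz
    simp only [Finset.mem_coe, Finset.mem_filter, Finset.mem_Ico] at hz ⊢
    omega

private lemma prefix_count (t : ℕ) (P : ℕ → Prop) [DecidablePred P]
    (hP : ∀ z w, (∀ s < t, z.testBit s = w.testBit s) → (P z ↔ P w)) (q : ℕ) :
    ((Finset.range (2^t * q)).filter P).card = q * ((Finset.range (2^t)).filter P).card := by
  induction q with
  | zero => simp
  | succ q ih =>
    have hsplit : Finset.range (2^t * (q+1))
        = Finset.range (2^t * q) ∪ Finset.Ico (2^t * q) (2^t * q + 2^t) := by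
      rw [Finset.range_eq_Ico, Finset.range_eq_Ico]
      rw [Finset.Ico_union_Ico_eq_Ico (Nat.zero_le _) (Nat.le_add_right _ _)]
      congr 1
    have hdisj : Disjoint (Finset.range (2^t * q)) (Finset.Ico (2^t * q) (2^t * q + 2^t)) := by
      simp only [Finset.disjoint_left, Finset.mem_range, Finset.mem_Ico]
      omega
    rw [hsplit, Finset.filter_union, Finset.card_union_of_disjoint
        (Finset.disjoint_filter_filter hdisj), ih, shift_count t P hP q]
    ring
open Finset

theorem stmt9 (m t : ℕ) (hm : 0 < m) (ht : 0 < t) (h4 : 4 ^ t ≤ m)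
    (S : Finset ℕ) (hS : S ⊆ Finset.range t) (k : ℕ) (hk : S.card = k)
    (σ : ℕ → Bool) :
    |(((Finset.range m).filter (fun z => ∀ s ∈ S, z.testBit s = σ s)).card : ℝ) / m -
        ((2 : ℝ) ^ k)⁻¹| ≤ 2 / Real.sqrt m := by
  classical
  set P : ℕ → Prop := fun z => ∀ s ∈ S, z.testBit s = σ s with hPdef
  have hP : ∀ z w, (∀ s < t, z.testBit s = w.testBit s) → (P z ↔ P w) := by
    intro z w h
    constructor <;> intro hz s hs <;>
      [rw [← h s (by simpa using hS hs)]; rw [h s (by simpa using hS hs)]] <;> exact hz s hs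
  set B := ((Finset.range (2^t)).filter P).card with hBdef
  have hBk : B * 2 ^ k = 2 ^ t := by rw [← hk]; exact block_count t σ S hS
  set q := m / 2^t with hqdef
  set r := m % 2^t with hrdef
  have h2t : 0 < 2^t := Nat.pow_pos (by norm_num)
  have hmeq : m = 2^t * q + r := (Nat.div_add_mod m (2^t)).symm
  have hrlt : r < 2^t := Nat.mod_lt m h2t
  set N := ((Finset.range m).filter P).card with hNdef
  -- split range m
  have hsplit : Finset.range m = Finset.range (2^t * q) ∪ Finset.Ico (2^t * q) m := by
    rw [Finset.range_eq_Ico, Finset.range_eq_Ico, Finset.Ico_union_Ico_eq_Ico (Nat.zero_le _) (by omega)]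
  have hdisj : Disjoint (Finset.range (2^t * q)) (Finset.Ico (2^t * q) m) := by
    simp only [Finset.disjoint_left, Finset.mem_range, Finset.mem_Ico]; omega
  have hNeq : N = q * B + ((Finset.Ico (2^t * q) m).filter P).card := by
    rw [hNdef, hsplit, Finset.filter_union, Finset.card_union_of_disjoint
      (Finset.disjoint_filter_filter hdisj), prefix_count t P hP q]
  have hEle : ((Finset.Ico (2^t * q) m).filter P).card ≤ B := by
    refine le_trans ?_ (shift_count t P hP q).le
    apply Finset.card_le_card
    apply Finset.filter_subset_filter
    apply Finset.Ico_subset_Ico le_rfl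
    omega
  have hNlb : q * B ≤ N := by omega
  have hNub : N ≤ q * B + B := by omega
  -- real arithmetic
  have hm0 : (0:ℝ) < m := by exact_mod_cast hm
  have h2k : (0:ℝ) < 2^k := by positivity
  have hBkR : (B:ℝ) * 2^k = 2^t := by exact_mod_cast hBk
  have hmeqR : (m:ℝ) = 2^t * q + r := by exact_mod_cast hmeq
  have hrR : (r:ℝ) < 2^t := by exact_mod_cast hrlt
  have hr0 : (0:ℝ) ≤ r := by positivity
  have hNlbR : (q:ℝ) * B ≤ N := by exact_mod_cast hNlb
  have hNubR : (N:ℝ) ≤ q * B + B := by exact_mod_cast hNub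
  have hdiv1 : (m:ℝ) / 2^k ≤ q * B + B := by
    rw [div_le_iff₀ h2k, hmeqR, ← hBkR]
    nlinarith [hrR, hBkR]
  have hdiv2 : (q:ℝ) * B ≤ m / 2^k := by
    rw [le_div_iff₀ h2k, hmeqR, ← hBkR]
    nlinarith [hr0]
  have hkey : |(N:ℝ)/m - ((2:ℝ)^k)⁻¹| ≤ B/m := by
    have hrew : ((2:ℝ)^k)⁻¹ = (m / 2^k) / m := by
      field_simp
    rw [hrew, div_sub_div_same, abs_div, abs_of_pos hm0]
    gcongr
    rw [abs_le]
    constructor <;> linarith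
  have hs0 : 0 < Real.sqrt m := Real.sqrt_pos.mpr hm0
  have hsq : Real.sqrt m * Real.sqrt m = m := Real.mul_self_sqrt hm0.le
  have hB2t : (B:ℝ) ≤ 2^t := by
    have h1 : (1:ℝ) ≤ 2^k := by exact_mod_cast Nat.one_le_two_pow
    nlinarith [hBkR, (Nat.cast_nonneg B : (0:ℝ) ≤ (B:ℝ))]
  have h2tsqrt : (2:ℝ)^t ≤ Real.sqrt m := by
    have h42 : ((4:ℝ)^t) = ((2:ℝ)^t)^2 := by
      rw [show (4:ℝ) = 2^2 by norm_num, ← pow_mul, mul_comm, pow_mul]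
    have : Real.sqrt ((4:ℝ)^t) ≤ Real.sqrt m := Real.sqrt_le_sqrt (by exact_mod_cast h4)
    rwa [h42, Real.sqrt_sq (by positivity)] at this
  refine hkey.trans ?_
  rw [div_le_div_iff₀ hm0 hs0]
  nlinarith [hsq, hB2t, h2tsqrt, hs0.le, hm0.le]
end
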